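/- arXiv:2603.02393 — 5 statements merged into one kernel-verified Lean document; each statement's English description precedes it below -/
import Mathlib

section
/- Uniform bound on the lattice iterates: there exists a constant Λ > 0 (depending only on d, R and the L^∞ norms of the Q^η and M^{η,η'}, but not on L) such that for every L > 0 with L·R ≥ 1, every δ > 0, every n ∈ ℕ, every ⋆ ∈ {0,1,×}, every t ∈ [0,δ] and every k ∈ ℝ^d: |ρ_{L,n}^⋆(t,k)| ≤ Λ (Λδ)^n c_n. -/
open MeasureTheory Complex Finset

open MeasureTheory Complex

noncomputable section

/-- `ℝ^d` as Euclidean space. -/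
abbrev Ed (d : ℕ) := EuclideanSpace ℝ (Fin d)

/-- The six kernels `ζ_l^η` built from `Q^η`:
`ζ₁(ξ₁,ξ₂,ξ) = Q(ξ,ξ₁,ξ₂,−ξ₁,−ξ₂)`, `ζ₂(ξ₁,ξ₂,ξ) = Q(ξ,ξ₁,ξ₂,−ξ₂,−ξ₁)`,
`ζ₃(ξ₁,ξ₂,ξ) = Q(ξ₁,−ξ₁,ξ₂,ξ,−ξ₂)`, `ζ₄(ξ₁,ξ₂,ξ) = Q(ξ₁,ξ₂,−ξ₁,ξ,−ξ₂)`,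
`ζ₅(ξ₁,ξ₂,ξ) = Q(ξ₁,−ξ₁,ξ₂,−ξ₂,ξ)`, `ζ₆(ξ₁,ξ₂,ξ) = Q(ξ₁,ξ₂,−ξ₁,−ξ₂,ξ)`. -/
def zeta6 {d : ℕ} (Q : (Fin 5 → Ed d) → ℂ) (l : Fin 6) (ξ1 ξ2 ξ : Ed d) : ℂ :=
  ![Q ![ξ, ξ1, ξ2, -ξ1, -ξ2],
    Q ![ξ, ξ1, ξ2, -ξ2, -ξ1],
    Q ![ξ1, -ξ1, ξ2, ξ, -ξ2],
    Q ![ξ1, ξ2, -ξ1, ξ, -ξ2],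
    Q ![ξ1, -ξ1, ξ2, -ξ2, ξ],
    Q ![ξ1, ξ2, -ξ1, -ξ2, ξ]] l

/-- `η̄ = 1 − η`. -/
def obar : Fin 2 → Fin 2 := fun η => if η = 0 then 1 else 0

/-- `ρ_m^{×,η}`: equals `ρ_m^×` for `η = 0` and its complex conjugate for `η = 1`,
where index `2` of `prev m` holds `ρ_m^×`. -/
def crossOf {d : ℕ} (prev : ℕ → Fin 3 → ℝ → Ed d → ℂ) (η : Fin 2) (m : ℕ) (s : ℝ)
    (x : Ed d) : ℂ :=
  if η = 0 then prev m 2 s x else (starRingEnd ℂ) (prev m 2 s x)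

/-- One step of the resonant recursion: the value of `ρ_{n+1}^⋆` in terms of the previous
iterates `prev` (indices `0`, `1` are `ρ^0`, `ρ^1` and index `2` is `ρ^×`). -/
def rhoStep {d : ℕ} (Q : Fin 2 → (Fin 5 → Ed d) → ℂ)
    (prev : ℕ → Fin 3 → ℝ → Ed d → ℂ) (n : ℕ) (i : Fin 3) (t : ℝ) (ξ : Ed d) : ℂ :=
  if hi : (i : ℕ) < 2 then
    (2 : ℂ) * ∑ p ∈ Finset.HasAntidiagonal.antidiagonal n, ∑ q ∈ Finset.HasAntidiagonal.antidiagonal p.2,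
      ((∑ l ∈ ({0, 1} : Finset (Fin 6)),
          ∫ s in (0:ℝ)..t,
            prev q.2 i s ξ *
              (((∫ ξ1, ∫ ξ2,
                  (zeta6 (Q ⟨(i : ℕ), hi⟩) l ξ1 ξ2 ξ *
                    crossOf prev (obar ⟨(i : ℕ), hi⟩) p.1 s (-ξ1) *
                    crossOf prev (obar ⟨(i : ℕ), hi⟩) q.1 s (-ξ2)).im) : ℝ) : ℂ)) +
        ∑ l ∈ ({2, 3, 4, 5} : Finset (Fin 6)),
          ∫ s in (0:ℝ)..t, ∫ ξ1, ∫ ξ2,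
            (((crossOf prev (obar ⟨(i : ℕ), hi⟩) q.2 s ξ *
                zeta6 (Q ⟨(i : ℕ), hi⟩) l ξ1 ξ2 ξ *
                crossOf prev (obar ⟨(i : ℕ), hi⟩) q.1 s (-ξ2)).im : ℝ) : ℂ) *
              prev p.1 i s ξ1)
  else
    (-Complex.I) * ∑ p ∈ Finset.HasAntidiagonal.antidiagonal n, ∑ q ∈ Finset.HasAntidiagonal.antidiagonal p.2,
      ((∑ l ∈ ({0, 1} : Finset (Fin 6)),
          ∫ s in (0:ℝ)..t,
            prev q.2 2 s ξ *
              ∫ ξ1, ∫ ξ2,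
                (zeta6 (Q 0) l ξ1 ξ2 ξ - (starRingEnd ℂ) (zeta6 (Q 1) l ξ1 ξ2 ξ)) *
                  (starRingEnd ℂ) (prev p.1 2 s (-ξ1)) *
                  (starRingEnd ℂ) (prev q.1 2 s (-ξ2))) +
        ∑ l ∈ ({2, 3, 4, 5} : Finset (Fin 6)),
          ∫ s in (0:ℝ)..t, ∫ ξ1, ∫ ξ2,
            (prev q.2 1 s ξ * zeta6 (Q 0) l ξ1 ξ2 ξ * prev p.1 0 s ξ1 -
                prev q.2 0 s ξ * (starRingEnd ℂ) (zeta6 (Q 1) l ξ1 ξ2 ξ) *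
                  prev p.1 1 s ξ1) *
              (starRingEnd ℂ) (prev q.1 2 s (-ξ2)))

/-- The resonant iterates `ρ_n^⋆` (index `⋆ = 0, 1` for `ρ_n^0, ρ_n^1`, index `2` for
`ρ_n^×`): `ρ_0^η = M^{η,η}`, `ρ_0^× = M^{0,1}`, and `ρ_{n+1}` is given by the resonant
recursion `rhoStep` applied to the iterates of scale `≤ n`. -/
def rhoIter {d : ℕ} (Q : Fin 2 → (Fin 5 → Ed d) → ℂ) (M : Fin 3 → Ed d → ℂ) :
    ℕ → Fin 3 → ℝ → Ed d → ℂ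
  | 0 => fun i _ ξ => M i ξ
  | n + 1 =>
    rhoStep Q (fun m => if h : m ≤ n then rhoIter Q M m else fun _ _ _ => 0) n
decreasing_by omega

/-- The lattice `ℤ_L^d = {k ∈ ℝ^d : L·k ∈ ℤ^d}`. -/
def latt (d : ℕ) (L : ℝ) : Set (Ed d) :=
  {k | ∀ j, ∃ z : ℤ, L * k j = (z : ℝ)}

/-- One step of the lattice resonant recursion: as `rhoStep`, with every double integral
`∫∫ (…) dξ₁ dξ₂` replaced by the normalized lattice sum `L^{−2d} ∑_{k₁,k₂ ∈ ℤ_L^d} (…)`. -/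
def rhoStepL {d : ℕ} (L : ℝ) (Q : Fin 2 → (Fin 5 → Ed d) → ℂ)
    (prev : ℕ → Fin 3 → ℝ → Ed d → ℂ) (n : ℕ) (i : Fin 3) (t : ℝ) (ξ : Ed d) : ℂ :=
  if hi : (i : ℕ) < 2 then
    (2 : ℂ) * ∑ p ∈ Finset.HasAntidiagonal.antidiagonal n, ∑ q ∈ Finset.HasAntidiagonal.antidiagonal p.2,
      ((∑ l ∈ ({0, 1} : Finset (Fin 6)),
          ∫ s in (0:ℝ)..t,
            prev q.2 i s ξ *
              ((((L ^ (2 * d) : ℝ))⁻¹ *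
                  ∑' k1 : latt d L, ∑' k2 : latt d L,
                    (zeta6 (Q ⟨(i : ℕ), hi⟩) l (k1 : Ed d) (k2 : Ed d) ξ *
                      crossOf prev (obar ⟨(i : ℕ), hi⟩) p.1 s (-(k1 : Ed d)) *
                      crossOf prev (obar ⟨(i : ℕ), hi⟩) q.1 s (-(k2 : Ed d))).im : ℝ) : ℂ)) +
        ∑ l ∈ ({2, 3, 4, 5} : Finset (Fin 6)),
          ∫ s in (0:ℝ)..t,
            ((((L ^ (2 * d) : ℝ))⁻¹ : ℝ) : ℂ) *
              ∑' k1 : latt d L, ∑' k2 : latt d L,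
                (((crossOf prev (obar ⟨(i : ℕ), hi⟩) q.2 s ξ *
                    zeta6 (Q ⟨(i : ℕ), hi⟩) l (k1 : Ed d) (k2 : Ed d) ξ *
                    crossOf prev (obar ⟨(i : ℕ), hi⟩) q.1 s (-(k2 : Ed d))).im : ℝ) : ℂ) *
                  prev p.1 i s (k1 : Ed d))
  else
    (-Complex.I) * ∑ p ∈ Finset.HasAntidiagonal.antidiagonal n, ∑ q ∈ Finset.HasAntidiagonal.antidiagonal p.2,
      ((∑ l ∈ ({0, 1} : Finset (Fin 6)),
          ∫ s in (0:ℝ)..t,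
            prev q.2 2 s ξ *
              (((((L ^ (2 * d) : ℝ))⁻¹ : ℝ) : ℂ) *
                ∑' k1 : latt d L, ∑' k2 : latt d L,
                  (zeta6 (Q 0) l (k1 : Ed d) (k2 : Ed d) ξ -
                      (starRingEnd ℂ) (zeta6 (Q 1) l (k1 : Ed d) (k2 : Ed d) ξ)) *
                    (starRingEnd ℂ) (prev p.1 2 s (-(k1 : Ed d))) *
                    (starRingEnd ℂ) (prev q.1 2 s (-(k2 : Ed d))))) +
        ∑ l ∈ ({2, 3, 4, 5} : Finset (Fin 6)),
          ∫ s in (0:ℝ)..t,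
            (((((L ^ (2 * d) : ℝ))⁻¹ : ℝ) : ℂ) *
              ∑' k1 : latt d L, ∑' k2 : latt d L,
                (prev q.2 1 s ξ * zeta6 (Q 0) l (k1 : Ed d) (k2 : Ed d) ξ *
                      prev p.1 0 s (k1 : Ed d) -
                    prev q.2 0 s ξ *
                      (starRingEnd ℂ) (zeta6 (Q 1) l (k1 : Ed d) (k2 : Ed d) ξ) *
                      prev p.1 1 s (k1 : Ed d)) *
                  (starRingEnd ℂ) (prev q.1 2 s (-(k2 : Ed d)))))

/-- The lattice resonant iterates `ρ_{L,n}^⋆`: same initial data and recursion as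
`rhoIter`, with double integrals replaced by normalized lattice sums. -/
def rhoIterL {d : ℕ} (L : ℝ) (Q : Fin 2 → (Fin 5 → Ed d) → ℂ) (M : Fin 3 → Ed d → ℂ) :
    ℕ → Fin 3 → ℝ → Ed d → ℂ
  | 0 => fun i _ ξ => M i ξ
  | n + 1 =>
    rhoStepL L Q (fun m => if h : m ≤ n then rhoIterL L Q M m else fun _ _ _ => 0) n
decreasing_by omega

/-- The ternary Catalan convolution: `c 0 = 1` and
`c (n+1) = ∑_{n₁+n₂+n₃ = n} c n₁ * c n₂ * c n₃`. -/
def cconv : ℕ → ℕ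
  | 0 => 1
  | n + 1 =>
    ∑ p ∈ (Finset.HasAntidiagonal.antidiagonal n).attach,
      ∑ q ∈ (Finset.HasAntidiagonal.antidiagonal p.1.2).attach,
        cconv p.1.1 * (cconv q.1.1 * cconv q.1.2)
decreasing_by
  all_goals
    have hp := Finset.HasAntidiagonal.mem_antidiagonal.mp p.2
    try have hq := Finset.HasAntidiagonal.mem_antidiagonal.mp q.2
    omega


lemma crossOf_zero {d : ℕ} (prev : ℕ → Fin 3 → ℝ → Ed d → ℂ) (η : Fin 2) (m : ℕ) (s : ℝ)
    (x : Ed d) (h : prev m 2 s x = 0) : crossOf prev η m s x = 0 := by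
  unfold crossOf; split <;> simp [h]

lemma norm_crossOf {d : ℕ} (prev : ℕ → Fin 3 → ℝ → Ed d → ℂ) (η : Fin 2) (m : ℕ) (s : ℝ)
    (x : Ed d) : ‖crossOf prev η m s x‖ = ‖prev m 2 s x‖ := by
  unfold crossOf; split <;> simp

lemma rhoStepL_zero {d : ℕ} (L : ℝ) (Q : Fin 2 → (Fin 5 → Ed d) → ℂ)
    (prev : ℕ → Fin 3 → ℝ → Ed d → ℂ) (n : ℕ) (i : Fin 3) (t : ℝ) (ξ : Ed d)
    (h : ∀ m j s, prev m j s ξ = 0) : rhoStepL L Q prev n i t ξ = 0 := by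
  unfold rhoStepL
  split
  · simp [crossOf, h]
  · simp [h]

lemma rhoIterL_supp {d : ℕ} (L : ℝ) (Q : Fin 2 → (Fin 5 → Ed d) → ℂ)
    (M : Fin 3 → Ed d → ℂ) (R : ℝ) (hM : ∀ j ξ, R < ‖ξ‖ → M j ξ = 0) :
    ∀ (n : ℕ) (j : Fin 3) (t : ℝ) (ξ : Ed d), R < ‖ξ‖ → rhoIterL L Q M n j t ξ = 0 := by
  intro n
  induction n using Nat.strong_induction_on with
  | _ n ih =>
    intro j t ξ hξ
    match n with
    | 0 => rw [rhoIterL]; exact hM j ξ hξ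
    | n + 1 =>
      rw [rhoIterL]
      apply rhoStepL_zero
      intro m j' s
      by_cases h : m ≤ n
      · simp only [dif_pos h]
        exact ih m (by omega) j' s ξ hξ
      · simp [dif_neg h]

lemma euclid_abs_le_norm {d : ℕ} (x : Ed d) (j : Fin d) : |x j| ≤ ‖x‖ := by
  rw [EuclideanSpace.norm_eq, ← Real.sqrt_sq_eq_abs]
  apply Real.sqrt_le_sqrt
  simpa using Finset.single_le_sum (f := fun i => ‖x i‖ ^ 2)
    (fun i _ => sq_nonneg _) (Finset.mem_univ j)

lemma tsum2_norm_le {α E : Type*} [NormedAddCommGroup E] (f : α → α → E) (T : Finset α)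
    {B : ℝ}
    (h1 : ∀ k1, k1 ∉ T → ∀ k2, f k1 k2 = 0)
    (h2 : ∀ k1 k2, k2 ∉ T → f k1 k2 = 0)
    (hb : ∀ k1 k2, ‖f k1 k2‖ ≤ B) :
    ‖∑' k1, ∑' k2, f k1 k2‖ ≤ (T.card : ℝ) ^ 2 * B := by
  have hin : ∀ k1, ∑' k2, f k1 k2 = ∑ k2 ∈ T, f k1 k2 := fun k1 =>
    tsum_eq_sum (fun b hb => h2 k1 b hb)
  have hout : ∑' k1, ∑' k2, f k1 k2 = ∑ k1 ∈ T, ∑ k2 ∈ T, f k1 k2 := by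
    rw [tsum_eq_sum (s := T) (fun b hb => by
      rw [hin]; exact Finset.sum_eq_zero fun k2 _ => h1 b hb k2)]
    exact Finset.sum_congr rfl fun k1 _ => hin k1
  rw [hout]
  calc ‖∑ k1 ∈ T, ∑ k2 ∈ T, f k1 k2‖ ≤ ∑ k1 ∈ T, ∑ k2 ∈ T, ‖f k1 k2‖ :=
        (norm_sum_le _ _).trans (Finset.sum_le_sum fun k1 _ => norm_sum_le _ _)
    _ ≤ ∑ _k1 ∈ T, ∑ _k2 ∈ T, B := Finset.sum_le_sum fun k1 _ =>
        Finset.sum_le_sum fun k2 _ => hb k1 k2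
    _ = (T.card : ℝ) ^ 2 * B := by simp [sq]; ring

lemma latt_finset (d : ℕ) (L R : ℝ) (hL : 0 < L) (hLR : 1 ≤ L * R) :
    ∃ T : Finset ↥(latt d L), (∀ x : ↥(latt d L), ‖(x : Ed d)‖ ≤ R → x ∈ T) ∧
      (T.card : ℝ) ≤ (5 * (L * R)) ^ d := by
  classical
  set N : ℤ := ⌈L * R⌉ with hN
  have hN1 : (1 : ℤ) ≤ N := by
    rw [hN]; exact_mod_cast Int.one_le_ceil_iff.mpr (by linarith)
  set F : ↥(latt d L) → (Fin d → ℤ) := fun x j => ⌊L * (x : Ed d) j⌋ with hF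
  have hfl : ∀ (x : ↥(latt d L)) (j : Fin d), ((F x j : ℤ) : ℝ) = L * (x : Ed d) j := by
    intro x j
    obtain ⟨z, hz⟩ := x.2 j
    rw [hF]; simp only; rw [hz, Int.floor_intCast]
  have hinj : Function.Injective F := by
    intro x y hxy
    apply Subtype.ext
    ext j
    have hj := congrFun hxy j
    have h1 := hfl x j; have h2 := hfl y j
    rw [hj] at h1
    exact mul_left_cancel₀ hL.ne' (h1.symm.trans h2)
  set S : Set ↥(latt d L) := {x | ‖(x : Ed d)‖ ≤ R} with hS
  have hmaps : ∀ x ∈ S, F x ∈ (Fintype.piFinset fun _ : Fin d => Finset.Icc (-N) N) := by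
    intro x hx
    rw [Fintype.mem_piFinset]
    intro j
    rw [Finset.mem_Icc]
    have habs : |L * (x : Ed d) j| ≤ L * R := by
      rw [abs_mul, abs_of_pos hL]
      exact mul_le_mul_of_nonneg_left ((euclid_abs_le_norm _ j).trans hx) hL.le
    have h1 : ((F x j : ℤ) : ℝ) ≤ (N : ℝ) := by
      rw [hfl]; exact le_trans (le_of_abs_le habs) (Int.le_ceil _)
    have h2 : ((-N : ℤ) : ℝ) ≤ ((F x j : ℤ) : ℝ) := by
      rw [hfl]; push_cast
      have hc := Int.le_ceil (L * R)
      nlinarith [neg_le_of_abs_le habs]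
    exact ⟨by exact_mod_cast h2, by exact_mod_cast h1⟩
  have hSfin : S.Finite := by
    apply Set.Finite.of_finite_image _ (hinj.injOn)
    exact Set.Finite.subset (Fintype.piFinset fun _ : Fin d => Finset.Icc (-N) N).finite_toSet
      (by rintro _ ⟨x, hx, rfl⟩; exact hmaps x hx)
  refine ⟨hSfin.toFinset, fun x hx => hSfin.mem_toFinset.mpr hx, ?_⟩
  have hcard : hSfin.toFinset.card ≤
      (Fintype.piFinset fun _ : Fin d => Finset.Icc (-N) N).card := by
    apply Finset.card_le_card_of_injOn F
    · intro x hx; exact hmaps x (hSfin.mem_toFinset.mp hx)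
    · exact hinj.injOn
  have hpi : (Fintype.piFinset fun _ : Fin d => Finset.Icc (-N) N).card
      = (2 * N + 1).toNat ^ d := by
    rw [Fintype.card_piFinset]
    simp [Int.card_Icc]
    congr 1
    omega
  have h2N : ((2 * N + 1).toNat : ℝ) ≤ 5 * (L * R) := by
    have h0 : (0:ℤ) ≤ 2 * N + 1 := by omega
    rw [show ((2 * N + 1).toNat:ℝ) = (((2*N+1).toNat : ℤ) : ℝ) by push_cast; ring,
      Int.toNat_of_nonneg h0]
    have hceil : (N : ℝ) < L * R + 1 := Int.ceil_lt_add_one _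
    push_cast
    nlinarith
  calc (hSfin.toFinset.card : ℝ) ≤ ((2 * N + 1).toNat ^ d : ℕ) := by exact_mod_cast hpi ▸ hcard
    _ = ((2 * N + 1).toNat : ℝ) ^ d := by push_cast; ring
    _ ≤ (5 * (L * R)) ^ d := pow_le_pow_left₀ (by positivity) h2N d

lemma zeta6_norm_le {d : ℕ} (Q : (Fin 5 → Ed d) → ℂ) {CQ : ℝ} (hQ : ∀ x, ‖Q x‖ ≤ CQ)
    (l : Fin 6) (a b c : Ed d) : ‖zeta6 Q l a b c‖ ≤ CQ := by
  fin_cases l <;> simpa [zeta6] using hQ _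

lemma cconv_succ_sum (n : ℕ) : cconv (n+1) = ∑ p ∈ Finset.HasAntidiagonal.antidiagonal n,
    ∑ q ∈ Finset.HasAntidiagonal.antidiagonal p.2, cconv p.1 * (cconv q.1 * cconv q.2) := by
  rw [cconv]
  rw [Finset.sum_attach (Finset.HasAntidiagonal.antidiagonal n)
    (fun p => ∑ q ∈ (Finset.HasAntidiagonal.antidiagonal p.2).attach, cconv p.1 * (cconv q.1.1 * cconv q.1.2))]
  exact Finset.sum_congr rfl fun p _ => Finset.sum_attach (Finset.HasAntidiagonal.antidiagonal p.2) (fun q => cconv p.1 * (cconv q.1 * cconv q.2))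

lemma rhoStepL_bound {d : ℕ} (L R : ℝ) (hL : 0 < L) (hR : 0 < R) (hLR : 1 ≤ L * R)
    (Q : Fin 2 → (Fin 5 → Ed d) → ℂ) (CQ : ℝ) (hCQ : 0 ≤ CQ)
    (hQ : ∀ η x, ‖Q η x‖ ≤ CQ)
    (prev : ℕ → Fin 3 → ℝ → Ed d → ℂ) (δ : ℝ) (hδ : 0 < δ) (A Λ : ℝ)
    (hA : 0 ≤ A) (hΛ : 0 ≤ Λ)
    (hsupp : ∀ m (j : Fin 3) s (ξ : Ed d), R < ‖ξ‖ → prev m j s ξ = 0)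
    (hbd : ∀ m (j : Fin 3) s (ξ : Ed d), s ∈ Set.Icc (0:ℝ) δ →
      ‖prev m j s ξ‖ ≤ A * (Λ*δ)^m * (cconv m : ℝ))
    (n : ℕ) (i : Fin 3) (t : ℝ) (ht : t ∈ Set.Icc (0:ℝ) δ) (ξ : Ed d) :
    ‖rhoStepL L Q prev n i t ξ‖ ≤
      12 * (5*R)^(2*d) * CQ * A^3 * δ * (Λ*δ)^n * (cconv (n+1) : ℝ) := by
  classical
  obtain ⟨T, hT, hTcard⟩ := latt_finset d L R hL hLR
  set B : ℕ → ℝ := fun m => A * (Λ*δ)^m * (cconv m : ℝ) with hBdef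
  have hB0 : ∀ m, 0 ≤ B m := fun m =>
    mul_nonneg (mul_nonneg hA (pow_nonneg (mul_nonneg hΛ hδ.le) m)) (Nat.cast_nonneg _)
  set K : ℝ := (5*R)^(2*d) with hKdef
  have hK0 : (0:ℝ) ≤ K := by positivity
  have hLpow : (0:ℝ) < L ^ (2*d) := by positivity
  have hW : (L ^ (2*d))⁻¹ * (T.card : ℝ)^2 ≤ K := by
    have hcard2 : (T.card:ℝ)^2 ≤ K * L^(2*d) := by
      calc (T.card:ℝ)^2 ≤ ((5*(L*R))^d)^2 :=
            pow_le_pow_left₀ (Nat.cast_nonneg _) hTcard 2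
        _ = ((5*R)*L)^(2*d) := by rw [← pow_mul]; ring_nf
        _ = K * L^(2*d) := by rw [mul_pow]
    rw [inv_mul_le_iff₀ hLpow]
    linarith
  have hsub : ∀ s ∈ Set.uIoc (0:ℝ) t, s ∈ Set.Icc (0:ℝ) δ := by
    intro s hs
    rw [Set.uIoc_of_le ht.1] at hs
    exact ⟨hs.1.le, hs.2.trans ht.2⟩
  have hTz : ∀ k : ↥(latt d L), k ∉ T → ∀ m (j : Fin 3) s, prev m j s (k : Ed d) = 0 :=
    fun k hk m j s => hsupp m j s _ (lt_of_not_ge fun h => hk (hT k h))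
  have hTzn : ∀ k : ↥(latt d L), k ∉ T → ∀ m (j : Fin 3) s, prev m j s (-(k : Ed d)) = 0 :=
    fun k hk m j s => hsupp m j s _ (by rw [norm_neg]; exact lt_of_not_ge fun h => hk (hT k h))
  have hcb : ∀ (η : Fin 2) m s (x : Ed d), s ∈ Set.Icc (0:ℝ) δ →
      ‖crossOf prev η m s x‖ ≤ B m := by
    intro η m s x hs
    rw [norm_crossOf]
    exact hbd m 2 s x hs
  have hconj : ∀ z : ℂ, ‖(starRingEnd ℂ) z‖ = ‖z‖ := fun z => RCLike.norm_conj z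
  have himle : ∀ z : ℂ, |z.im| ≤ ‖z‖ := fun z => by
    exact Complex.abs_im_le_norm z
  have habsT : |t - 0| ≤ δ := by rw [sub_zero, _root_.abs_of_nonneg ht.1]; exact ht.2
  -- the uniform per-integral bound
  have hEnn : ∀ p q : ℕ × ℕ, (0:ℝ) ≤ K * CQ * (B p.1 * (B q.1 * B q.2)) := by
    intro p q
    have := hB0 p.1; have := hB0 q.1; have := hB0 q.2
    positivity
  unfold rhoStepL
  split
  case isTrue hi =>
    rw [norm_mul]
    have h2 : ‖(2:ℂ)‖ = 2 := by norm_num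
    rw [h2]
    have step1 : ∀ p ∈ Finset.HasAntidiagonal.antidiagonal n, ∀ q ∈ Finset.HasAntidiagonal.antidiagonal p.2,
        ‖(∑ l ∈ ({0, 1} : Finset (Fin 6)),
          ∫ s in (0:ℝ)..t,
            prev q.2 i s ξ *
              ((((L ^ (2 * d) : ℝ))⁻¹ *
                  ∑' k1 : latt d L, ∑' k2 : latt d L,
                    (zeta6 (Q ⟨(i : ℕ), hi⟩) l (k1 : Ed d) (k2 : Ed d) ξ *
                      crossOf prev (obar ⟨(i : ℕ), hi⟩) p.1 s (-(k1 : Ed d)) *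
                      crossOf prev (obar ⟨(i : ℕ), hi⟩) q.1 s (-(k2 : Ed d))).im : ℝ) : ℂ)) +
        ∑ l ∈ ({2, 3, 4, 5} : Finset (Fin 6)),
          ∫ s in (0:ℝ)..t,
            ((((L ^ (2 * d) : ℝ))⁻¹ : ℝ) : ℂ) *
              ∑' k1 : latt d L, ∑' k2 : latt d L,
                (((crossOf prev (obar ⟨(i : ℕ), hi⟩) q.2 s ξ *
                    zeta6 (Q ⟨(i : ℕ), hi⟩) l (k1 : Ed d) (k2 : Ed d) ξ *
                    crossOf prev (obar ⟨(i : ℕ), hi⟩) q.1 s (-(k2 : Ed d))).im : ℝ) : ℂ) *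
                  prev p.1 i s (k1 : Ed d)‖
        ≤ 6 * (K * CQ * (B p.1 * (B q.1 * B q.2)) * δ) := by
      intro p hp q hq
      have hE := hEnn p q
      refine (norm_add_le _ _).trans ?_
      have hS1 : ∀ l : Fin 6, ‖∫ s in (0:ℝ)..t,
            prev q.2 i s ξ *
              ((((L ^ (2 * d) : ℝ))⁻¹ *
                  ∑' k1 : latt d L, ∑' k2 : latt d L,
                    (zeta6 (Q ⟨(i : ℕ), hi⟩) l (k1 : Ed d) (k2 : Ed d) ξ *
                      crossOf prev (obar ⟨(i : ℕ), hi⟩) p.1 s (-(k1 : Ed d)) *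
                      crossOf prev (obar ⟨(i : ℕ), hi⟩) q.1 s (-(k2 : Ed d))).im : ℝ) : ℂ)‖
          ≤ K * CQ * (B p.1 * (B q.1 * B q.2)) * δ := by
        intro l
        refine le_trans (intervalIntegral.norm_integral_le_of_norm_le_const
          (C := K * CQ * (B p.1 * (B q.1 * B q.2))) ?_) ?_
        · intro s hs
          have hsI := hsub s hs
          rw [norm_mul, Complex.norm_real, Real.norm_eq_abs, abs_mul,
            abs_inv, _root_.abs_of_pos hLpow]
          have hSS : ‖∑' k1 : latt d L, ∑' k2 : latt d L,
              (zeta6 (Q ⟨(i : ℕ), hi⟩) l (k1 : Ed d) (k2 : Ed d) ξ *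
                crossOf prev (obar ⟨(i : ℕ), hi⟩) p.1 s (-(k1 : Ed d)) *
                crossOf prev (obar ⟨(i : ℕ), hi⟩) q.1 s (-(k2 : Ed d))).im‖
              ≤ (T.card : ℝ)^2 * (CQ * (B p.1 * B q.1)) := by
            refine tsum2_norm_le _ T ?_ ?_ ?_
            · intro k1 hk1 k2
              rw [crossOf_zero _ _ _ _ _ (hTzn k1 hk1 p.1 2 s)]
              simp
            · intro k1 k2 hk2
              rw [crossOf_zero _ _ _ _ _ (hTzn k2 hk2 q.1 2 s)]
              simp
            · intro k1 k2
              rw [Real.norm_eq_abs]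
              refine (himle _).trans ?_
              rw [norm_mul, norm_mul]
              calc ‖zeta6 (Q ⟨(i : ℕ), hi⟩) l (k1 : Ed d) (k2 : Ed d) ξ‖ *
                    ‖crossOf prev (obar ⟨(i : ℕ), hi⟩) p.1 s (-(k1 : Ed d))‖ *
                    ‖crossOf prev (obar ⟨(i : ℕ), hi⟩) q.1 s (-(k2 : Ed d))‖
                  ≤ CQ * B p.1 * B q.1 := by
                    refine mul_le_mul (mul_le_mul (zeta6_norm_le _ (hQ _) _ _ _ _)
                      (hcb _ _ _ _ hsI) (norm_nonneg _) hCQ) (hcb _ _ _ _ hsI)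
                      (norm_nonneg _) (mul_nonneg hCQ (hB0 p.1))
                _ = CQ * (B p.1 * B q.1) := by ring
          rw [Real.norm_eq_abs] at hSS
          refine le_trans (mul_le_mul (hbd _ _ _ _ hsI)
            (mul_le_mul_of_nonneg_left hSS (by positivity)) (by positivity) (hB0 q.2)) ?_
          have h1 : (L ^ (2*d))⁻¹ * ((T.card : ℝ)^2 * (CQ * (B p.1 * B q.1)))
              ≤ K * (CQ * (B p.1 * B q.1)) := by
            rw [← mul_assoc]
            exact mul_le_mul_of_nonneg_right hW
              (mul_nonneg hCQ (mul_nonneg (hB0 p.1) (hB0 q.1)))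
          exact le_trans (mul_le_mul_of_nonneg_left h1 (hB0 q.2)) (le_of_eq (by ring))
        · exact mul_le_mul_of_nonneg_left habsT hE
      have hS2 : ∀ l : Fin 6, ‖∫ s in (0:ℝ)..t,
            ((((L ^ (2 * d) : ℝ))⁻¹ : ℝ) : ℂ) *
              ∑' k1 : latt d L, ∑' k2 : latt d L,
                (((crossOf prev (obar ⟨(i : ℕ), hi⟩) q.2 s ξ *
                    zeta6 (Q ⟨(i : ℕ), hi⟩) l (k1 : Ed d) (k2 : Ed d) ξ *
                    crossOf prev (obar ⟨(i : ℕ), hi⟩) q.1 s (-(k2 : Ed d))).im : ℝ) : ℂ) *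
                  prev p.1 i s (k1 : Ed d)‖
          ≤ K * CQ * (B p.1 * (B q.1 * B q.2)) * δ := by
        intro l
        refine le_trans (intervalIntegral.norm_integral_le_of_norm_le_const
          (C := K * CQ * (B p.1 * (B q.1 * B q.2))) ?_) ?_
        · intro s hs
          have hsI := hsub s hs
          rw [norm_mul, Complex.norm_real, Real.norm_eq_abs, abs_inv, _root_.abs_of_pos hLpow]
          have hSS : ‖∑' k1 : latt d L, ∑' k2 : latt d L,
                (((crossOf prev (obar ⟨(i : ℕ), hi⟩) q.2 s ξ *
                    zeta6 (Q ⟨(i : ℕ), hi⟩) l (k1 : Ed d) (k2 : Ed d) ξ *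
                    crossOf prev (obar ⟨(i : ℕ), hi⟩) q.1 s (-(k2 : Ed d))).im : ℝ) : ℂ) *
                  prev p.1 i s (k1 : Ed d)‖
              ≤ (T.card : ℝ)^2 * (CQ * (B q.2 * (B q.1 * B p.1))) := by
            refine tsum2_norm_le _ T ?_ ?_ ?_
            · intro k1 hk1 k2
              rw [hTz k1 hk1 p.1 i s]
              simp
            · intro k1 k2 hk2
              rw [crossOf_zero _ _ _ _ _ (hTzn k2 hk2 q.1 2 s)]
              simp
            · intro k1 k2
              rw [norm_mul, Complex.norm_real, Real.norm_eq_abs]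
              calc |(crossOf prev (obar ⟨(i : ℕ), hi⟩) q.2 s ξ *
                      zeta6 (Q ⟨(i : ℕ), hi⟩) l (k1 : Ed d) (k2 : Ed d) ξ *
                      crossOf prev (obar ⟨(i : ℕ), hi⟩) q.1 s (-(k2 : Ed d))).im| *
                    ‖prev p.1 i s (k1 : Ed d)‖
                  ≤ (B q.2 * CQ * B q.1) * B p.1 := by
                    refine mul_le_mul ((himle _).trans ?_) (hbd _ _ _ _ hsI)
                      (norm_nonneg _) (mul_nonneg (mul_nonneg (hB0 q.2) hCQ) (hB0 q.1))
                    rw [norm_mul, norm_mul]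
                    refine mul_le_mul (mul_le_mul (hcb _ _ _ _ hsI)
                      (zeta6_norm_le _ (hQ _) _ _ _ _) (norm_nonneg _) (hB0 q.2))
                      (hcb _ _ _ _ hsI) (norm_nonneg _) (mul_nonneg (hB0 q.2) hCQ)
                _ = CQ * (B q.2 * (B q.1 * B p.1)) := by ring
          refine le_trans (mul_le_mul_of_nonneg_left hSS (by positivity)) ?_
          rw [← mul_assoc]
          refine le_trans (mul_le_mul_of_nonneg_right hW
            (mul_nonneg hCQ (mul_nonneg (hB0 q.2) (mul_nonneg (hB0 q.1) (hB0 p.1))))) ?_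
          exact le_of_eq (by ring)
        · exact mul_le_mul_of_nonneg_left habsT hE
      refine le_trans (add_le_add
        ((norm_sum_le _ _).trans (Finset.sum_le_sum fun l _ => hS1 l))
        ((norm_sum_le _ _).trans (Finset.sum_le_sum fun l _ => hS2 l))) ?_
      rw [Finset.sum_const, Finset.sum_const]
      have hc1 : ({0, 1} : Finset (Fin 6)).card = 2 := by decide
      have hc2 : ({2, 3, 4, 5} : Finset (Fin 6)).card = 4 := by decide
      rw [hc1, hc2, nsmul_eq_mul, nsmul_eq_mul]
      push_cast
      ring_nf
      linarith
    -- outer assembly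
    have hccR : ((cconv (n+1) : ℕ) : ℝ) = ∑ p ∈ Finset.HasAntidiagonal.antidiagonal n,
        ∑ q ∈ Finset.HasAntidiagonal.antidiagonal p.2,
          ((cconv p.1 : ℝ) * ((cconv q.1 : ℝ) * (cconv q.2 : ℝ))) := by
      rw [cconv_succ_sum]; push_cast; rfl
    refine le_trans (mul_le_mul_of_nonneg_left ((norm_sum_le _ _).trans
      (Finset.sum_le_sum fun p hp => (norm_sum_le _ _).trans
        (Finset.sum_le_sum fun q hq => step1 p hp q hq))) (by norm_num)) ?_
    have hsum : ∑ p ∈ Finset.HasAntidiagonal.antidiagonal n, ∑ q ∈ Finset.HasAntidiagonal.antidiagonal p.2,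
        6 * (K * CQ * (B p.1 * (B q.1 * B q.2)) * δ)
        = (6 * K * CQ * δ * A^3 * (Λ*δ)^n) * ((cconv (n+1) : ℕ) : ℝ) := by
      rw [hccR]
      rw [Finset.mul_sum]
      refine Finset.sum_congr rfl fun p hp => ?_
      rw [Finset.mul_sum]
      refine Finset.sum_congr rfl fun q hq => ?_
      have hp' := Finset.HasAntidiagonal.mem_antidiagonal.mp hp
      have hq' := Finset.HasAntidiagonal.mem_antidiagonal.mp hq
      have hpow : (Λ*δ)^p.1 * ((Λ*δ)^q.1 * (Λ*δ)^q.2) = (Λ*δ)^n := by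
        rw [← pow_add, ← pow_add]; congr 1; omega
      simp only [hBdef]
      linear_combination (6*K*CQ*δ*A^3*((cconv p.1 : ℝ)*((cconv q.1 : ℝ)*(cconv q.2 : ℝ)))) * hpow
    rw [hsum]
    exact le_of_eq (by ring)
  case isFalse hi =>
    rw [norm_mul, norm_neg, Complex.norm_I, one_mul]
    have step1 : ∀ p ∈ Finset.HasAntidiagonal.antidiagonal n, ∀ q ∈ Finset.HasAntidiagonal.antidiagonal p.2,
        ‖(∑ l ∈ ({0, 1} : Finset (Fin 6)),
          ∫ s in (0:ℝ)..t,
            prev q.2 2 s ξ *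
              (((((L ^ (2 * d) : ℝ))⁻¹ : ℝ) : ℂ) *
                ∑' k1 : latt d L, ∑' k2 : latt d L,
                  (zeta6 (Q 0) l (k1 : Ed d) (k2 : Ed d) ξ -
                      (starRingEnd ℂ) (zeta6 (Q 1) l (k1 : Ed d) (k2 : Ed d) ξ)) *
                    (starRingEnd ℂ) (prev p.1 2 s (-(k1 : Ed d))) *
                    (starRingEnd ℂ) (prev q.1 2 s (-(k2 : Ed d))))) +
        ∑ l ∈ ({2, 3, 4, 5} : Finset (Fin 6)),
          ∫ s in (0:ℝ)..t,
            (((((L ^ (2 * d) : ℝ))⁻¹ : ℝ) : ℂ) *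
              ∑' k1 : latt d L, ∑' k2 : latt d L,
                (prev q.2 1 s ξ * zeta6 (Q 0) l (k1 : Ed d) (k2 : Ed d) ξ *
                      prev p.1 0 s (k1 : Ed d) -
                    prev q.2 0 s ξ *
                      (starRingEnd ℂ) (zeta6 (Q 1) l (k1 : Ed d) (k2 : Ed d) ξ) *
                      prev p.1 1 s (k1 : Ed d)) *
                  (starRingEnd ℂ) (prev q.1 2 s (-(k2 : Ed d))))‖
        ≤ 12 * (K * CQ * (B p.1 * (B q.1 * B q.2)) * δ) := by
      intro p hp q hq
      have hE := hEnn p q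
      refine (norm_add_le _ _).trans ?_
      have hS1 : ∀ l : Fin 6, ‖∫ s in (0:ℝ)..t,
            prev q.2 2 s ξ *
              (((((L ^ (2 * d) : ℝ))⁻¹ : ℝ) : ℂ) *
                ∑' k1 : latt d L, ∑' k2 : latt d L,
                  (zeta6 (Q 0) l (k1 : Ed d) (k2 : Ed d) ξ -
                      (starRingEnd ℂ) (zeta6 (Q 1) l (k1 : Ed d) (k2 : Ed d) ξ)) *
                    (starRingEnd ℂ) (prev p.1 2 s (-(k1 : Ed d))) *
                    (starRingEnd ℂ) (prev q.1 2 s (-(k2 : Ed d))))‖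
          ≤ 2 * (K * CQ * (B p.1 * (B q.1 * B q.2))) * δ := by
        intro l
        refine le_trans (intervalIntegral.norm_integral_le_of_norm_le_const
          (C := 2 * (K * CQ * (B p.1 * (B q.1 * B q.2)))) ?_) ?_
        · intro s hs
          have hsI := hsub s hs
          rw [norm_mul, norm_mul, Complex.norm_real, Real.norm_eq_abs, abs_inv,
            _root_.abs_of_pos hLpow]
          have hSS : ‖∑' k1 : latt d L, ∑' k2 : latt d L,
                (zeta6 (Q 0) l (k1 : Ed d) (k2 : Ed d) ξ -
                    (starRingEnd ℂ) (zeta6 (Q 1) l (k1 : Ed d) (k2 : Ed d) ξ)) *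
                  (starRingEnd ℂ) (prev p.1 2 s (-(k1 : Ed d))) *
                  (starRingEnd ℂ) (prev q.1 2 s (-(k2 : Ed d)))‖
              ≤ (T.card : ℝ)^2 * (2 * CQ * (B p.1 * B q.1)) := by
            refine tsum2_norm_le _ T ?_ ?_ ?_
            · intro k1 hk1 k2
              rw [hTzn k1 hk1 p.1 2 s]
              simp
            · intro k1 k2 hk2
              rw [hTzn k2 hk2 q.1 2 s]
              simp
            · intro k1 k2
              rw [norm_mul, norm_mul]
              have hzz : ‖zeta6 (Q 0) l (k1 : Ed d) (k2 : Ed d) ξ -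
                  (starRingEnd ℂ) (zeta6 (Q 1) l (k1 : Ed d) (k2 : Ed d) ξ)‖ ≤ 2 * CQ := by
                refine (norm_sub_le _ _).trans ?_
                rw [hconj]
                have := zeta6_norm_le (Q 0) (hQ 0) l (k1 : Ed d) (k2 : Ed d) ξ
                have := zeta6_norm_le (Q 1) (hQ 1) l (k1 : Ed d) (k2 : Ed d) ξ
                linarith
              have hp1 : ‖(starRingEnd ℂ) (prev p.1 2 s (-(k1 : Ed d)))‖ ≤ B p.1 := by
                rw [hconj]; exact hbd _ _ _ _ hsI
              have hq1 : ‖(starRingEnd ℂ) (prev q.1 2 s (-(k2 : Ed d)))‖ ≤ B q.1 := by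
                rw [hconj]; exact hbd _ _ _ _ hsI
              refine le_trans (mul_le_mul (mul_le_mul hzz hp1 (norm_nonneg _)
                (by positivity)) hq1 (norm_nonneg _)
                (mul_nonneg (by positivity) (hB0 p.1))) (le_of_eq (by ring))
          refine le_trans (mul_le_mul (hbd _ _ _ _ hsI)
            (mul_le_mul_of_nonneg_left hSS (by positivity)) (by positivity) (hB0 q.2)) ?_
          have h1 : (L ^ (2*d))⁻¹ * ((T.card : ℝ)^2 * (2 * CQ * (B p.1 * B q.1)))
              ≤ K * (2 * CQ * (B p.1 * B q.1)) := by
            rw [← mul_assoc]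
            exact mul_le_mul_of_nonneg_right hW
              (mul_nonneg (by positivity) (mul_nonneg (hB0 p.1) (hB0 q.1)))
          exact le_trans (mul_le_mul_of_nonneg_left h1 (hB0 q.2)) (le_of_eq (by ring))
        · exact mul_le_mul_of_nonneg_left habsT (by positivity)
      have hS2 : ∀ l : Fin 6, ‖∫ s in (0:ℝ)..t,
            (((((L ^ (2 * d) : ℝ))⁻¹ : ℝ) : ℂ) *
              ∑' k1 : latt d L, ∑' k2 : latt d L,
                (prev q.2 1 s ξ * zeta6 (Q 0) l (k1 : Ed d) (k2 : Ed d) ξ *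
                      prev p.1 0 s (k1 : Ed d) -
                    prev q.2 0 s ξ *
                      (starRingEnd ℂ) (zeta6 (Q 1) l (k1 : Ed d) (k2 : Ed d) ξ) *
                      prev p.1 1 s (k1 : Ed d)) *
                  (starRingEnd ℂ) (prev q.1 2 s (-(k2 : Ed d))))‖
          ≤ 2 * (K * CQ * (B p.1 * (B q.1 * B q.2))) * δ := by
        intro l
        refine le_trans (intervalIntegral.norm_integral_le_of_norm_le_const
          (C := 2 * (K * CQ * (B p.1 * (B q.1 * B q.2)))) ?_) ?_
        · intro s hs
          have hsI := hsub s hs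
          rw [norm_mul, Complex.norm_real, Real.norm_eq_abs, abs_inv,
            _root_.abs_of_pos hLpow]
          have hSS : ‖∑' k1 : latt d L, ∑' k2 : latt d L,
                (prev q.2 1 s ξ * zeta6 (Q 0) l (k1 : Ed d) (k2 : Ed d) ξ *
                      prev p.1 0 s (k1 : Ed d) -
                    prev q.2 0 s ξ *
                      (starRingEnd ℂ) (zeta6 (Q 1) l (k1 : Ed d) (k2 : Ed d) ξ) *
                      prev p.1 1 s (k1 : Ed d)) *
                  (starRingEnd ℂ) (prev q.1 2 s (-(k2 : Ed d)))‖
              ≤ (T.card : ℝ)^2 * (2 * (B q.2 * CQ * B p.1) * B q.1) := by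
            refine tsum2_norm_le _ T ?_ ?_ ?_
            · intro k1 hk1 k2
              rw [hTz k1 hk1 p.1 0 s, hTz k1 hk1 p.1 1 s]
              simp
            · intro k1 k2 hk2
              rw [hTzn k2 hk2 q.1 2 s]
              simp
            · intro k1 k2
              rw [norm_mul]
              have ha : ‖prev q.2 1 s ξ * zeta6 (Q 0) l (k1 : Ed d) (k2 : Ed d) ξ *
                  prev p.1 0 s (k1 : Ed d)‖ ≤ B q.2 * CQ * B p.1 := by
                rw [norm_mul, norm_mul]
                exact mul_le_mul (mul_le_mul (hbd _ _ _ _ hsI)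
                  (zeta6_norm_le _ (hQ 0) _ _ _ _) (norm_nonneg _) (hB0 q.2))
                  (hbd _ _ _ _ hsI) (norm_nonneg _) (mul_nonneg (hB0 q.2) hCQ)
              have hb2 : ‖prev q.2 0 s ξ *
                  (starRingEnd ℂ) (zeta6 (Q 1) l (k1 : Ed d) (k2 : Ed d) ξ) *
                  prev p.1 1 s (k1 : Ed d)‖ ≤ B q.2 * CQ * B p.1 := by
                rw [norm_mul, norm_mul, hconj]
                exact mul_le_mul (mul_le_mul (hbd _ _ _ _ hsI)
                  (zeta6_norm_le _ (hQ 1) _ _ _ _) (norm_nonneg _) (hB0 q.2))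
                  (hbd _ _ _ _ hsI) (norm_nonneg _) (mul_nonneg (hB0 q.2) hCQ)
              have hq1 : ‖(starRingEnd ℂ) (prev q.1 2 s (-(k2 : Ed d)))‖ ≤ B q.1 := by
                rw [hconj]; exact hbd _ _ _ _ hsI
              refine mul_le_mul ((norm_sub_le _ _).trans (by linarith)) hq1
                (norm_nonneg _) ?_
              have := hB0 q.2; have := hB0 p.1
              positivity
          refine le_trans (mul_le_mul_of_nonneg_left hSS (by positivity)) ?_
          rw [← mul_assoc]
          refine le_trans (mul_le_mul_of_nonneg_right hW ?_) (le_of_eq (by ring))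
          have := hB0 q.2; have := hB0 p.1; have := hB0 q.1
          positivity
        · exact mul_le_mul_of_nonneg_left habsT (by positivity)
      refine le_trans (add_le_add
        ((norm_sum_le _ _).trans (Finset.sum_le_sum fun l _ => hS1 l))
        ((norm_sum_le _ _).trans (Finset.sum_le_sum fun l _ => hS2 l))) ?_
      rw [Finset.sum_const, Finset.sum_const]
      have hc1 : ({0, 1} : Finset (Fin 6)).card = 2 := by decide
      have hc2 : ({2, 3, 4, 5} : Finset (Fin 6)).card = 4 := by decide
      rw [hc1, hc2, nsmul_eq_mul, nsmul_eq_mul]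
      push_cast
      ring_nf
      linarith
    have hccR : ((cconv (n+1) : ℕ) : ℝ) = ∑ p ∈ Finset.HasAntidiagonal.antidiagonal n,
        ∑ q ∈ Finset.HasAntidiagonal.antidiagonal p.2,
          ((cconv p.1 : ℝ) * ((cconv q.1 : ℝ) * (cconv q.2 : ℝ))) := by
      rw [cconv_succ_sum]; push_cast; rfl
    refine le_trans ((norm_sum_le _ _).trans
      (Finset.sum_le_sum fun p hp => (norm_sum_le _ _).trans
        (Finset.sum_le_sum fun q hq => step1 p hp q hq))) ?_
    have hsum : ∑ p ∈ Finset.HasAntidiagonal.antidiagonal n, ∑ q ∈ Finset.HasAntidiagonal.antidiagonal p.2,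
        12 * (K * CQ * (B p.1 * (B q.1 * B q.2)) * δ)
        = (12 * K * CQ * δ * A^3 * (Λ*δ)^n) * ((cconv (n+1) : ℕ) : ℝ) := by
      rw [hccR]
      rw [Finset.mul_sum]
      refine Finset.sum_congr rfl fun p hp => ?_
      rw [Finset.mul_sum]
      refine Finset.sum_congr rfl fun q hq => ?_
      have hp' := Finset.HasAntidiagonal.mem_antidiagonal.mp hp
      have hq' := Finset.HasAntidiagonal.mem_antidiagonal.mp hq
      have hpow : (Λ*δ)^p.1 * ((Λ*δ)^q.1 * (Λ*δ)^q.2) = (Λ*δ)^n := by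
        rw [← pow_add, ← pow_add]; congr 1; omega
      simp only [hBdef]
      linear_combination (12*K*CQ*δ*A^3*((cconv p.1 : ℝ)*((cconv q.1 : ℝ)*(cconv q.2 : ℝ)))) * hpow
    rw [hsum]
    exact le_of_eq (by ring)
/-- **Uniform bound on the lattice iterates**: there is a constant `Λ > 0` (independent of
`L`) such that for every `L > 0` with `L·R ≥ 1`, every `δ > 0`, every `n`, every
`⋆ ∈ {0,1,×}`, every `t ∈ [0,δ]` and every `k ∈ ℝ^d`:
`|ρ_{L,n}^⋆(t,k)| ≤ Λ (Λδ)^n c_n`. -/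
theorem uniform_bound_lattice_iterates (d : ℕ) (hd : 2 ≤ d) (R : ℝ) (hR : 0 < R)
    (Q : Fin 2 → (Fin 5 → Ed d) → ℂ) (M : Fin 3 → Ed d → ℂ)
    (hQmeas : ∀ η, Measurable (Q η))
    (hQbdd : ∀ η, ∃ C, ∀ x, ‖Q η x‖ ≤ C)
    (hQint : ∀ η, Integrable (Q η))
    (hMmeas : ∀ j, Measurable (M j))
    (hMbdd : ∀ j, ∃ C, ∀ ξ, ‖M j ξ‖ ≤ C)
    (hMint : ∀ j, Integrable (M j))
    (hMreal : ∀ ξ, (M 0 ξ).im = 0 ∧ (M 1 ξ).im = 0)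
    (hMsupp : ∀ j, ∀ ξ : Ed d, ξ ∉ Metric.closedBall (0 : Ed d) R → M j ξ = 0) :
    ∃ Λ > (0 : ℝ), ∀ L : ℝ, 0 < L → 1 ≤ L * R → ∀ δ : ℝ, 0 < δ →
      ∀ (n : ℕ) (j : Fin 3), ∀ t ∈ Set.Icc (0 : ℝ) δ, ∀ k : Ed d,
        ‖rhoIterL L Q M n j t k‖ ≤ Λ * (Λ * δ) ^ n * (cconv n : ℝ) := by
  classical
  obtain ⟨C0, hC0⟩ := hQbdd 0
  obtain ⟨C1, hC1⟩ := hQbdd 1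
  set CQ := max (max C0 C1) 0 with hCQdef
  have hCQ0 : 0 ≤ CQ := le_max_right _ _
  have hQb : ∀ η x, ‖Q η x‖ ≤ CQ := by
    intro η x; fin_cases η
    · exact (hC0 x).trans (le_max_of_le_left (le_max_left _ _))
    · exact (hC1 x).trans (le_max_of_le_left (le_max_right _ _))
  obtain ⟨D0, hD0⟩ := hMbdd 0
  obtain ⟨D1, hD1⟩ := hMbdd 1
  obtain ⟨D2, hD2⟩ := hMbdd 2
  set A := max (max (max D0 D1) D2) 1 with hAdef
  have hA1 : (1:ℝ) ≤ A := le_max_right _ _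
  have hA0 : (0:ℝ) ≤ A := by linarith
  have hMb : ∀ (j : Fin 3) (ξ : Ed d), ‖M j ξ‖ ≤ A := by
    intro j ξ; fin_cases j
    · exact (hD0 ξ).trans (by simp [hAdef, le_max_iff])
    · exact (hD1 ξ).trans (by simp [hAdef, le_max_iff])
    · exact (hD2 ξ).trans (by simp [hAdef, le_max_iff])
  set K : ℝ := (5*R)^(2*d) with hKdef
  have hK0 : (0:ℝ) ≤ K := by positivity
  set Λ : ℝ := A + 12*K*CQ*A^2 with hΛdef
  have h12 : (0:ℝ) ≤ 12*K*CQ*A^2 :=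
    mul_nonneg (mul_nonneg (mul_nonneg (by norm_num) hK0) hCQ0) (sq_nonneg A)
  have hΛA : A ≤ Λ := by linarith
  have hΛ12 : 12*K*CQ*A^2 ≤ Λ := by linarith
  have hΛ0 : (0:ℝ) < Λ := by linarith
  refine ⟨Λ, hΛ0, ?_⟩
  intro L hL hLR δ hδ
  have hMsupp' : ∀ (j : Fin 3) (ξ : Ed d), R < ‖ξ‖ → M j ξ = 0 := by
    intro j ξ h
    refine hMsupp j ξ ?_
    rw [Metric.mem_closedBall, dist_zero_right]
    exact not_le.mpr h
  have hsuppIter := rhoIterL_supp L Q M R hMsupp'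
  have hBnn : ∀ m : ℕ, (0:ℝ) ≤ A * (Λ*δ)^m * (cconv m : ℝ) := fun m =>
    mul_nonneg (mul_nonneg hA0 (pow_nonneg (mul_nonneg hΛ0.le hδ.le) m)) (Nat.cast_nonneg _)
  have main : ∀ (n : ℕ) (j : Fin 3) (t : ℝ), t ∈ Set.Icc (0:ℝ) δ → ∀ k : Ed d,
      ‖rhoIterL L Q M n j t k‖ ≤ A * (Λ*δ)^n * (cconv n : ℝ) := by
    intro n
    induction n using Nat.strong_induction_on with
    | _ n ih =>
      match n with
      | 0 =>
        intro j t ht k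
        rw [rhoIterL]
        have h1 : A * (Λ*δ)^0 * ((cconv 0 : ℕ) : ℝ) = A := by simp [cconv]
        rw [h1]
        exact hMb j k
      | n + 1 =>
        intro j t ht k
        rw [rhoIterL]
        refine le_trans (rhoStepL_bound L R hL hR hLR Q CQ hCQ0 hQb _ δ hδ A Λ hA0 hΛ0.le
          ?_ ?_ n j t ht k) ?_
        · intro m j' s ξ hξ
          by_cases h : m ≤ n
          · simp only [dif_pos h]; exact hsuppIter m j' s ξ hξ
          · simp [dif_neg h]
        · intro m j' s ξ hs
          by_cases h : m ≤ n
          · simp only [dif_pos h]; exact ih m (by omega) j' s hs ξ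
          · simp only [dif_neg h]
            simpa using hBnn m
        · calc 12 * (5*R)^(2*d) * CQ * A^3 * δ * (Λ*δ)^n * (cconv (n+1) : ℝ)
              = (12*K*CQ*A^2) * (A*δ*(Λ*δ)^n*(cconv (n+1) : ℝ)) := by rw [hKdef]; ring
            _ ≤ Λ * (A*δ*(Λ*δ)^n*(cconv (n+1) : ℝ)) := by
                refine mul_le_mul_of_nonneg_right hΛ12 ?_
                have := hBnn n
                have h0 : (0:ℝ) ≤ (Λ*δ)^n := pow_nonneg (mul_nonneg hΛ0.le hδ.le) n
                have h1 : (0:ℝ) ≤ (cconv (n+1) : ℝ) := Nat.cast_nonneg _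
                positivity
            _ = A * (Λ*δ)^(n+1) * (cconv (n+1) : ℝ) := by rw [pow_succ]; ring
  intro n j t ht k
  refine (main n j t ht k).trans ?_
  calc A * (Λ*δ)^n * (cconv n : ℝ) = A * ((Λ*δ)^n * (cconv n : ℝ)) := by ring
    _ ≤ Λ * ((Λ*δ)^n * (cconv n : ℝ)) := by
        refine mul_le_mul_of_nonneg_right hΛA ?_
        have h0 : (0:ℝ) ≤ (Λ*δ)^n := pow_nonneg (mul_nonneg hΛ0.le hδ.le) n
        positivity
    _ = Λ * (Λ*δ)^n * (cconv n : ℝ) := by ring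
end
end

section
/- Degree-one oscillatory integral estimate: let d ≥ 2, p > 1, γ̃ > 0 and R > 0. There exists a constant Λ > 0, depending only on d, p and R, such that for every γ ∈ (0,γ̃), every ε ∈ (0,1], every integer n ≥ 1, every A ∈ ℝ with A ≠ 0, every B, C ∈ ℝ, every sign ι ∈ {−1,+1} and every P ∈ ℝ^d with |P| ≥ ε^γ: ∫_{Q_{0,(2n+1)R}} |A + i(B + ε^{−γ̃}(|x|² + ι|x−P|² + C))|^{−p} dx ≤ Λ |A|^{1−p} n^{d−1} ε^{γ̃−γ}, where |·| on ℝ^d is the Euclidean norm and |·| applied to a complex number is its modulus. -/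
open MeasureTheory

open Set ENNReal

noncomputable section

private lemma aux_norm (A w p : ℝ) :
    ‖(A : ℂ) + Complex.I * (w : ℂ)‖ ^ (-p) = (A ^ 2 + w ^ 2) ^ (-(p / 2)) := by
  have h : ‖(A : ℂ) + Complex.I * (w : ℂ)‖ = Real.sqrt (A ^ 2 + w ^ 2) := by
    rw [Complex.norm_def, Complex.normSq_apply]
    simp [Complex.add_re, Complex.add_im, Complex.mul_re, Complex.mul_im]
    ring_nf
  rw [h, Real.sqrt_eq_rpow, ← Real.rpow_mul (by positivity)]
  congr 1
  ring

private lemma aux_coord {k : ℕ} (y : EuclideanSpace ℝ (Fin k)) (j : Fin k) : |y j| ≤ ‖y‖ := by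
  rw [EuclideanSpace.norm_eq, ← Real.sqrt_sq_eq_abs]
  apply Real.sqrt_le_sqrt
  have : y j ^ 2 ≤ ∑ i, ‖y i‖ ^ 2 := by
    have := Finset.single_le_sum (f := fun i => ‖y i‖ ^ 2)
      (fun i _ => by positivity) (Finset.mem_univ j)
    simpa [Real.norm_eq_abs, sq_abs] using this
  exact this

private lemma aux_lt_iff {p t X : ℝ} (hp : 0 < p) (ht : 0 < t) (hX : 0 < X) :
    t < X ^ (-(p / 2)) ↔ X < t ^ (-(2 / p)) := by
  have hc : (0:ℝ) < t ^ (-(2 / p)) := Real.rpow_pos_of_pos ht _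
  have hid : (t ^ (-(2 / p))) ^ (-(p / 2)) = t := by
    rw [← Real.rpow_mul ht.le]
    rw [show -(2 / p) * -(p / 2) = 1 by field_simp, Real.rpow_one]
  have := Real.rpow_lt_rpow_iff_of_neg hc hX (by linarith : -(p/2) < 0)
  rw [hid] at this
  exact this

private lemma aux_ioo (A c : ℝ) :
    {w : ℝ | A ^ 2 + w ^ 2 < c} = Ioo (-Real.sqrt (c - A ^ 2)) (Real.sqrt (c - A ^ 2)) := by
  ext w
  simp only [Set.mem_setOf_eq, Set.mem_Ioo, ← abs_lt]
  rw [Real.lt_sqrt (abs_nonneg w), sq_abs]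
  constructor <;> intro h <;> linarith

private lemma aux_cp_finite {p : ℝ} (hp : 1 < p) :
    (∫⁻ x : ℝ, ENNReal.ofReal ((1 + x ^ 2) ^ (-(p / 2)))) < ⊤ := by
  have hint : Integrable (fun x : ℝ => ((1:ℝ) + ‖x‖ ^ 2) ^ (-p / 2)) :=
    integrable_rpow_neg_one_add_norm_sq (by simpa using hp)
  have heq : (fun x : ℝ => ((1:ℝ) + ‖x‖ ^ 2) ^ (-p / 2))
      = fun x : ℝ => (1 + x ^ 2) ^ (-(p / 2)) := by
    funext x; rw [Real.norm_eq_abs, sq_abs, neg_div]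
  rw [heq] at hint
  have := hint.hasFiniteIntegral
  rw [HasFiniteIntegral] at this
  refine lt_of_le_of_lt (lintegral_mono fun x => ?_) this
  rw [← ofReal_norm, Real.norm_eq_abs,
    abs_of_nonneg (Real.rpow_nonneg (by positivity) _)]

private lemma aux_G_int {p A Cp : ℝ} (hp : 1 < p) (hA : A ≠ 0) (hCp : 0 ≤ Cp)
    (h : (∫⁻ x : ℝ, ENNReal.ofReal ((1 + x ^ 2) ^ (-(p / 2)))) ≤ ENNReal.ofReal Cp) :
    (∫⁻ s : ℝ, ENNReal.ofReal ((A ^ 2 + s ^ 2) ^ (-(p / 2))))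
      ≤ ENNReal.ofReal (|A| ^ (1 - p) * Cp) := by
  have hA0 : 0 < |A| := abs_pos.mpr hA
  set f : ℝ → ℝ≥0∞ := fun s => ENNReal.ofReal ((A ^ 2 + s ^ 2) ^ (-(p / 2))) with hf
  have hfm : Measurable f := by
    fun_prop
  -- scaling identity
  have hmap : Measure.map (fun x : ℝ => |A| * x) volume
      = ENNReal.ofReal |(|A|)⁻¹| • volume := Real.map_volume_mul_left (ne_of_gt hA0)
  have h1 : (∫⁻ x : ℝ, f (|A| * x)) = ENNReal.ofReal |A|⁻¹ * ∫⁻ s, f s := by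
    rw [← lintegral_map hfm (measurable_const_mul _), hmap, lintegral_smul_measure,
      abs_of_nonneg (inv_nonneg.mpr hA0.le), smul_eq_mul]
  have h2 : ∀ x : ℝ, f (|A| * x) = ENNReal.ofReal (|A| ^ (-p)) *
      ENNReal.ofReal ((1 + x ^ 2) ^ (-(p / 2))) := by
    intro x
    simp only [hf]
    norm_num only
    have : A ^ 2 + (|A| * x) ^ 2 = A ^ 2 * (1 + x ^ 2) := by
      rw [mul_pow, sq_abs]; ring
    rw [this, Real.mul_rpow (by positivity) (by positivity), ← ENNReal.ofReal_mul
      (by positivity)]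
    congr 2
    rw [show A ^ 2 = |A| ^ (2:ℕ) by rw [sq_abs], ← Real.rpow_natCast |A| 2,
      ← Real.rpow_mul hA0.le]
    congr 1
    ring
  have h3 : (∫⁻ x : ℝ, f (|A| * x))
      = ENNReal.ofReal (|A| ^ (-p)) * ∫⁻ x : ℝ, ENNReal.ofReal ((1 + x ^ 2) ^ (-(p / 2))) := by
    simp_rw [h2]
    rw [lintegral_const_mul _ (by fun_prop)]
  have key : (∫⁻ s, f s) = ENNReal.ofReal |A| * (∫⁻ x : ℝ, f (|A| * x)) := by
    rw [h1, ← mul_assoc, ← ENNReal.ofReal_mul (abs_nonneg A), mul_inv_cancel₀ (ne_of_gt hA0),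
      ENNReal.ofReal_one, one_mul]
  rw [key, h3, ← mul_assoc, ← ENNReal.ofReal_mul (abs_nonneg A)]
  calc ENNReal.ofReal (|A| * |A| ^ (-p)) * ∫⁻ x : ℝ, ENNReal.ofReal ((1 + x ^ 2) ^ (-(p / 2)))
      ≤ ENNReal.ofReal (|A| * |A| ^ (-p)) * ENNReal.ofReal Cp := by
        exact mul_le_mul_right h _
    _ = ENNReal.ofReal (|A| ^ (1 - p) * Cp) := by
        rw [← ENNReal.ofReal_mul (by positivity)]
        congr 2
        rw [show |A| * |A| ^ (-p) = |A| ^ (1:ℝ) * |A| ^ (-p) by rw [Real.rpow_one],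
          ← Real.rpow_add hA0]
        ring_nf


private lemma aux_pi_box {d : ℕ} (hd : 1 ≤ d) {M : ℝ} (hM : 0 ≤ M) (a b : ℝ) :
    (volume (Set.pi Set.univ (fun j : Fin d =>
        if j = (⟨0, by omega⟩ : Fin d) then Ioo a b else Icc (-M) M)))
      ≤ ENNReal.ofReal ((2 * M) ^ (d - 1)) * ENNReal.ofReal (b - a) := by
  rw [volume_pi_pi]
  rw [← Finset.mul_prod_erase Finset.univ _ (Finset.mem_univ (⟨0, by omega⟩ : Fin d))]
  have h1 : (volume (if (⟨0, by omega⟩ : Fin d) = (⟨0, by omega⟩ : Fin d) then Ioo a b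
      else Icc (-M) M)) = ENNReal.ofReal (b - a) := by
    rw [if_pos rfl, Real.volume_Ioo]
  have h2 : ∀ j ∈ Finset.univ.erase (⟨0, by omega⟩ : Fin d),
      (volume (if j = (⟨0, by omega⟩ : Fin d) then Ioo a b else Icc (-M) M))
        = ENNReal.ofReal (2 * M) := by
    intro j hj
    rw [if_neg (Finset.mem_erase.mp hj).1, Real.volume_Icc]
    congr 1; ring
  rw [h1, Finset.prod_congr rfl h2, Finset.prod_const,
    Finset.card_erase_of_mem (Finset.mem_univ _), Finset.card_univ, Fintype.card_fin,
    ← ENNReal.ofReal_pow (by positivity)]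
  exact le_of_eq (mul_comm _ _)

private lemma aux_slab {d : ℕ} (hd : 1 ≤ d) (v : EuclideanSpace ℝ (Fin d)) (hv : ‖v‖ = 1)
    {M : ℝ} (hM : 0 ≤ M) (a b : ℝ) :
    volume {x : EuclideanSpace ℝ (Fin d) | ‖x‖ ≤ M ∧ (inner ℝ x v : ℝ) ∈ Ioo a b}
      ≤ ENNReal.ofReal ((2 * M) ^ (d - 1)) * ENNReal.ofReal (b - a) := by
  classical
  -- extend v to an orthonormal basis
  have hcard : Module.finrank ℝ (EuclideanSpace ℝ (Fin d)) = Fintype.card (Fin d) := by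
    simp [finrank_euclideanSpace]
  have horth : Orthonormal ℝ (({(⟨0, by omega⟩ : Fin d)} : Set (Fin d)).domRestrict
      (fun _ => v)) := by
    constructor
    · intro i; exact hv
    · intro i j hij
      exact absurd (Subtype.ext (i.2.trans j.2.symm)) hij
  obtain ⟨B, hB⟩ := horth.exists_orthonormalBasis_extension_of_card_eq hcard
  have hB0 : B ⟨0, by omega⟩ = v := hB _ rfl
  -- move to coordinates
  set W : Set (EuclideanSpace ℝ (Fin d)) :=
    (MeasurableEquiv.toLp 2 (Fin d → ℝ)).symm ⁻¹' (Set.pi Set.univ (fun j : Fin d =>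
        if j = (⟨0, by omega⟩ : Fin d) then Ioo a b else Icc (-M) M)) with hW
  have hsub : {x : EuclideanSpace ℝ (Fin d) | ‖x‖ ≤ M ∧ (inner ℝ x v : ℝ) ∈ Ioo a b}
      ⊆ B.repr ⁻¹' W := by
    intro x hx
    simp only [Set.mem_preimage, hW, Set.mem_pi, Set.mem_univ, forall_true_left] at *
    have happ : ∀ (z : EuclideanSpace ℝ (Fin d)) (j : Fin d),
        (MeasurableEquiv.toLp 2 (Fin d → ℝ)).symm z j = z j := fun z j => rfl
    intro j
    rw [happ]
    by_cases hj : j = (⟨0, by omega⟩ : Fin d)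
    · rw [if_pos hj, hj]
      have : (B.repr x) ⟨0, by omega⟩ = (inner ℝ x v : ℝ) := by
        rw [B.repr_apply_apply, hB0, real_inner_comm]
      rw [this]
      exact hx.2
    · rw [if_neg hj]
      have h1 : |(B.repr x) j| ≤ M := le_trans (aux_coord _ j) (by
        rw [B.repr.norm_map]; exact hx.1)
      exact abs_le.mp h1
  calc volume {x : EuclideanSpace ℝ (Fin d) | ‖x‖ ≤ M ∧ (inner ℝ x v : ℝ) ∈ Ioo a b}
      ≤ volume (B.repr ⁻¹' W) := measure_mono hsub
    _ = volume W := by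
        refine (B.measurePreserving_repr).measure_preimage ?_
        refine (MeasurableSet.nullMeasurableSet ?_)
        exact (MeasurableEquiv.toLp 2 (Fin d → ℝ)).symm.measurable (by
          apply MeasurableSet.univ_pi
          intro j
          split <;> measurability)
    _ = volume (Set.pi Set.univ (fun j : Fin d =>
          if j = (⟨0, by omega⟩ : Fin d) then Ioo a b else Icc (-M) M)) := by
        rw [hW]
        refine (EuclideanSpace.volume_preserving_symm_measurableEquiv_toLp (Fin d)).measure_preimage ?_
        refine MeasurableSet.nullMeasurableSet ?_
        apply MeasurableSet.univ_pi
        intro j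
        split <;> measurability
    _ ≤ _ := aux_pi_box hd hM a b


private lemma aux_normsq {k : ℕ} (y : EuclideanSpace ℝ (Fin k)) : ‖y‖ ^ 2 = ∑ i, y i ^ 2 := by
  rw [EuclideanSpace.norm_eq, Real.sq_sqrt (Finset.sum_nonneg fun i _ => by positivity)]
  simp [Real.norm_eq_abs, sq_abs]

private lemma aux_2d (u w : ℝ) :
    volume {z : Fin 2 → ℝ | (∑ i, z i ^ 2) ∈ Ioo u w}
      ≤ ENNReal.ofReal Real.pi * ENNReal.ofReal (w - u) := by
  have hmes : Measurable fun z : Fin 2 → ℝ => ∑ i, z i ^ 2 := by fun_prop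
  have h0 : volume {z : Fin 2 → ℝ | (∑ i, z i ^ 2) ∈ Ioo u w}
      = volume {ζ : EuclideanSpace ℝ (Fin 2) | ‖ζ‖ ^ 2 ∈ Ioo u w} := by
    have hpre := (EuclideanSpace.volume_preserving_symm_measurableEquiv_toLp (Fin 2)).measure_preimage
      (s := {z : Fin 2 → ℝ | (∑ i, z i ^ 2) ∈ Ioo u w})
      ((show MeasurableSet {z : Fin 2 → ℝ | (∑ i, z i ^ 2) ∈ Ioo u w} from
        hmes measurableSet_Ioo).nullMeasurableSet)
    rw [← hpre]
    congr 1
    ext ζ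
    have happ : ∀ i, (MeasurableEquiv.toLp 2 (Fin 2 → ℝ)).symm ζ i = ζ i := fun _ => rfl
    simp only [Set.mem_preimage, Set.mem_setOf_eq, happ, aux_normsq]
  rw [h0]
  by_cases hw : w ≤ max u 0
  · have hempty : {ζ : EuclideanSpace ℝ (Fin 2) | ‖ζ‖ ^ 2 ∈ Ioo u w} = ∅ := by
      ext ζ
      simp only [Set.mem_setOf_eq, Set.mem_Ioo, Set.mem_empty_iff_false, iff_false, not_and]
      intro h1 h2
      rcases lt_max_iff.mp (lt_of_lt_of_le h2 hw) with h | h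
      · linarith
      · have := sq_nonneg ‖ζ‖; linarith
    rw [hempty, measure_empty]
    exact zero_le
  · push_neg at hw
    set u' := max u 0 with hu'
    have hu'0 : 0 ≤ u' := le_max_right u 0
    have hu'w : u' ≤ w := hw.le
    have hball : ∀ r : ℝ, 0 ≤ r →
        volume (Metric.ball (0 : EuclideanSpace ℝ (Fin 2)) (Real.sqrt r))
          = ENNReal.ofReal r * ENNReal.ofReal Real.pi := by
      intro r hr
      rw [EuclideanSpace.volume_ball]
      have hG : Real.Gamma ((Fintype.card (Fin 2) : ℝ) / 2 + 1) = 1 := by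
        rw [Fintype.card_fin]
        have h2 : ((2:ℕ):ℝ)/2 + 1 = 2 := by norm_num
        rw [h2, show (2:ℝ) = 1 + 1 by norm_num, Real.Gamma_add_one one_ne_zero, Real.Gamma_one,
          mul_one]
      rw [Fintype.card_fin] at hG ⊢
      rw [hG, Real.sq_sqrt Real.pi_nonneg, ← ENNReal.ofReal_pow (Real.sqrt_nonneg r),
        Real.sq_sqrt hr]
      norm_num
    have hsub : {ζ : EuclideanSpace ℝ (Fin 2) | ‖ζ‖ ^ 2 ∈ Ioo u w}
        ⊆ Metric.ball 0 (Real.sqrt w) \ Metric.ball 0 (Real.sqrt u') := by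
      intro ζ hζ
      obtain ⟨h1, h2⟩ := hζ
      constructor
      · rw [Metric.mem_ball, dist_zero_right]
        exact (Real.lt_sqrt (norm_nonneg ζ)).mpr h2
      · rw [Metric.mem_ball, dist_zero_right]
        intro hlt
        have := (Real.lt_sqrt (norm_nonneg ζ)).mp hlt
        rcases lt_max_iff.mp this with h | h
        · linarith
        · have := sq_nonneg ‖ζ‖; linarith
    calc volume {ζ : EuclideanSpace ℝ (Fin 2) | ‖ζ‖ ^ 2 ∈ Ioo u w}
        ≤ volume (Metric.ball 0 (Real.sqrt w) \ Metric.ball 0 (Real.sqrt u')) :=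
          measure_mono hsub
      _ = volume (Metric.ball (0 : EuclideanSpace ℝ (Fin 2)) (Real.sqrt w))
            - volume (Metric.ball (0 : EuclideanSpace ℝ (Fin 2)) (Real.sqrt u')) := by
          refine measure_diff (Metric.ball_subset_ball (Real.sqrt_le_sqrt hu'w))
            measurableSet_ball.nullMeasurableSet measure_ball_lt_top.ne
      _ = ENNReal.ofReal w * ENNReal.ofReal Real.pi
            - ENNReal.ofReal u' * ENNReal.ofReal Real.pi := by
          rw [hball w (le_trans hu'0 hu'w), hball u' hu'0]
      _ = ENNReal.ofReal (w - u') * ENNReal.ofReal Real.pi := by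
          rw [← ENNReal.sub_mul (fun _ _ => ofReal_ne_top), ENNReal.ofReal_sub _ hu'0]
      _ ≤ ENNReal.ofReal Real.pi * ENNReal.ofReal (w - u) := by
          rw [mul_comm]
          exact mul_le_mul_right (ENNReal.ofReal_le_ofReal (by
            have : u ≤ u' := le_max_left u 0
            linarith)) _

private lemma aux_pi_annulus {d : ℕ} (hd : 2 ≤ d) (q : Fin d → ℝ) {M : ℝ} (hM : 0 ≤ M)
    (a b : ℝ) :
    volume ({z : Fin d → ℝ | (∑ j, z j ^ 2) ∈ Ioo a b} ∩
        Set.pi {j : Fin d | 2 ≤ (j : ℕ)} (fun j => Icc (-M - q j) (M - q j)))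
      ≤ ENNReal.ofReal ((2 * M) ^ (d - 2)) *
        (ENNReal.ofReal Real.pi * ENNReal.ofReal (b - a)) := by
  classical
  set U := {z : Fin d → ℝ | (∑ j, z j ^ 2) ∈ Ioo a b} ∩
      Set.pi {j : Fin d | 2 ≤ (j : ℕ)} (fun j => Icc (-M - q j) (M - q j)) with hU
  have hUm : MeasurableSet U := by
    refine MeasurableSet.inter ?_ ?_
    · exact (show Measurable fun z : Fin d → ℝ => ∑ j, z j ^ 2 by fun_prop) measurableSet_Ioo
    · exact MeasurableSet.pi (Set.to_countable _) (fun j _ => measurableSet_Icc)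
  set e : Fin 2 ⊕ Fin (d - 2) ≃ Fin d := finSumFinEquiv.trans (finCongr (by omega)) with he
  have hval_inr : ∀ i : Fin (d - 2), ((e (Sum.inr i)) : ℕ) = 2 + (i : ℕ) := by
    intro i; simp [he]
  set F : ((Fin 2 → ℝ) × (Fin (d - 2) → ℝ)) → (Fin d → ℝ) :=
    fun zw => (MeasurableEquiv.piCongrLeft (fun _ : Fin d => ℝ) e)
      ((MeasurableEquiv.sumPiEquivProdPi (fun _ : Fin 2 ⊕ Fin (d - 2) => ℝ)).symm zw) with hF
  have hFmp : MeasurePreserving F volume volume :=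
    (volume_measurePreserving_piCongrLeft (fun _ : Fin d => ℝ) e).comp
      (volume_measurePreserving_sumPiEquivProdPi_symm (fun _ => ℝ))
  have hFl : ∀ (z : Fin 2 → ℝ) (w : Fin (d - 2) → ℝ) (k : Fin 2),
      F (z, w) (e (Sum.inl k)) = z k := by
    intro z w k
    exact Equiv.piCongrLeft_sumInl (fun _ => ℝ) e z w k
  have hFr : ∀ (z : Fin 2 → ℝ) (w : Fin (d - 2) → ℝ) (i : Fin (d - 2)),
      F (z, w) (e (Sum.inr i)) = w i := by
    intro z w i
    exact Equiv.piCongrLeft_sumInr (fun _ => ℝ) e z w i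
  set Box : Set (Fin (d - 2) → ℝ) :=
    Set.pi Set.univ (fun i => Icc (-M - q (e (Sum.inr i))) (M - q (e (Sum.inr i)))) with hBox
  have hBoxm : MeasurableSet Box := MeasurableSet.univ_pi (fun i => measurableSet_Icc)
  set V : Set ((Fin 2 → ℝ) × (Fin (d - 2) → ℝ)) :=
    {zw | ((∑ k, zw.1 k ^ 2) + ∑ i, zw.2 i ^ 2) ∈ Ioo a b} ∩ (Set.univ ×ˢ Box) with hV
  have hVm : MeasurableSet V := by
    refine MeasurableSet.inter ?_ (MeasurableSet.univ.prod hBoxm)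
    exact (show Measurable fun zw : (Fin 2 → ℝ) × (Fin (d - 2) → ℝ) =>
      (∑ k, zw.1 k ^ 2) + ∑ i, zw.2 i ^ 2 by fun_prop) measurableSet_Ioo
  have hsum : ∀ (z : Fin 2 → ℝ) (w : Fin (d - 2) → ℝ),
      (∑ j, F (z, w) j ^ 2) = (∑ k, z k ^ 2) + ∑ i, w i ^ 2 := by
    intro z w
    rw [← Equiv.sum_comp e (fun j => F (z, w) j ^ 2), Fintype.sum_sum_type]
    congr 1
    all_goals first
      | exact Finset.sum_congr rfl fun k _ => by rw [hFl]
      | exact Finset.sum_congr rfl fun i _ => by rw [hFr]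
  have hsub : F ⁻¹' U ⊆ V := by
    rintro ⟨z, w⟩ hzw
    obtain ⟨h1, h2⟩ := hzw
    constructor
    · show ((∑ k, z k ^ 2) + ∑ i, w i ^ 2) ∈ Ioo a b
      rw [← hsum z w]; exact h1
    · refine ⟨Set.mem_univ _, ?_⟩
      intro i _
      have hj : 2 ≤ ((e (Sum.inr i)) : ℕ) := by rw [hval_inr]; omega
      have := h2 (e (Sum.inr i)) hj
      rwa [hFr] at this
  have hUV : volume U ≤ volume V := by
    rw [← hFmp.measure_preimage hUm.nullMeasurableSet]
    exact measure_mono hsub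
  refine le_trans hUV ?_
  -- compute volume of V by slicing
  rw [Measure.volume_eq_prod, Measure.prod_apply_symm hVm]
  have hslice : ∀ w : Fin (d - 2) → ℝ,
      volume ((fun z => (z, w)) ⁻¹' V)
        ≤ Box.indicator (fun _ => ENNReal.ofReal Real.pi * ENNReal.ofReal (b - a)) w := by
    intro w
    by_cases hw : w ∈ Box
    · rw [Set.indicator_of_mem hw]
      have hsl : (fun z => (z, w)) ⁻¹' V
          ⊆ {z : Fin 2 → ℝ | (∑ k, z k ^ 2) ∈ Ioo (a - ∑ i, w i ^ 2) (b - ∑ i, w i ^ 2)} := by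
        intro z hz
        obtain ⟨hz1, _⟩ := hz
        obtain ⟨ha', hb'⟩ := hz1
        constructor <;> [linarith; linarith]
      refine le_trans (measure_mono hsl) (le_trans (aux_2d _ _) ?_)
      rw [show b - (∑ i, w i ^ 2) - (a - ∑ i, w i ^ 2) = b - a by ring]
    · rw [Set.indicator_of_notMem hw]
      have : (fun z => (z, w)) ⁻¹' V = ∅ := by
        ext z
        simp only [Set.mem_preimage, Set.mem_empty_iff_false, iff_false]
        intro hz
        exact hw hz.2.2
      rw [this, measure_empty]
  refine le_trans (lintegral_mono hslice) ?_
  rw [lintegral_indicator_const hBoxm]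
  have hBoxvol : volume Box = ENNReal.ofReal ((2 * M) ^ (d - 2)) := by
    rw [hBox, volume_pi_pi]
    have : ∀ i : Fin (d - 2),
        volume (Icc (-M - q (e (Sum.inr i))) (M - q (e (Sum.inr i)))) = ENNReal.ofReal (2 * M) := by
      intro i
      rw [Real.volume_Icc]
      congr 1; ring
    rw [Finset.prod_congr rfl fun i _ => this i, Finset.prod_const, Finset.card_univ,
      Fintype.card_fin, ← ENNReal.ofReal_pow (by positivity)]
  rw [hBoxvol, mul_comm]

private lemma aux_annulus {d : ℕ} (hd : 2 ≤ d) (q : EuclideanSpace ℝ (Fin d)) {M : ℝ}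
    (hM : 0 ≤ M) (a b : ℝ) :
    volume {x : EuclideanSpace ℝ (Fin d) | ‖x‖ ≤ M ∧ ‖x - q‖ ^ 2 ∈ Ioo a b}
      ≤ ENNReal.ofReal ((2 * M) ^ (d - 2)) *
        (ENNReal.ofReal Real.pi * ENNReal.ofReal (b - a)) := by
  classical
  have aux_normsq : ∀ {k : ℕ} (y : EuclideanSpace ℝ (Fin k)), ‖y‖ ^ 2 = ∑ i, y i ^ 2 := by
    intro k y
    rw [EuclideanSpace.norm_eq, Real.sq_sqrt (Finset.sum_nonneg fun i _ => by positivity)]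
    simp [Real.norm_eq_abs, sq_abs]
  have aux_coord : ∀ {k : ℕ} (y : EuclideanSpace ℝ (Fin k)) (j : Fin k), |y j| ≤ ‖y‖ := by
    intro k y j
    rw [EuclideanSpace.norm_eq, ← Real.sqrt_sq_eq_abs]
    apply Real.sqrt_le_sqrt
    have := Finset.single_le_sum (f := fun i => ‖y i‖ ^ 2)
      (fun i _ => by positivity) (Finset.mem_univ j)
    simpa [Real.norm_eq_abs, sq_abs] using this
  set S := {x : EuclideanSpace ℝ (Fin d) | ‖x‖ ≤ M ∧ ‖x - q‖ ^ 2 ∈ Ioo a b} with hS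
  set T := {y : EuclideanSpace ℝ (Fin d) | ‖y + q‖ ≤ M ∧ ‖y‖ ^ 2 ∈ Ioo a b} with hT
  have hSm : MeasurableSet S := by
    refine MeasurableSet.inter ?_ ?_
    · exact (show Measurable fun x : EuclideanSpace ℝ (Fin d) => ‖x‖ by fun_prop)
        measurableSet_Iic
    · exact (show Measurable fun x : EuclideanSpace ℝ (Fin d) => ‖x - q‖ ^ 2 by fun_prop)
        measurableSet_Ioo
  have hst : volume S = volume T := by
    have hmp : MeasurePreserving (fun y : EuclideanSpace ℝ (Fin d) => y + q) volume volume :=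
      measurePreserving_add_right volume q
    have hpre : (fun y : EuclideanSpace ℝ (Fin d) => y + q) ⁻¹' S = T := by
      ext y
      simp only [hS, hT, Set.mem_preimage, Set.mem_setOf_eq, add_sub_cancel_right]
    rw [← hpre, hmp.measure_preimage hSm.nullMeasurableSet]
  set U := {z : Fin d → ℝ | (∑ j, z j ^ 2) ∈ Ioo a b} ∩
      Set.pi {j : Fin d | 2 ≤ (j : ℕ)} (fun j => Icc (-M - q j) (M - q j)) with hU
  have hUm : MeasurableSet U := by
    refine MeasurableSet.inter ?_ ?_
    · exact (show Measurable fun z : Fin d → ℝ => ∑ j, z j ^ 2 by fun_prop) measurableSet_Ioo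
    · exact MeasurableSet.pi (Set.to_countable _) (fun j _ => measurableSet_Icc)
  have hTU : T ⊆ (MeasurableEquiv.toLp 2 (Fin d → ℝ)).symm ⁻¹' U := by
    intro y hy
    obtain ⟨hy1, hy2⟩ := hy
    have happ : ∀ j, (MeasurableEquiv.toLp 2 (Fin d → ℝ)).symm y j = y j := fun _ => rfl
    constructor
    · show (∑ j, (MeasurableEquiv.toLp 2 (Fin d → ℝ)).symm y j ^ 2) ∈ Ioo a b
      simp only [happ]
      rw [← aux_normsq y]
      exact hy2
    · intro j hj
      have h1 : |y j + q j| ≤ M := by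
        have h2 := aux_coord (y + q) j
        have h3 : (y + q) j = y j + q j := rfl
        rw [h3] at h2
        exact le_trans h2 hy1
      obtain ⟨hl, hr⟩ := abs_le.mp h1
      show (MeasurableEquiv.toLp 2 (Fin d → ℝ)).symm y j ∈ Icc (-M - q j) (M - q j)
      rw [happ]
      constructor <;> [linarith; linarith]
  calc volume S = volume T := hst
    _ ≤ volume ((MeasurableEquiv.toLp 2 (Fin d → ℝ)).symm ⁻¹' U) := measure_mono hTU
    _ = volume U := (EuclideanSpace.volume_preserving_symm_measurableEquiv_toLp
        (Fin d)).measure_preimage hUm.nullMeasurableSet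
    _ ≤ _ := aux_pi_annulus hd (fun j => q j) hM a b

/-- The closed cube `Q_{x,r} = ∏_j [x_j − r, x_j + r]`. -/
def cube {d : ℕ} (x : Ed d) (r : ℝ) : Set (Ed d) :=
  {y | ∀ j, y j ∈ Set.Icc (x j - r) (x j + r)}

set_option maxHeartbeats 2000000 in
/-- **Degree-one oscillatory integral estimate**: for `d ≥ 2`, `p > 1`, `γ̃ > 0`, `R > 0`
there is `Λ > 0` (depending only on `d`, `p`, `R`) such that for all `γ ∈ (0, γ̃)`,
`ε ∈ (0,1]`, `n ≥ 1`, `A ≠ 0`, `B, C ∈ ℝ`, `ι ∈ {±1}` and `P ∈ ℝ^d` with `|P| ≥ ε^γ`: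
`∫_{Q_{0,(2n+1)R}} |A + i(B + ε^{−γ̃}(|x|² + ι|x−P|² + C))|^{−p} dx
  ≤ Λ |A|^{1−p} n^{d−1} ε^{γ̃−γ}`. -/
theorem degree_one_oscillatory_estimate (d : ℕ) (hd : 2 ≤ d) (p : ℝ) (hp : 1 < p)
    (R : ℝ) (hR : 0 < R) :
    ∃ Λ > (0 : ℝ), ∀ γt : ℝ, 0 < γt → ∀ γ : ℝ, 0 < γ → γ < γt →
      ∀ ε : ℝ, 0 < ε → ε ≤ 1 → ∀ n : ℕ, 1 ≤ n →
      ∀ A : ℝ, A ≠ 0 → ∀ B C : ℝ, ∀ ι : ℝ, ι = 1 ∨ ι = -1 →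
      ∀ P : Ed d, ε ^ γ ≤ ‖P‖ →
      (∫ x in cube (0 : Ed d) ((2 * (n : ℝ) + 1) * R),
          ‖(A : ℂ) + Complex.I *
              ((B + ε ^ (-γt) * (‖x‖ ^ 2 + ι * ‖x - P‖ ^ 2 + C) : ℝ) : ℂ)‖ ^ (-p))
        ≤ Λ * |A| ^ (1 - p) * (n : ℝ) ^ (d - 1) * ε ^ (γt - γ) := by
  classical
  obtain ⟨CpE, hCpE⟩ : ∃ CpE : ℝ≥0∞,
      CpE = ∫⁻ x : ℝ, ENNReal.ofReal ((1 + x ^ 2) ^ (-(p / 2))) := ⟨_, rfl⟩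
  have hCpE_fin : CpE < ⊤ := hCpE ▸ aux_cp_finite hp
  set Cp : ℝ := CpE.toReal with hCp
  have hCp0 : 0 ≤ Cp := ENNReal.toReal_nonneg
  have hCpb : (∫⁻ x : ℝ, ENNReal.ofReal ((1 + x ^ 2) ^ (-(p / 2)))) ≤ ENNReal.ofReal Cp := by
    rw [← hCpE, hCp, ENNReal.ofReal_toReal hCpE_fin.ne]
  have hd0 : (0:ℝ) < d := by exact_mod_cast (by omega : 0 < d)
  have hsd : 0 < Real.sqrt d := Real.sqrt_pos.mpr hd0
  have hsd1 : 1 ≤ Real.sqrt d := by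
    rw [show (1:ℝ) = Real.sqrt 1 from (Real.sqrt_one).symm]
    exact Real.sqrt_le_sqrt (by exact_mod_cast (by omega : 1 ≤ d))
  refine ⟨(6 * Real.sqrt d * R) ^ (d - 1) * (1 + Real.pi / (2 * R)) * (Cp + 1), ?_, ?_⟩
  · have h1 : (0:ℝ) < 6 * Real.sqrt d * R := by positivity
    have h2 : (0:ℝ) < (6 * Real.sqrt d * R) ^ (d - 1) := pow_pos h1 _
    have h3 : (0:ℝ) < 1 + Real.pi / (2 * R) := by positivity
    have h4 : (0:ℝ) < Cp + 1 := by linarith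
    positivity
  intro γt hγt γ hγ hγγt ε hε hε1 n hn A hA B C ι hι P hPnorm
  set Λ : ℝ := (6 * Real.sqrt d * R) ^ (d - 1) * (1 + Real.pi / (2 * R)) * (Cp + 1) with hΛ
  set L : ℝ := (2 * (n : ℝ) + 1) * R with hLdef
  have hn1 : (1:ℝ) ≤ (n:ℝ) := by exact_mod_cast hn
  have hL : 0 < L := by
    rw [hLdef]
    exact mul_pos (by linarith) hR
  set M : ℝ := Real.sqrt d * L with hM
  have hM0 : (0:ℝ) ≤ M := by positivity
  have hRL : R ≤ L := by
    rw [hLdef]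
    calc R = 1 * R := (one_mul R).symm
      _ ≤ (2 * (n:ℝ) + 1) * R := mul_le_mul_of_nonneg_right (by linarith) hR.le
  have hRM : R ≤ M := by
    calc R ≤ L := hRL
      _ = 1 * L := (one_mul L).symm
      _ ≤ Real.sqrt d * L := mul_le_mul_of_nonneg_right hsd1 hL.le
      _ = M := hM.symm
  have hεγ : (0:ℝ) < ε ^ γ := Real.rpow_pos_of_pos hε _
  have hP0 : P ≠ 0 := by
    intro h
    rw [h, norm_zero] at hPnorm
    linarith
  have hPn : (0:ℝ) < ‖P‖ := lt_of_lt_of_le hεγ hPnorm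
  have hE2 : (0:ℝ) < ε ^ γt := Real.rpow_pos_of_pos hε _
  have hE1 : (0:ℝ) < ε ^ (-γt) := Real.rpow_pos_of_pos hε _
  have hprod : ε ^ (-γt) * ε ^ γt = 1 := by
    rw [← Real.rpow_add hε]; simp
  have hεmono : ε ^ γt ≤ ε ^ (γt - γ) :=
    Real.rpow_le_rpow_of_exponent_ge hε hε1 (by linarith)
  have hεsplit : ε ^ (γt - γ) = ε ^ γt * ε ^ (-γ) := by
    rw [← Real.rpow_add hε]; ring_nf
  have hXE : ∀ z : ℝ, ε ^ (-γt) * z * ε ^ γt = z := fun z => by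
    rw [mul_comm (ε ^ (-γt)) z, mul_assoc, hprod, mul_one]
  have hE2X : ∀ z : ℝ, z * ε ^ γt * ε ^ (-γt) = z := fun z => by
    rw [mul_assoc, mul_comm (ε ^ γt), hprod, mul_one]
  have hεγinv : ‖P‖⁻¹ ≤ ε ^ (-γ) := by
    rw [Real.rpow_neg hε.le]
    exact inv_anti₀ hεγ hPnorm
  set y : Ed d → ℝ := fun x => B + ε ^ (-γt) * (‖x‖ ^ 2 + ι * ‖x - P‖ ^ 2 + C) with hy
  have hym : Measurable y := by
    apply Measurable.add measurable_const
    apply Measurable.const_mul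
    fun_prop
  have hGm : Measurable fun x : Ed d => (A ^ 2 + (y x) ^ 2) ^ (-(p / 2)) := by fun_prop
  -- cube is measurable and contained in the ball of radius M
  have hcubem : MeasurableSet (cube (0 : Ed d) L) := by
    have : cube (0 : Ed d) L = ⋂ j, (fun x : Ed d => x j) ⁻¹'
        (Icc ((0 : Ed d) j - L) ((0 : Ed d) j + L)) := by
      ext x; simp [cube, Set.mem_iInter]
    rw [this]
    exact MeasurableSet.iInter fun j => (by fun_prop : Measurable fun x : Ed d => x j) measurableSet_Icc
  have hcube_norm : ∀ x ∈ cube (0 : Ed d) L, ‖x‖ ≤ M := by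
    intro x hx
    have hcoord : ∀ j, |x j| ≤ L := by
      intro j
      have := hx j
      rw [show (0 : Ed d) j = 0 from rfl] at this
      rw [abs_le]
      exact ⟨by linarith [this.1], by linarith [this.2]⟩
    rw [EuclideanSpace.norm_eq]
    have hsum : (∑ j, ‖x j‖ ^ 2) ≤ (d : ℝ) * L ^ 2 := by
      calc (∑ j, ‖x j‖ ^ 2) ≤ ∑ _j : Fin d, L ^ 2 := by
            apply Finset.sum_le_sum
            intro j _
            rw [Real.norm_eq_abs]
            exact pow_le_pow_left₀ (abs_nonneg _) (hcoord j) 2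
        _ = (d : ℝ) * L ^ 2 := by
            rw [Finset.sum_const, Finset.card_univ, Fintype.card_fin, nsmul_eq_mul]
    calc Real.sqrt (∑ j, ‖x j‖ ^ 2) ≤ Real.sqrt ((d : ℝ) * L ^ 2) := Real.sqrt_le_sqrt hsum
      _ = M := by
          rw [hM, Real.sqrt_mul hd0.le, Real.sqrt_sq hL.le]
  -- pass to the lower Lebesgue integral
  have hint_eq : (∫ x in cube (0 : Ed d) L,
      ‖(A : ℂ) + Complex.I *
          ((B + ε ^ (-γt) * (‖x‖ ^ 2 + ι * ‖x - P‖ ^ 2 + C) : ℝ) : ℂ)‖ ^ (-p))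
      = (∫⁻ x in cube (0 : Ed d) L,
          ENNReal.ofReal ((A ^ 2 + (y x) ^ 2) ^ (-(p / 2)))).toReal := by
    rw [show (fun x : Ed d => ‖(A : ℂ) + Complex.I *
        ((B + ε ^ (-γt) * (‖x‖ ^ 2 + ι * ‖x - P‖ ^ 2 + C) : ℝ) : ℂ)‖ ^ (-p))
        = fun x : Ed d => (A ^ 2 + (y x) ^ 2) ^ (-(p / 2)) from
      funext fun x => aux_norm A (y x) p]
    exact integral_eq_lintegral_of_nonneg_ae
      (ae_of_all _ fun x => by positivity) hGm.aestronglyMeasurable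
  rw [hint_eq]
  have hRHS0 : 0 ≤ Λ * |A| ^ (1 - p) * (n : ℝ) ^ (d - 1) * ε ^ (γt - γ) := by
    have h1 : (0:ℝ) < 6 * Real.sqrt d * R := by positivity
    have h2 : (0:ℝ) ≤ Λ := by
      rw [hΛ]; positivity
    positivity
  refine ENNReal.toReal_le_of_le_ofReal hRHS0 ?_
  -- the constant κ'
  set κ : ℝ≥0∞ := ENNReal.ofReal ((2 * M) ^ (d - 1) * ((1 + Real.pi / (2 * R)) * ε ^ (γt - γ)))
    with hκ
  -- the layer-cake bound
  have hμ : ∀ t ∈ Ioi (0:ℝ),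
      (volume.restrict (cube (0 : Ed d) L)) {x : Ed d | t < (A ^ 2 + (y x) ^ 2) ^ (-(p / 2))}
        ≤ κ * volume {s : ℝ | t < (A ^ 2 + s ^ 2) ^ (-(p / 2))} := by
    intro t ht
    rw [Set.mem_Ioi] at ht
    have hAabs : (0:ℝ) < |A| := abs_pos.mpr hA
    have hA2 : (0:ℝ) < A ^ 2 := by rw [← sq_abs]; positivity
    set c : ℝ := t ^ (-(2 / p)) with hc
    set r : ℝ := Real.sqrt (c - A ^ 2) with hr
    have hr0 : 0 ≤ r := Real.sqrt_nonneg _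
    have hiff : ∀ w : ℝ, (t < (A ^ 2 + w ^ 2) ^ (-(p / 2))) ↔ w ∈ Ioo (-r) r := by
      intro w
      rw [aux_lt_iff (by linarith : (0:ℝ) < p) ht (by nlinarith : (0:ℝ) < A ^ 2 + w ^ 2)]
      exact Set.ext_iff.mp (aux_ioo A c) w
    -- 1D volume
    have h1d : volume {s : ℝ | t < (A ^ 2 + s ^ 2) ^ (-(p / 2))} = ENNReal.ofReal (2 * r) := by
      have : {s : ℝ | t < (A ^ 2 + s ^ 2) ^ (-(p / 2))} = Ioo (-r) r := by
        ext s; exact hiff s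
      rw [this, Real.volume_Ioo, show r - -r = 2 * r by ring]
    rw [h1d]
    -- the sublevel set of the phase
    have hmeas : MeasurableSet {x : Ed d | t < (A ^ 2 + (y x) ^ 2) ^ (-(p / 2))} :=
      hGm measurableSet_Ioi
    rw [Measure.restrict_apply hmeas]
    set a₀ : ℝ := (-r - B) * ε ^ γt with ha₀
    set b₀ : ℝ := (r - B) * ε ^ γt with hb₀
    have hmem : ∀ x : Ed d, (t < (A ^ 2 + (y x) ^ 2) ^ (-(p / 2))) ↔
        (‖x‖ ^ 2 + ι * ‖x - P‖ ^ 2 + C) ∈ Ioo a₀ b₀ := by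
      intro x
      rw [hiff (y x)]
      set φ := ‖x‖ ^ 2 + ι * ‖x - P‖ ^ 2 + C with hφ
      have hyx : y x = B + ε ^ (-γt) * φ := rfl
      constructor
      · rintro ⟨h1, h2⟩
        rw [hyx] at h1 h2
        constructor
        · rw [ha₀]
          have h3 : -r - B < ε ^ (-γt) * φ := by linarith
          have h4 := mul_lt_mul_of_pos_right h3 hE2
          rwa [hXE φ] at h4
        · rw [hb₀]
          have h3 : ε ^ (-γt) * φ < r - B := by linarith
          have h4 := mul_lt_mul_of_pos_right h3 hE2
          rwa [hXE φ] at h4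
      · rintro ⟨h1, h2⟩
        rw [ha₀] at h1; rw [hb₀] at h2
        rw [hyx]
        have h6 : φ * ε ^ (-γt) = ε ^ (-γt) * φ := mul_comm _ _
        constructor
        · have h4 := mul_lt_mul_of_pos_right h1 hE1
          rw [hE2X] at h4
          linarith [h4, h6]
        · have h4 := mul_lt_mul_of_pos_right h2 hE1
          rw [hE2X] at h4
          linarith [h4, h6]
    have hlen : b₀ - a₀ = 2 * r * ε ^ γt := by rw [ha₀, hb₀]; ring
    -- case split on ι
    rcases hι with hι | hι
    · -- ι = 1 : annulus case
      set q : Ed d := (2:ℝ)⁻¹ • P with hq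
      have hgeom : ∀ x : Ed d, ‖x‖ ^ 2 + ι * ‖x - P‖ ^ 2 + C
          = 2 * ‖x - q‖ ^ 2 + (‖P‖ ^ 2 / 2 + C) := by
        intro x
        rw [hι, one_mul, hq]
        have e1 : ‖x - P‖ ^ 2 = ‖x‖ ^ 2 - 2 * (inner ℝ x P : ℝ) + ‖P‖ ^ 2 :=
          norm_sub_sq_real x P
        have e2 : ‖x - (2:ℝ)⁻¹ • P‖ ^ 2
            = ‖x‖ ^ 2 - 2 * ((2:ℝ)⁻¹ * (inner ℝ x P : ℝ)) + (2⁻¹ * ‖P‖) ^ 2 := by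
          have := norm_sub_sq_real x ((2:ℝ)⁻¹ • P)
          rwa [real_inner_smul_right, norm_smul, Real.norm_eq_abs,
            abs_of_pos (by norm_num : (0:ℝ) < (2:ℝ)⁻¹)] at this
        rw [e1, e2]; ring
      have hsub : {x : Ed d | t < (A ^ 2 + (y x) ^ 2) ^ (-(p / 2))} ∩ cube (0 : Ed d) L
          ⊆ {x : Ed d | ‖x‖ ≤ M ∧ ‖x - q‖ ^ 2 ∈
              Ioo ((a₀ - (‖P‖ ^ 2 / 2 + C)) / 2) ((b₀ - (‖P‖ ^ 2 / 2 + C)) / 2)} := by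
        rintro x ⟨hx1, hx2⟩
        refine ⟨hcube_norm x hx2, ?_⟩
        have := (hmem x).mp hx1
        rw [hgeom x] at this
        obtain ⟨ha', hb'⟩ := this
        constructor
        · rw [div_lt_iff₀ (by norm_num : (0:ℝ) < 2)]; linarith
        · rw [lt_div_iff₀ (by norm_num : (0:ℝ) < 2)]; linarith
      calc volume ({x : Ed d | t < (A ^ 2 + (y x) ^ 2) ^ (-(p / 2))} ∩ cube (0 : Ed d) L)
          ≤ volume {x : Ed d | ‖x‖ ≤ M ∧ ‖x - q‖ ^ 2 ∈
              Ioo ((a₀ - (‖P‖ ^ 2 / 2 + C)) / 2) ((b₀ - (‖P‖ ^ 2 / 2 + C)) / 2)} :=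
            measure_mono hsub
        _ ≤ ENNReal.ofReal ((2 * M) ^ (d - 2)) *
              (ENNReal.ofReal Real.pi * ENNReal.ofReal
                ((b₀ - (‖P‖ ^ 2 / 2 + C)) / 2 - (a₀ - (‖P‖ ^ 2 / 2 + C)) / 2)) :=
            aux_annulus hd q hM0 _ _
        _ ≤ κ * ENNReal.ofReal (2 * r) := by
            rw [hκ, ← ENNReal.ofReal_mul (by positivity), ← ENNReal.ofReal_mul (by positivity),
              ← ENNReal.ofReal_mul (by positivity)]
            apply ENNReal.ofReal_le_ofReal
            have hlen2 : (b₀ - (‖P‖ ^ 2 / 2 + C)) / 2 - (a₀ - (‖P‖ ^ 2 / 2 + C)) / 2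
                = r * ε ^ γt := by rw [ha₀, hb₀]; ring
            rw [hlen2]
            have hpow : (2 * M) ^ (d - 1) = (2 * M) ^ (d - 2) * (2 * M) := by
              rw [← pow_succ]; congr 1; omega
            rw [hpow]
            have hπ : (0:ℝ) ≤ Real.pi := Real.pi_nonneg
            have h2M : 2 * R ≤ 2 * M := by linarith
            have hfact : Real.pi * (r * ε ^ γt)
                ≤ 2 * M * ((1 + Real.pi / (2 * R)) * ε ^ (γt - γ)) * (2 * r) := by
              have hh1 : Real.pi * (r * ε ^ γt) ≤ Real.pi * (r * ε ^ (γt - γ)) := by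
                apply mul_le_mul_of_nonneg_left _ hπ
                exact mul_le_mul_of_nonneg_left hεmono hr0
              have hh2 : Real.pi ≤ 2 * M * (1 + Real.pi / (2 * R)) := by
                have he : 2 * R * (1 + Real.pi / (2 * R)) = 2 * R + Real.pi := by
                  field_simp
                have hmle : 2 * R * (1 + Real.pi / (2 * R)) ≤ 2 * M * (1 + Real.pi / (2 * R)) :=
                  mul_le_mul_of_nonneg_right h2M (by positivity)
                rw [he] at hmle
                linarith
              have hE' : (0:ℝ) ≤ ε ^ (γt - γ) := (Real.rpow_pos_of_pos hε _).le
              calc Real.pi * (r * ε ^ γt) ≤ Real.pi * (r * ε ^ (γt - γ)) := hh1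
                _ = Real.pi * ε ^ (γt - γ) * r := by ring
                _ ≤ (2 * M * (1 + Real.pi / (2 * R))) * ε ^ (γt - γ) * r := by
                    apply mul_le_mul_of_nonneg_right _ hr0
                    exact mul_le_mul_of_nonneg_right hh2 hE'
                _ ≤ (2 * M * (1 + Real.pi / (2 * R))) * ε ^ (γt - γ) * (2 * r) := by
                    apply mul_le_mul_of_nonneg_left (by linarith)
                    positivity
                _ = 2 * M * ((1 + Real.pi / (2 * R)) * ε ^ (γt - γ)) * (2 * r) := by ring
            calc (2 * M) ^ (d - 2) * (Real.pi * (r * ε ^ γt))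
                ≤ (2 * M) ^ (d - 2) *
                    (2 * M * ((1 + Real.pi / (2 * R)) * ε ^ (γt - γ)) * (2 * r)) :=
                  mul_le_mul_of_nonneg_left hfact (by positivity)
              _ = (2 * M) ^ (d - 2) * (2 * M) * ((1 + Real.pi / (2 * R)) * ε ^ (γt - γ)) *
                  (2 * r) := by ring
    · -- ι = -1 : slab case
      set v : Ed d := ‖P‖⁻¹ • P with hv
      have hvnorm : ‖v‖ = 1 := norm_smul_inv_norm hP0
      have hinner : ∀ x : Ed d, (inner ℝ x P : ℝ) = ‖P‖ * (inner ℝ x v : ℝ) := by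
        intro x
        rw [hv, real_inner_smul_right, ← mul_assoc, mul_inv_cancel₀ hPn.ne', one_mul]
      have hgeom : ∀ x : Ed d, ‖x‖ ^ 2 + ι * ‖x - P‖ ^ 2 + C
          = 2 * (‖P‖ * (inner ℝ x v : ℝ)) - ‖P‖ ^ 2 + C := by
        intro x
        rw [hι]
        have e1 : ‖x - P‖ ^ 2 = ‖x‖ ^ 2 - 2 * (inner ℝ x P : ℝ) + ‖P‖ ^ 2 :=
          norm_sub_sq_real x P
        rw [← hinner x, e1]; ring
      set a₁ : ℝ := (a₀ + ‖P‖ ^ 2 - C) / (2 * ‖P‖) with ha₁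
      set b₁ : ℝ := (b₀ + ‖P‖ ^ 2 - C) / (2 * ‖P‖) with hb₁
      have hsub : {x : Ed d | t < (A ^ 2 + (y x) ^ 2) ^ (-(p / 2))} ∩ cube (0 : Ed d) L
          ⊆ {x : Ed d | ‖x‖ ≤ M ∧ (inner ℝ x v : ℝ) ∈ Ioo a₁ b₁} := by
        rintro x ⟨hx1, hx2⟩
        refine ⟨hcube_norm x hx2, ?_⟩
        have := (hmem x).mp hx1
        rw [hgeom x] at this
        obtain ⟨ha', hb'⟩ := this
        constructor
        · rw [ha₁, div_lt_iff₀ (by positivity : (0:ℝ) < 2 * ‖P‖)]; linarith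
        · rw [hb₁, lt_div_iff₀ (by positivity : (0:ℝ) < 2 * ‖P‖)]; linarith
      calc volume ({x : Ed d | t < (A ^ 2 + (y x) ^ 2) ^ (-(p / 2))} ∩ cube (0 : Ed d) L)
          ≤ volume {x : Ed d | ‖x‖ ≤ M ∧ (inner ℝ x v : ℝ) ∈ Ioo a₁ b₁} := measure_mono hsub
        _ ≤ ENNReal.ofReal ((2 * M) ^ (d - 1)) * ENNReal.ofReal (b₁ - a₁) :=
            aux_slab (by omega) v hvnorm hM0 a₁ b₁
        _ ≤ κ * ENNReal.ofReal (2 * r) := by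
            rw [hκ, ← ENNReal.ofReal_mul (by positivity), ← ENNReal.ofReal_mul (by positivity)]
            apply ENNReal.ofReal_le_ofReal
            have hb₁a₁ : b₁ - a₁ = r * ε ^ γt * ‖P‖⁻¹ := by
              rw [ha₁, hb₁, ha₀, hb₀]
              field_simp
              ring
            rw [hb₁a₁]
            have hstep : r * ε ^ γt * ‖P‖⁻¹ ≤ r * ε ^ (γt - γ) := by
              rw [hεsplit]
              calc r * ε ^ γt * ‖P‖⁻¹ ≤ r * ε ^ γt * ε ^ (-γ) := by
                    apply mul_le_mul_of_nonneg_left hεγinv (by positivity)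
                _ = r * (ε ^ γt * ε ^ (-γ)) := by ring
            have hfin : (2 * M) ^ (d - 1) * (r * ε ^ γt * ‖P‖⁻¹)
                ≤ (2 * M) ^ (d - 1) * ((1 + Real.pi / (2 * R)) * ε ^ (γt - γ)) * (2 * r) := by
              calc (2 * M) ^ (d - 1) * (r * ε ^ γt * ‖P‖⁻¹)
                  ≤ (2 * M) ^ (d - 1) * (r * ε ^ (γt - γ)) :=
                    mul_le_mul_of_nonneg_left hstep (by positivity)
                _ = (2 * M) ^ (d - 1) * ε ^ (γt - γ) * r := by ring
                _ ≤ (2 * M) ^ (d - 1) * ((1 + Real.pi / (2 * R)) * ε ^ (γt - γ)) * (2 * r) := by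
                    have hx1 : (0:ℝ) ≤ (2 * M) ^ (d - 1) := by positivity
                    have hx2 : (0:ℝ) ≤ ε ^ (γt - γ) := (Real.rpow_pos_of_pos hε _).le
                    have hstep1 : (2 * M) ^ (d - 1) * ε ^ (γt - γ)
                        ≤ (2 * M) ^ (d - 1) * ((1 + Real.pi / (2 * R)) * ε ^ (γt - γ)) := by
                      apply mul_le_mul_of_nonneg_left _ hx1
                      refine le_mul_of_one_le_left hx2 ?_
                      have : (0:ℝ) ≤ Real.pi / (2 * R) := by positivity
                      linarith
                    calc (2 * M) ^ (d - 1) * ε ^ (γt - γ) * r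
                        ≤ (2 * M) ^ (d - 1) * ((1 + Real.pi / (2 * R)) * ε ^ (γt - γ)) * r :=
                          mul_le_mul_of_nonneg_right hstep1 hr0
                      _ ≤ (2 * M) ^ (d - 1) * ((1 + Real.pi / (2 * R)) * ε ^ (γt - γ)) *
                          (2 * r) := by
                          apply mul_le_mul_of_nonneg_left (by linarith)
                          positivity
            exact hfin
  -- assemble via layer cake
  have hmeas1d : Measurable fun s : ℝ => (A ^ 2 + s ^ 2) ^ (-(p / 2)) := by fun_prop
  have hanti : Antitone fun t : ℝ => volume {s : ℝ | t < (A ^ 2 + s ^ 2) ^ (-(p / 2))} := by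
    intro t1 t2 h12
    exact measure_mono fun s hs => lt_of_le_of_lt h12 hs
  have hantimeas : Measurable fun t : ℝ =>
      volume {s : ℝ | t < (A ^ 2 + s ^ 2) ^ (-(p / 2))} := hanti.measurable
  calc (∫⁻ x in cube (0 : Ed d) L, ENNReal.ofReal ((A ^ 2 + (y x) ^ 2) ^ (-(p / 2))))
      = ∫⁻ t in Ioi (0:ℝ), (volume.restrict (cube (0 : Ed d) L))
          {x : Ed d | t < (A ^ 2 + (y x) ^ 2) ^ (-(p / 2))} :=
        lintegral_eq_lintegral_meas_lt _ (ae_of_all _ fun x => by positivity)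
          hGm.aemeasurable
    _ ≤ ∫⁻ t in Ioi (0:ℝ), κ * volume {s : ℝ | t < (A ^ 2 + s ^ 2) ^ (-(p / 2))} :=
        setLIntegral_mono (hantimeas.const_mul κ) hμ
    _ = κ * ∫⁻ t in Ioi (0:ℝ), volume {s : ℝ | t < (A ^ 2 + s ^ 2) ^ (-(p / 2))} :=
        lintegral_const_mul κ hantimeas
    _ = κ * ∫⁻ s : ℝ, ENNReal.ofReal ((A ^ 2 + s ^ 2) ^ (-(p / 2))) := by
        rw [← lintegral_eq_lintegral_meas_lt volume (ae_of_all _ fun s => by positivity)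
          hmeas1d.aemeasurable]
    _ ≤ κ * ENNReal.ofReal (|A| ^ (1 - p) * Cp) :=
        mul_le_mul_right (aux_G_int hp hA hCp0 hCpb) κ
    _ ≤ ENNReal.ofReal (Λ * |A| ^ (1 - p) * (n : ℝ) ^ (d - 1) * ε ^ (γt - γ)) := by
        rw [hκ, ← ENNReal.ofReal_mul (by positivity)]
        apply ENNReal.ofReal_le_ofReal
        have hA1p : (0:ℝ) ≤ |A| ^ (1 - p) := Real.rpow_nonneg (abs_nonneg A) _
        have h2M6 : 2 * M ≤ 6 * Real.sqrt d * R * (n:ℝ) := by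
          rw [hM, hLdef]
          have h1 : 2 * (2 * (n:ℝ) + 1) ≤ 6 * (n:ℝ) := by linarith
          have h2 : Real.sqrt d * R * (2 * (2 * (n:ℝ) + 1)) ≤ Real.sqrt d * R * (6 * (n:ℝ)) :=
            mul_le_mul_of_nonneg_left h1 (by positivity)
          calc 2 * (Real.sqrt d * ((2 * (n:ℝ) + 1) * R))
              = Real.sqrt d * R * (2 * (2 * (n:ℝ) + 1)) := by ring
            _ ≤ Real.sqrt d * R * (6 * (n:ℝ)) := h2
            _ = 6 * Real.sqrt d * R * (n:ℝ) := by ring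
        have hpowle : (2 * M) ^ (d - 1) ≤ (6 * Real.sqrt d * R) ^ (d - 1) * (n:ℝ) ^ (d - 1) := by
          rw [← mul_pow]
          exact pow_le_pow_left₀ (by positivity) h2M6 (d - 1)
        have hCple : Cp ≤ Cp + 1 := by linarith
        calc (2 * M) ^ (d - 1) * ((1 + Real.pi / (2 * R)) * ε ^ (γt - γ)) *
              (|A| ^ (1 - p) * Cp)
            ≤ ((6 * Real.sqrt d * R) ^ (d - 1) * (n:ℝ) ^ (d - 1)) *
              ((1 + Real.pi / (2 * R)) * ε ^ (γt - γ)) * (|A| ^ (1 - p) * (Cp + 1)) := by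
              apply mul_le_mul
              · exact mul_le_mul_of_nonneg_right hpowle (by positivity)
              · exact mul_le_mul_of_nonneg_left hCple hA1p
              · positivity
              · positivity
          _ = Λ * |A| ^ (1 - p) * (n : ℝ) ^ (d - 1) * ε ^ (γt - γ) := by
              rw [hΛ]; ring
end
end

section
/- Higher-degree oscillatory integral estimate (nondegenerate case): let d ≥ 2, p > 1, γ̃ > 0, R > 0 and i ∈ {2,3,4}. There exists Λ > 0, depending only on d, p and R, such that the following holds for every ε ∈ (0,1] and every integer n ≥ 1. Let ι_1,…,ι_5 ∈ {−1,+1}, let ι_j^{j'} ∈ {−1,0,+1} for j ∈ {i+1,…,5} and j' ∈ {1,…,i}, let A ∈ ℝ with A ≠ 0, let B, C ∈ ℝ, and let P_j ∈ Q_{0,(2n+1)R} for each j ∈ {i+1,…,5}. Define Φ(x_1,…,x_i) := ∑_{j=1}^{i} ι_j |x_j|² + ∑_{j=i+1}^{5} ι_j |∑_{j'=1}^{i} ι_j^{j'} x_{j'} − P_j|². If the coefficient ι_1 + ∑_{j∈{i+1,…,5} with ι_j^1 ≠ 0} ι_j of |x_1|² in Φ is nonzero, then ∫_{(Q_{0,(2n+1)R})^i}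 |A + i(B + ε^{−γ̃}(Φ(x_1,…,x_i) + C))|^{−p} dx_1⋯dx_i ≤ Λ |A|^{1−p} n^{id−2} ε^{γ̃}. -/
open MeasureTheory

open scoped Classical

noncomputable section

open Real Set
open scoped ENNReal

abbrev E2 := EuclideanSpace ℝ (Fin 2)


lemma normE2_sq (u : E2) : ‖u‖^2 = (u 0)^2 + (u 1)^2 := by
  rw [EuclideanSpace.norm_eq, Real.sq_sqrt (by positivity)]
  simp [Fin.sum_univ_two, sq_abs]

lemma volE2_ball (r : ℝ) : volume (Metric.ball (0:E2) r) =
    ENNReal.ofReal r ^ 2 * ENNReal.ofReal π := by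
  rw [EuclideanSpace.volume_ball]
  norm_num [Real.sq_sqrt Real.pi_nonneg, Real.Gamma_two]

lemma core_radial {p A a : ℝ} (c' : ℝ) (hp : 1 < p) (hA : A ≠ 0) (ha : a ≠ 0) :
    ∫⁻ u : E2, ENNReal.ofReal ((A^2 + (a*‖u‖^2 + c')^2) ^ (-(p/2))) ≤
      ENNReal.ofReal (2*π*(p/(p-1)) * |A|^(1-p) / |a|) := by
  have hp0 : (0:ℝ) < p := by linarith
  have hA2 : (0:ℝ) < A^2 := by positivity
  have hbase : ∀ u : E2, 0 < A^2 + (a*‖u‖^2 + c')^2 := fun u => by positivity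
  set H : E2 → ℝ := fun u => (A^2 + (a*‖u‖^2 + c')^2) ^ (-(p/2)) with hH
  have hHm : Measurable H := by fun_prop
  set T0 : ℝ := |A| ^ (-p) with hT0
  have hT0pos : 0 < T0 := rpow_pos_of_pos (abs_pos.mpr hA) _
  rw [lintegral_eq_lintegral_meas_lt volume
    (Filter.Eventually.of_forall fun u => rpow_nonneg (hbase u).le _) hHm.aemeasurable]
  have key : ∀ t ∈ Ioi (0:ℝ), volume {u : E2 | t < H u} ≤
      (Ioo (0:ℝ) T0).indicator
        (fun t => ENNReal.ofReal (2*π/|a|) * ENNReal.ofReal (t ^ (-(1/p)))) t := by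
    intro t ht
    simp only [mem_Ioi] at ht
    have hsub : {u : E2 | t < H u} ⊆ {u : E2 | A^2 + (a*‖u‖^2 + c')^2 < t ^ (-(2/p))} := by
      intro u hu
      simp only [mem_setOf_eq] at hu ⊢
      have h1 : (t ^ (-(2/p))) ^ (-(p/2)) = t := by
        rw [← Real.rpow_mul ht.le, show -(2/p) * -(p/2) = 1 by field_simp, Real.rpow_one]
      exact (Real.rpow_lt_rpow_iff_of_neg (rpow_pos_of_pos ht _) (hbase u)
        (by nlinarith : -(p/2) < 0)).mp (by rw [h1]; exact hu)
    by_cases htT : t < T0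
    · rw [Set.indicator_of_mem (Set.mem_Ioo.mpr ⟨ht, htT⟩)]
      set s : ℝ := t ^ (-(1/p)) with hs
      have hspos : 0 < s := rpow_pos_of_pos ht _
      have hs2 : t ^ (-(2/p)) = s^2 := by
        rw [hs, ← Real.rpow_natCast (t ^ (-(1/p))) 2, ← Real.rpow_mul ht.le]
        norm_num
        rw [show -(2/p) = -(p⁻¹*2) by ring]
      set m : ℝ := -c'/a with hm
      set r : ℝ := s/|a| with hr
      have hrpos : 0 < r := div_pos hspos (abs_pos.mpr ha)
      have hsub2 : {u : E2 | t < H u} ⊆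
          Metric.ball (0:E2) (Real.sqrt (max (m+r) 0)) \
            Metric.ball (0:E2) (Real.sqrt (max (m-r) 0)) := by
        intro u hu
        have h2 := hsub hu
        simp only [mem_setOf_eq, hs2] at h2
        have hw : |a*‖u‖^2 + c'| < s := abs_lt_of_sq_lt_sq (by nlinarith) hspos.le
        have hmr : |‖u‖^2 - m| < r := by
          have heq : ‖u‖^2 - m = (a*‖u‖^2 + c')/a := by rw [hm, eq_div_iff ha, sub_mul, div_mul_cancel₀ _ ha]; ring
          rw [heq, abs_div, hr]
          gcongr
        have habs := abs_lt.mp hmr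
        constructor
        · rw [Metric.mem_ball, dist_zero_right, ← Real.sqrt_sq (norm_nonneg u)]
          exact Real.sqrt_lt_sqrt (sq_nonneg _) (lt_max_of_lt_left (by linarith [habs.2]))
        · rw [Metric.mem_ball, dist_zero_right]
          push_neg
          rw [← Real.sqrt_sq (norm_nonneg u)]
          exact Real.sqrt_le_sqrt (max_le (by linarith [habs.1]) (sq_nonneg _))
      calc volume {u : E2 | t < H u}
          ≤ volume (Metric.ball (0:E2) (Real.sqrt (max (m+r) 0)) \
              Metric.ball (0:E2) (Real.sqrt (max (m-r) 0))) := measure_mono hsub2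
        _ ≤ ENNReal.ofReal (2*π/|a|) * ENNReal.ofReal s := by
            rw [measure_diff (Metric.ball_subset_ball (Real.sqrt_le_sqrt
                  (max_le_max (by linarith) le_rfl)))
                measurableSet_ball.nullMeasurableSet measure_ball_lt_top.ne,
              volE2_ball, volE2_ball,
              ← ENNReal.ofReal_pow (Real.sqrt_nonneg _),
              ← ENNReal.ofReal_pow (Real.sqrt_nonneg _),
              Real.sq_sqrt (le_max_right _ _), Real.sq_sqrt (le_max_right _ _),
              ← ENNReal.ofReal_mul (le_max_right _ _),
              ← ENNReal.ofReal_mul (le_max_right _ _),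
              ← ENNReal.ofReal_mul (by positivity : (0:ℝ) ≤ 2*π/|a|)]
            refine tsub_le_iff_right.mpr ?_
            rw [← ENNReal.ofReal_add (by positivity) (by positivity)]
            apply ENNReal.ofReal_le_ofReal
            have hmax : max (m+r) 0 ≤ 2*r + max (m-r) 0 := by
              rcases le_total (m+r) 0 with h | h <;> rcases le_total (m-r) 0 with h2 | h2 <;>
                simp [max_eq_left, max_eq_right, h, h2] <;> nlinarith
            have heq2 : 2*π/|a| * s = 2*r*π := by
              rw [hr]; field_simp
            nlinarith [mul_le_mul_of_nonneg_right hmax Real.pi_nonneg]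
    · have hemp : {u : E2 | t < H u} = ∅ := by
        apply Set.eq_empty_iff_forall_notMem.mpr
        intro u hu
        have h2 := hsub hu
        simp only [mem_setOf_eq] at h2
        have hneg : -(2/p) < 0 := by
          have : 0 < 2/p := by positivity
          linarith
        have hle : t ^ (-(2/p)) ≤ T0 ^ (-(2/p)) :=
          (Real.rpow_le_rpow_iff_of_neg ht hT0pos hneg).mpr (not_lt.mp htT)
        have hT02 : T0 ^ (-(2/p)) = A^2 := by
          rw [hT0, ← Real.rpow_mul (abs_nonneg A),
            show -p * -(2/p) = 2 by field_simp, Real.rpow_two, sq_abs]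
        nlinarith [hbase u]
      simp [hemp, Set.indicator_of_notMem (by simp [htT] : t ∉ Ioo 0 T0)]
  calc ∫⁻ t in Ioi (0:ℝ), volume {u : E2 | t < H u}
      ≤ ∫⁻ t in Ioi (0:ℝ), (Ioo (0:ℝ) T0).indicator
          (fun t => ENNReal.ofReal (2*π/|a|) * ENNReal.ofReal (t ^ (-(1/p)))) t :=
        setLIntegral_mono (Measurable.indicator (by fun_prop) measurableSet_Ioo) key
    _ = ∫⁻ t in Ioo (0:ℝ) T0, ENNReal.ofReal (2*π/|a|) * ENNReal.ofReal (t ^ (-(1/p))) := by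
        rw [lintegral_indicator measurableSet_Ioo, Measure.restrict_restrict measurableSet_Ioo]
        congr 1
        rw [Set.inter_eq_left.mpr (fun x hx => hx.1)]
    _ = ENNReal.ofReal (2*π/|a|) * ∫⁻ t in Ioo (0:ℝ) T0, ENNReal.ofReal (t ^ (-(1/p))) :=
        lintegral_const_mul _ (by fun_prop)
    _ = ENNReal.ofReal (2*π/|a|) * ENNReal.ofReal (∫ t in Ioo (0:ℝ) T0, t ^ (-(1/p))) := by
        rw [ofReal_integral_eq_lintegral_ofReal]
        · exact ((intervalIntegral.intervalIntegrable_rpow'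
            (by rw [neg_lt_neg_iff]; rw [div_lt_one hp0]; linarith : (-1:ℝ) < -(1/p))).1).mono_set
            Set.Ioo_subset_Ioc_self
        · exact (ae_restrict_iff' measurableSet_Ioo).mpr
            (Filter.Eventually.of_forall fun t htm => rpow_nonneg htm.1.le _)
    _ ≤ ENNReal.ofReal (2*π*(p/(p-1)) * |A|^(1-p) / |a|) := by
        rw [← ENNReal.ofReal_mul (by positivity)]
        apply ENNReal.ofReal_le_ofReal
        have hint : ∫ t in Ioo (0:ℝ) T0, t ^ (-(1/p)) = T0 ^ (-(1/p)+1) / (-(1/p)+1) := by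
          rw [← MeasureTheory.integral_Ioc_eq_integral_Ioo,
            ← intervalIntegral.integral_of_le hT0pos.le]
          rw [integral_rpow (Or.inl (by rw [neg_lt_neg_iff, div_lt_one hp0]; linarith))]
          rw [Real.zero_rpow (by { have h1p : 1/p < 1 := by rw [div_lt_one hp0]; linarith
                                   linarith } : -(1/p)+1 ≠ 0)]
          ring
        rw [hint]
        have hT0pow : T0 ^ (-(1/p)+1) = |A|^(1-p) := by
          rw [hT0, ← Real.rpow_mul (abs_nonneg A)]
          congr 1
          field_simp
          ring
        rw [hT0pow]
        apply le_of_eq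
        field_simp
        ring


def ηRR : (ℝ × ℝ) ≃ᵐ E2 :=
  (MeasurableEquiv.piFinTwo (fun _ => ℝ)).symm.trans
    ((MeasurableEquiv.toLp 2 (Fin 2 → ℝ)).symm).symm

lemma ηRR_mp : MeasurePreserving ηRR :=
  ((EuclideanSpace.volume_preserving_symm_measurableEquiv_toLp (Fin 2)).symm _).comp
    ((volume_preserving_piFinTwo (fun _ => ℝ)).symm _)


lemma core2 {p A a : ℝ} (hp : 1 < p) (hA : A ≠ 0) (ha : a ≠ 0) (b₁ b₂ c : ℝ) :
    ∫⁻ t₁ : ℝ, ∫⁻ t₂ : ℝ,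
        ENNReal.ofReal ((A^2 + (a*t₁^2 + a*t₂^2 + b₁*t₁ + b₂*t₂ + c)^2) ^ (-(p/2)))
      ≤ ENNReal.ofReal (2*π*(p/(p-1)) * |A|^(1-p) / |a|) := by
  set v : E2 := ηRR (b₁/(2*a), b₂/(2*a)) with hv
  have hv0 : v 0 = b₁/(2*a) := rfl
  have hv1 : v 1 = b₂/(2*a) := rfl
  set c' : ℝ := c - (b₁^2+b₂^2)/(4*a) with hc'
  set G0 : E2 → ℝ≥0∞ := fun w => ENNReal.ofReal ((A^2 + (a*‖w‖^2 + c')^2) ^ (-(p/2))) with hG0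
  have hsq : ∀ u : E2, a*‖u+v‖^2 + c' = a*‖u‖^2 + b₁*(u 0) + b₂*(u 1) + c := by
    intro u
    rw [normE2_sq, normE2_sq]
    simp only [PiLp.add_apply, hv0, hv1, hc']
    field_simp
    ring
  have key : ∀ t₁ t₂ : ℝ,
      ENNReal.ofReal ((A^2 + (a*t₁^2 + a*t₂^2 + b₁*t₁ + b₂*t₂ + c)^2) ^ (-(p/2)))
        = G0 (ηRR (t₁, t₂) + v) := by
    intro t₁ t₂
    rw [hG0]
    congr 2
    rw [hsq]
    have h0 : (ηRR (t₁,t₂)) 0 = t₁ := rfl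
    have h1 : (ηRR (t₁,t₂)) 1 = t₂ := rfl
    rw [normE2_sq, h0, h1]
    ring
  calc ∫⁻ t₁ : ℝ, ∫⁻ t₂ : ℝ,
        ENNReal.ofReal ((A^2 + (a*t₁^2 + a*t₂^2 + b₁*t₁ + b₂*t₂ + c)^2) ^ (-(p/2)))
      = ∫⁻ t₁ : ℝ, ∫⁻ t₂ : ℝ, G0 (ηRR (t₁, t₂) + v) := by
        simp_rw [key]
    _ = ∫⁻ z : ℝ × ℝ, G0 (ηRR (z.1, z.2) + v) := by
        apply lintegral_lintegral
        apply Measurable.aemeasurable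
        have : Measurable G0 := by fun_prop
        exact (this.comp ((ηRR.measurable.comp measurable_id).add_const v)).comp
          (measurable_fst.prodMk measurable_snd)
    _ = ∫⁻ u : E2, G0 (u + v) := by
        have : ∀ z : ℝ × ℝ, (z.1, z.2) = z := fun z => rfl
        simp_rw [this]
        exact ηRR_mp.lintegral_comp_emb ηRR.measurableEmbedding (fun u => G0 (u + v))
    _ = ∫⁻ u : E2, G0 u := lintegral_add_right_eq_self G0 v
    _ ≤ _ := core_radial c' hp hA ha


lemma lmarginal_indicator_const {δ : Type*} [DecidableEq δ] {κ : δ → Type*}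
    [∀ i, MeasurableSpace (κ i)] (μ : ∀ i, Measure (κ i)) [∀ i, SigmaFinite (μ i)] (s : Finset δ)
    (T : ∀ i, Set (κ i)) (hT : ∀ i, MeasurableSet (T i)) (K : ℝ≥0∞) (x : ∀ i, κ i) :
    (∫⋯∫⁻_s, Set.indicator {y | ∀ i ∈ s, y i ∈ T i} (fun _ => K) ∂μ) x
      = K * ∏ i : s, μ i (T i) := by
  rw [MeasureTheory.lmarginal]
  have heq : ∀ y : (i : s) → κ ↑i,
      Set.indicator {y | ∀ i ∈ s, y i ∈ T i} (fun _ => K) (Function.updateFinset x s y)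
        = Set.indicator (Set.univ.pi fun i : s => T ↑i) (fun _ => K) y := by
    intro y
    by_cases hy : ∀ i : s, y i ∈ T ↑i
    · rw [Set.indicator_of_mem, Set.indicator_of_mem]
      · exact fun i _ => hy i
      · intro i hi
        simp only [Function.updateFinset]
        rw [dif_pos hi]
        exact hy ⟨i, hi⟩
    · push_neg at hy
      obtain ⟨i, hi⟩ := hy
      rw [Set.indicator_of_notMem, Set.indicator_of_notMem]
      · intro h
        exact hi (h i (Set.mem_univ i))
      · intro h
        apply hi
        have := h ↑i i.2
        simpa only [Function.updateFinset, dif_pos i.2] using this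
  simp_rw [heq]
  have hms : MeasurableSet (Set.univ.pi fun i : s => T ↑i) :=
    MeasurableSet.univ_pi (fun i => hT ↑i)
  rw [lintegral_indicator hms, lintegral_const, Measure.restrict_apply_univ, Measure.pi_pi]

lemma norm_complex_eq (A w : ℝ) (p : ℝ) :
    ‖(A : ℂ) + Complex.I * (w : ℂ)‖ ^ (-p) = (A^2 + w^2) ^ (-(p/2)) := by
  have h1 : ‖(A : ℂ) + Complex.I * (w : ℂ)‖ = Real.sqrt (A^2 + w^2) := by
    rw [Complex.norm_def, Complex.normSq_apply]
    simp [Complex.add_re, Complex.add_im, Complex.mul_re, Complex.mul_im]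
    ring_nf
  rw [h1, Real.sqrt_eq_rpow, ← Real.rpow_mul (by positivity)]
  congr 1
  ring

-- lam is a nonzero integer combination hence has abs ≥ 1
lemma abs_ge_one_of_signs {m : ℕ} (ι₁ : Fin m → ℝ) (hι₁ : ∀ j, ι₁ j = 1 ∨ ι₁ j = -1)
    (x : ℝ) (hx : x = 1 ∨ x = -1) (S : Finset (Fin m))
    (h : x + ∑ j ∈ S, ι₁ j ≠ 0) : 1 ≤ |x + ∑ j ∈ S, ι₁ j| := by
  have hint : ∀ S : Finset (Fin m), ∃ z : ℤ, ∑ j ∈ S, ι₁ j = (z : ℝ) := by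
    intro S
    induction S using Finset.induction with
    | empty => exact ⟨0, by simp⟩
    | @insert a s hni ih =>
      obtain ⟨z, hz⟩ := ih
      rcases hι₁ a with h1 | h1
      · exact ⟨z + 1, by rw [Finset.sum_insert hni, hz, h1]; push_cast; ring⟩
      · exact ⟨z - 1, by rw [Finset.sum_insert hni, hz, h1]; push_cast; ring⟩
  obtain ⟨z, hz⟩ := hint S
  rcases hx with h1 | h1 <;> rw [h1, hz] at h ⊢
  · rw [show (1:ℝ) + (z:ℝ) = ((1+z : ℤ):ℝ) by push_cast; ring] at h ⊢
    rw [← Int.cast_abs]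
    exact_mod_cast Int.one_le_abs (by exact_mod_cast h)
  · rw [show (-1:ℝ) + (z:ℝ) = ((-1+z : ℤ):ℝ) by push_cast; ring] at h ⊢
    rw [← Int.cast_abs]
    exact_mod_cast Int.one_le_abs (by exact_mod_cast h)


lemma sum_split {d : ℕ} {k0 k1 : Fin d} (hne : k0 ≠ k1) (g : Fin d → ℝ) :
    ∑ k, g k = g k0 + g k1 + ∑ k ∈ Finset.univ \ {k0, k1}, g k := by
  rw [← Finset.sum_sdiff (Finset.subset_univ {k0,k1}), Finset.sum_pair hne]
  ring

lemma phase_decomp {ni m d : ℕ} (i0 : Fin ni) (k0 k1 : Fin d) (hkne : k0 ≠ k1)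
    (ι₀ : Fin ni → ℝ) (ι₁ : Fin m → ℝ) (mix : Fin m → Fin ni → ℝ)
    (hmix : ∀ j j', mix j j' = 1 ∨ mix j j' = 0 ∨ mix j j' = -1)
    (X : Fin ni → Fin d → ℝ) (w : Fin d → ℝ) (Pc : Fin m → Fin d → ℝ) :
    ∃ b₁ b₂ c : ℝ, ∀ t₁ t₂ : ℝ,
      (∑ j', ι₀ j' * ∑ k, (Function.update X i0
          (Function.update (Function.update w k0 t₁) k1 t₂) j' k)^2)
      + (∑ j, ι₁ j * ∑ k, ((∑ j', mix j j' * Function.update X i0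
          (Function.update (Function.update w k0 t₁) k1 t₂) j' k) - Pc j k)^2)
      = (ι₀ i0 + ∑ j ∈ Finset.univ.filter (fun j => mix j i0 ≠ 0), ι₁ j) * t₁^2
        + (ι₀ i0 + ∑ j ∈ Finset.univ.filter (fun j => mix j i0 ≠ 0), ι₁ j) * t₂^2
        + b₁*t₁ + b₂*t₂ + c := by
  set u : ℝ → ℝ → Fin d → ℝ :=
    fun t₁ t₂ => Function.update (Function.update w k0 t₁) k1 t₂ with hu
  have hu0 : ∀ t₁ t₂, u t₁ t₂ k0 = t₁ := by
    intro t₁ t₂; rw [hu]; simp only []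
    rw [Function.update_of_ne hkne, Function.update_self]
  have hu1 : ∀ t₁ t₂, u t₁ t₂ k1 = t₂ := by
    intro t₁ t₂; rw [hu]; simp only []
    rw [Function.update_self]
  have huk : ∀ t₁ t₂ k, k ∈ Finset.univ \ ({k0, k1} : Finset (Fin d)) → u t₁ t₂ k = w k := by
    intro t₁ t₂ k hk
    simp only [Finset.mem_sdiff, Finset.mem_insert, Finset.mem_singleton] at hk
    push_neg at hk
    rw [hu]; simp only []
    rw [Function.update_of_ne hk.2.2, Function.update_of_ne hk.2.1]
  set M : Fin m → ℝ := fun j => mix j i0 with hM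
  set R : Fin m → Fin d → ℝ :=
    fun j k => ∑ j' ∈ Finset.univ.erase i0, mix j j' * X j' k with hR
  set q1 : Fin m → ℝ := fun j => Pc j k0 - R j k0 with hq1
  set q2 : Fin m → ℝ := fun j => Pc j k1 - R j k1 with hq2
  set c3 : Fin m → ℝ :=
    fun j => ∑ k ∈ Finset.univ \ ({k0,k1} : Finset (Fin d)), (M j * w k + R j k - Pc j k)^2
    with hc3
  set c1 : ℝ := ∑ k ∈ Finset.univ \ ({k0,k1} : Finset (Fin d)), (w k)^2 with hc1
  set c2 : ℝ := ∑ j' ∈ Finset.univ.erase i0, ι₀ j' * ∑ k, (X j' k)^2 with hc2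
  refine ⟨∑ j, ι₁ j * (-2 * M j * q1 j), ∑ j, ι₁ j * (-2 * M j * q2 j),
    ι₀ i0 * c1 + c2 + ∑ j, ι₁ j * ((q1 j)^2 + (q2 j)^2 + c3 j), ?_⟩
  intro t₁ t₂
  have hY0 : Function.update X i0 (u t₁ t₂) i0 = u t₁ t₂ := Function.update_self _ _ _
  have hYne : ∀ j' ∈ Finset.univ.erase i0, Function.update X i0 (u t₁ t₂) j' = X j' := by
    intro j' hj'
    exact Function.update_of_ne (Finset.ne_of_mem_erase hj') _ _
  -- term 1
  have hterm1 : (∑ j', ι₀ j' * ∑ k, (Function.update X i0 (u t₁ t₂) j' k)^2)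
      = ι₀ i0 * (t₁^2 + t₂^2 + c1) + c2 := by
    rw [← Finset.add_sum_erase _ _ (Finset.mem_univ i0)]
    congr 1
    · congr 1
      rw [sum_split hkne]
      rw [hY0]
      rw [hu0, hu1]
      congr 1
      apply Finset.sum_congr rfl
      intro k hk
      rw [huk t₁ t₂ k hk]
    · apply Finset.sum_congr rfl
      intro j' hj'
      rw [hYne j' hj']
  -- the inner linear sum
  have hS : ∀ j k, (∑ j', mix j j' * Function.update X i0 (u t₁ t₂) j' k)
      = M j * u t₁ t₂ k + R j k := by
    intro j k
    rw [← Finset.add_sum_erase _ _ (Finset.mem_univ i0)]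
    congr 1
    · rw [hY0]
    · apply Finset.sum_congr rfl
      intro j' hj'
      rw [hYne j' hj']
  -- term 2
  have hterm2 : (∑ j, ι₁ j * ∑ k, ((∑ j', mix j j' * Function.update X i0 (u t₁ t₂) j' k)
        - Pc j k)^2)
      = (∑ j, ι₁ j * (M j)^2) * t₁^2 + (∑ j, ι₁ j * (M j)^2) * t₂^2
        + (∑ j, ι₁ j * (-2 * M j * q1 j)) * t₁ + (∑ j, ι₁ j * (-2 * M j * q2 j)) * t₂
        + ∑ j, ι₁ j * ((q1 j)^2 + (q2 j)^2 + c3 j) := by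
    have hj : ∀ j, ι₁ j * ∑ k, ((∑ j', mix j j' * Function.update X i0 (u t₁ t₂) j' k)
          - Pc j k)^2
        = ι₁ j * (M j)^2 * t₁^2 + ι₁ j * (M j)^2 * t₂^2 + ι₁ j * (-2 * M j * q1 j) * t₁
          + ι₁ j * (-2 * M j * q2 j) * t₂ + ι₁ j * ((q1 j)^2 + (q2 j)^2 + c3 j) := by
      intro j
      have hk : ∑ k, ((∑ j', mix j j' * Function.update X i0 (u t₁ t₂) j' k) - Pc j k)^2
          = (M j * t₁ - q1 j)^2 + (M j * t₂ - q2 j)^2 + c3 j := by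
        simp_rw [hS j]
        rw [sum_split hkne]
        rw [hu0, hu1]
        have e1 : M j * t₁ + R j k0 - Pc j k0 = M j * t₁ - q1 j := by rw [hq1]; ring
        have e2 : M j * t₂ + R j k1 - Pc j k1 = M j * t₂ - q2 j := by rw [hq2]; ring
        rw [e1, e2]
        congr 1
        rw [hc3]
        apply Finset.sum_congr rfl
        intro k hk
        rw [huk t₁ t₂ k hk]
      rw [hk]
      ring
    calc (∑ j, ι₁ j * ∑ k, ((∑ j', mix j j' * Function.update X i0 (u t₁ t₂) j' k)
          - Pc j k)^2)
        = ∑ j, (ι₁ j * (M j)^2 * t₁^2 + ι₁ j * (M j)^2 * t₂^2 + ι₁ j * (-2 * M j * q1 j) * t₁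
          + ι₁ j * (-2 * M j * q2 j) * t₂ + ι₁ j * ((q1 j)^2 + (q2 j)^2 + c3 j)) :=
          Finset.sum_congr rfl fun j _ => hj j
      _ = _ := by
          rw [Finset.sum_add_distrib, Finset.sum_add_distrib, Finset.sum_add_distrib,
            Finset.sum_add_distrib, ← Finset.sum_mul, ← Finset.sum_mul, ← Finset.sum_mul,
            ← Finset.sum_mul]
  have hlam : ∑ j, ι₁ j * (M j)^2
      = ∑ j ∈ Finset.univ.filter (fun j => mix j i0 ≠ 0), ι₁ j := by
    rw [Finset.sum_filter]
    apply Finset.sum_congr rfl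
    intro j _
    rcases hmix j i0 with h | h | h <;> rw [hM] <;> simp [h]
  rw [hterm1, hterm2, hlam]
  ring


lemma cube_eq {d : ℕ} (L : ℝ) : cube (0 : Ed d) L =
    ((MeasurableEquiv.toLp 2 (Fin d → ℝ)).symm) ⁻¹' (Set.univ.pi fun _ : Fin d => Icc (-L) L) := by
  ext y
  simp only [cube, Set.mem_setOf_eq, Set.mem_preimage, Set.mem_univ_pi]
  refine forall_congr' fun k => ?_
  show y k ∈ Icc ((0:Ed d) k - L) ((0:Ed d) k + L) ↔ y k ∈ Icc (-L) L
  norm_num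

lemma cube_meas {d : ℕ} (L : ℝ) : MeasurableSet (cube (0:Ed d) L) := by
  rw [cube_eq]
  exact ((MeasurableEquiv.toLp 2 (Fin d → ℝ)).symm).measurable
    (MeasurableSet.univ_pi fun _ => measurableSet_Icc)

lemma cube_vol {d : ℕ} (L : ℝ) : volume (cube (0:Ed d) L) = ENNReal.ofReal (2*L) ^ d := by
  rw [cube_eq, MeasurePreserving.measure_preimage
    (EuclideanSpace.volume_preserving_symm_measurableEquiv_toLp (Fin d))
    (MeasurableSet.univ_pi fun _ => measurableSet_Icc).nullMeasurableSet]
  rw [volume_pi, Measure.pi_pi]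
  simp [Real.volume_Icc]
  rw [← ENNReal.ofReal_ofNat 2, ← ENNReal.ofReal_mul zero_le_two]
  congr 1
  ring

lemma inner_bound {d ni m : ℕ} (hd : 2 ≤ d) (i0 : Fin ni)
    {p A lam γt ε : ℝ} (hp : 1 < p) (hA : A ≠ 0) (hlam : lam ≠ 0) (hε : 0 < ε)
    (ι₀ : Fin ni → ℝ) (ι₁ : Fin m → ℝ) (mix : Fin m → Fin ni → ℝ)
    (hmix : ∀ j j', mix j j' = 1 ∨ mix j j' = 0 ∨ mix j j' = -1)
    (hlamdef : lam = ι₀ i0 + ∑ j ∈ Finset.univ.filter (fun j => mix j i0 ≠ 0), ι₁ j)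
    (B C : ℝ) (P : Fin m → Ed d) (x : Fin ni → Ed d) (L : ℝ) :
    ∫⁻ v : Ed d, (cube (0:Ed d) L).indicator
        (fun v => ENNReal.ofReal (‖(A : ℂ) + Complex.I *
          ((B + ε ^ (-γt) *
              ((∑ j', ι₀ j' * ‖Function.update x i0 v j'‖ ^ 2) +
                (∑ j, ι₁ j * ‖(∑ j', mix j j' • Function.update x i0 v j') - P j‖ ^ 2)
                + C) : ℝ) : ℂ)‖ ^ (-p))) v
      ≤ ENNReal.ofReal (2*π*(p/(p-1)) * |A|^(1-p) / |ε ^ (-γt) * lam|)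
          * ENNReal.ofReal (2*L) ^ (d-2) := by
  have hεp : (0:ℝ) < ε ^ (-γt) := rpow_pos_of_pos hε _
  set a : ℝ := ε ^ (-γt) * lam with ha
  have ha0 : a ≠ 0 := mul_ne_zero (ne_of_gt hεp) hlam
  set k0 : Fin d := ⟨0, by omega⟩ with hk0
  set k1 : Fin d := ⟨1, by omega⟩ with hk1
  have hkne : k0 ≠ k1 := by simp [hk0, hk1, Fin.ext_iff]
  set Kc : ℝ≥0∞ := ENNReal.ofReal (2*π*(p/(p-1)) * |A|^(1-p) / |a|) with hKc
  set φ : Ed d → ℝ≥0∞ := fun v => (cube (0:Ed d) L).indicator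
        (fun v => ENNReal.ofReal (‖(A : ℂ) + Complex.I *
          ((B + ε ^ (-γt) *
              ((∑ j', ι₀ j' * ‖Function.update x i0 v j'‖ ^ 2) +
                (∑ j, ι₁ j * ‖(∑ j', mix j j' • Function.update x i0 v j') - P j‖ ^ 2)
                + C) : ℝ) : ℂ)‖ ^ (-p))) v with hφ
  have hφm : Measurable φ := Measurable.indicator (by fun_prop) (cube_meas L)
  have hmpEs : MeasurePreserving ((MeasurableEquiv.toLp 2 (Fin d → ℝ)).symm).symm :=
    (EuclideanSpace.volume_preserving_symm_measurableEquiv_toLp (Fin d)).symm _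
  rw [show ∫⁻ v : Ed d, φ v = ∫⁻ w0 : (Fin d → ℝ), φ (((MeasurableEquiv.toLp 2 (Fin d → ℝ)).symm).symm w0) from
    (hmpEs.lintegral_comp_emb (MeasurableEquiv.measurableEmbedding _) φ).symm]
  set h' : (Fin d → ℝ) → ℝ≥0∞ := fun w0 => φ (((MeasurableEquiv.toLp 2 (Fin d → ℝ)).symm).symm w0)
    with hh'
  have hh'm : Measurable h' := hφm.comp (MeasurableEquiv.measurable _)
  rw [volume_pi, lintegral_eq_lmarginal_univ (fun _ : Fin d => (0:ℝ))]
  rw [show (Finset.univ : Finset (Fin d)) = (Finset.univ \ ({k0,k1} : Finset (Fin d))) ∪ {k0,k1} from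
    (Finset.sdiff_union_of_subset (Finset.subset_univ _)).symm]
  rw [lmarginal_union _ h' hh'm Finset.sdiff_disjoint]
  have hinner2 : (∫⋯∫⁻_{k0,k1}, h' ∂(fun _ => (volume : Measure ℝ)))
      ≤ fun w0 => Set.indicator
          {w : Fin d → ℝ | ∀ k ∈ Finset.univ \ ({k0,k1} : Finset (Fin d)), w k ∈ Icc (-L) L}
          (fun _ => Kc) w0 := by
    intro w0
    dsimp only
    obtain ⟨b₁, b₂, cc, hbc⟩ := phase_decomp i0 k0 k1 hkne ι₀ ι₁ mix hmix
      (fun j k => x j k) w0 (fun j k => P j k)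
    rw [lmarginal_insert _ hh'm (by simp [hkne] : k0 ∉ ({k1} : Finset (Fin d))) w0]
    have hiter : ∫⁻ t₁ : ℝ, (∫⋯∫⁻_{k1}, h' ∂(fun _ => (volume : Measure ℝ)))
          (Function.update w0 k0 t₁)
        = ∫⁻ t₁ : ℝ, ∫⁻ t₂ : ℝ,
            h' (Function.update (Function.update w0 k0 t₁) k1 t₂) := by
      apply lintegral_congr
      intro t₁
      rw [lmarginal_singleton]
    by_cases hw : ∀ k ∈ Finset.univ \ ({k0,k1} : Finset (Fin d)), w0 k ∈ Icc (-L) L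
    · rw [Set.indicator_of_mem (by exact hw)]
      have hpoint : ∀ t₁ t₂ : ℝ, h' (Function.update (Function.update w0 k0 t₁) k1 t₂)
          ≤ ENNReal.ofReal ((A^2 + (a*t₁^2 + a*t₂^2 + (ε ^ (-γt)*b₁)*t₁ + (ε ^ (-γt)*b₂)*t₂
              + (B + ε ^ (-γt)*(cc + C)))^2) ^ (-(p/2))) := by
        intro t₁ t₂
        refine le_trans (Set.indicator_le_self _ _ _) (le_of_eq ?_)
        set u : Fin d → ℝ := Function.update (Function.update w0 k0 t₁) k1 t₂ with hudef
        set v : Ed d := ((MeasurableEquiv.toLp 2 (Fin d → ℝ)).symm).symm u with hv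
        set y : Fin ni → Ed d := Function.update x i0 v with hy
        have hyc : ∀ j' k, y j' k = Function.update (fun j k => x j k) i0 u j' k := by
          intro j' k
          by_cases hj : j' = i0
          · subst hj
            rw [hy, Function.update_self, Function.update_self]
            rfl
          · rw [hy, Function.update_of_ne hj, Function.update_of_ne hj]
        have hnorm1 : ∀ j', ‖y j'‖^2
            = ∑ k, (Function.update (fun j k => x j k) i0 u j' k)^2 := by
          intro j'
          rw [EuclideanSpace.norm_eq, Real.sq_sqrt (by positivity)]
          exact Finset.sum_congr rfl fun k _ => by rw [Real.norm_eq_abs, sq_abs, hyc]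
        have hnorm2 : ∀ j, ‖(∑ j', mix j j' • y j') - P j‖^2
            = ∑ k, ((∑ j', mix j j' * Function.update (fun j k => x j k) i0 u j' k)
                - P j k)^2 := by
          intro j
          rw [EuclideanSpace.norm_eq, Real.sq_sqrt (by positivity)]
          apply Finset.sum_congr rfl
          intro k _
          rw [Real.norm_eq_abs, sq_abs]
          congr 1
          have h2 : ((∑ j', mix j j' • y j') - P j) k
              = (∑ j', (mix j j' • y j') k) - P j k := by
            have h3 := Finset.sum_apply k Finset.univ (fun j' => mix j j' • y j')
            show (∑ j', mix j j' • y j') k - P j k = _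
            rw [WithLp.ofLp_sum]
            rw [h3]
          have h4 : ∀ j', (mix j j' • y j') k
              = mix j j' * Function.update (fun j k => x j k) i0 u j' k := fun j' => by
            rw [show (mix j j' • y j') k = mix j j' * y j' k from rfl, hyc]
          rw [h2]
          exact congrArg (fun z => z - P j k) (Finset.sum_congr rfl fun j' _ => h4 j')
        have hΦ : (∑ j', ι₀ j' * ‖y j'‖^2)
              + (∑ j, ι₁ j * ‖(∑ j', mix j j' • y j') - P j‖^2)
            = lam * t₁^2 + lam * t₂^2 + b₁*t₁ + b₂*t₂ + cc := by
          simp_rw [hnorm1, hnorm2]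
          rw [hudef] at *
          rw [hlamdef]
          exact hbc t₁ t₂
        show ENNReal.ofReal (‖(A : ℂ) + Complex.I *
          ((B + ε ^ (-γt) *
              ((∑ j', ι₀ j' * ‖y j'‖ ^ 2) +
                (∑ j, ι₁ j * ‖(∑ j', mix j j' • y j') - P j‖ ^ 2)
                + C) : ℝ) : ℂ)‖ ^ (-p)) = _
        rw [hΦ, norm_complex_eq]
        congr 2
        rw [ha]
        ring
      calc ∫⁻ t₁ : ℝ, (∫⋯∫⁻_{k1}, h' ∂(fun _ => (volume : Measure ℝ)))
            (Function.update w0 k0 t₁)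
          = ∫⁻ t₁ : ℝ, ∫⁻ t₂ : ℝ,
              h' (Function.update (Function.update w0 k0 t₁) k1 t₂) := hiter
        _ ≤ ∫⁻ t₁ : ℝ, ∫⁻ t₂ : ℝ, ENNReal.ofReal
              ((A^2 + (a*t₁^2 + a*t₂^2 + (ε ^ (-γt)*b₁)*t₁ + (ε ^ (-γt)*b₂)*t₂
              + (B + ε ^ (-γt)*(cc + C)))^2) ^ (-(p/2))) :=
            lintegral_mono fun t₁ => lintegral_mono fun t₂ => hpoint t₁ t₂
        _ ≤ Kc := core2 hp hA ha0 _ _ _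
    · rw [Set.indicator_of_notMem (by exact hw)]
      push_neg at hw
      obtain ⟨k, hk, hnk⟩ := hw
      have hk' := Finset.mem_sdiff.mp hk
      have hkk0 : k ≠ k0 := by
        intro hkk; apply hk'.2; simp [hkk]
      have hkk1 : k ≠ k1 := by
        intro hkk; apply hk'.2; simp [hkk]
      have hzero : ∀ t₁ t₂ : ℝ,
          h' (Function.update (Function.update w0 k0 t₁) k1 t₂) = 0 := by
        intro t₁ t₂
        apply Set.indicator_of_notMem
        intro hmem
        apply hnk
        have := hmem k
        have heval : (((MeasurableEquiv.toLp 2 (Fin d → ℝ)).symm).symm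
            (Function.update (Function.update w0 k0 t₁) k1 t₂)) k = w0 k := by
          show Function.update (Function.update w0 k0 t₁) k1 t₂ k = w0 k
          rw [Function.update_of_ne hkk1, Function.update_of_ne hkk0]
        rw [heval] at this
        simpa using this
      refine le_of_eq ?_
      rw [hiter]
      simp_rw [hzero]
      simp
  calc (∫⋯∫⁻_Finset.univ \ {k0, k1},
        (∫⋯∫⁻_{k0, k1}, h' ∂fun _ => volume) ∂fun _ => volume) (fun _ => 0)
      ≤ (∫⋯∫⁻_Finset.univ \ {k0, k1}, (fun w0 => Set.indicator
          {w : Fin d → ℝ | ∀ k ∈ Finset.univ \ ({k0,k1} : Finset (Fin d)), w k ∈ Icc (-L) L}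
          (fun _ => Kc) w0) ∂fun _ => volume) (fun _ => 0) := lmarginal_mono hinner2 _
    _ = Kc * ∏ _k : ↥(Finset.univ \ ({k0,k1} : Finset (Fin d))), volume (Icc (-L) L) :=
        lmarginal_indicator_const _ _ _ (fun _ => measurableSet_Icc) _ _
    _ = Kc * ENNReal.ofReal (2*L) ^ (d-2) := by
        congr 1
        rw [Finset.prod_const, Real.volume_Icc]
        congr 1
        · congr 1
          ring
        · rw [Finset.card_univ, Fintype.card_coe, Finset.card_sdiff_of_subset (Finset.subset_univ _),
            Finset.card_pair hkne, Finset.card_univ, Fintype.card_fin]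

/-- **Higher-degree oscillatory integral estimate (nondegenerate case)**: for `d ≥ 2`,
`p > 1`, `γ̃ > 0`, `R > 0` and `i ∈ {2,3,4}` there is `Λ > 0` (depending only on `d`, `p`,
`R`) such that for all `ε ∈ (0,1]`, `n ≥ 1`, signs `ι₀ : Fin i → {±1}` (for the terms
`ι_j |x_j|²`, `j = 1,…,i`), signs `ι₁ : Fin (5−i) → {±1}` and coefficients
`mix : Fin (5−i) → Fin i → {−1,0,1}` (for the terms `ι_j |∑_{j'} ι_j^{j'} x_{j'} − P_j|²`,
`j = i+1,…,5`), `A ≠ 0`, `B, C ∈ ℝ` and `P_j ∈ Q_{0,(2n+1)R}`: if the coefficient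
`ι_1 + ∑_{j : mix j 1 ≠ 0} ι_j` of `|x_1|²` in the phase `Φ` is nonzero, then
`∫_{(Q_{0,(2n+1)R})^i} |A + i(B + ε^{−γ̃}(Φ(x) + C))|^{−p} dx ≤ Λ |A|^{1−p} n^{id−2} ε^{γ̃}`. -/
theorem higher_degree_oscillatory_estimate (d : ℕ) (hd : 2 ≤ d) (p : ℝ) (hp : 1 < p)
    (R : ℝ) (hR : 0 < R) :
    ∃ Λ > (0 : ℝ), ∀ i : ℕ, ∀ hi : i = 2 ∨ i = 3 ∨ i = 4,
      ∀ γt : ℝ, 0 < γt → ∀ ε : ℝ, 0 < ε → ε ≤ 1 → ∀ n : ℕ, 1 ≤ n →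
      ∀ (ι₀ : Fin i → ℝ) (ι₁ : Fin (5 - i) → ℝ) (mix : Fin (5 - i) → Fin i → ℝ),
        (∀ j', ι₀ j' = 1 ∨ ι₀ j' = -1) → (∀ j, ι₁ j = 1 ∨ ι₁ j = -1) →
        (∀ j j', mix j j' = 1 ∨ mix j j' = 0 ∨ mix j j' = -1) →
      ∀ A : ℝ, A ≠ 0 → ∀ B C : ℝ,
      ∀ P : Fin (5 - i) → Ed d, (∀ j, P j ∈ cube (0 : Ed d) ((2 * (n : ℝ) + 1) * R)) →
      ι₀ ⟨0, by omega⟩ +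
          ∑ j ∈ Finset.univ.filter (fun j => mix j ⟨0, by omega⟩ ≠ 0), ι₁ j ≠ 0 →
      (∫ x in Set.univ.pi fun _ : Fin i => cube (0 : Ed d) ((2 * (n : ℝ) + 1) * R),
          ‖(A : ℂ) + Complex.I *
              ((B + ε ^ (-γt) *
                  ((∑ j', ι₀ j' * ‖x j'‖ ^ 2) +
                    (∑ j, ι₁ j * ‖(∑ j', mix j j' • x j') - P j‖ ^ 2) + C) : ℝ) : ℂ)‖ ^ (-p))
        ≤ Λ * |A| ^ (1 - p) * (n : ℝ) ^ (i * d - 2) * ε ^ γt := by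
  have hCp : (0:ℝ) < 2*π*(p/(p-1)) :=
    mul_pos (mul_pos two_pos Real.pi_pos) (div_pos (by linarith) (by linarith))
  have hM1 : (1:ℝ) ≤ max 1 (6*R) := le_max_left _ _
  have hM0 : (0:ℝ) < max 1 (6*R) := by linarith
  refine ⟨2*π*(p/(p-1)) * (max 1 (6*R))^(4*d), by positivity, ?_⟩
  intro i hi γt hγt ε hε hε1 n hn ι₀ ι₁ mix hι₀ hι₁ hmix A hA B C P hP hcoef
  have hεp : (0:ℝ) < ε ^ (-γt) := rpow_pos_of_pos hε _
  set i0 : Fin i := ⟨0, by omega⟩ with hi0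
  set L : ℝ := (2*(n:ℝ)+1)*R with hLdef
  have hn1 : (1:ℝ) ≤ (n:ℝ) := by exact_mod_cast hn
  have hLpos : 0 < L := by positivity
  set lam : ℝ := ι₀ i0 + ∑ j ∈ Finset.univ.filter (fun j => mix j i0 ≠ 0), ι₁ j with hlamdef
  have hlam0 : lam ≠ 0 := hcoef
  have hlam1 : 1 ≤ |lam| := abs_ge_one_of_signs ι₁ hι₁ (ι₀ i0) (hι₀ i0) _ hlam0
  set g : (Fin i → Ed d) → ℝ≥0∞ := fun x => ENNReal.ofReal
      (‖(A : ℂ) + Complex.I *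
          ((B + ε ^ (-γt) *
              ((∑ j', ι₀ j' * ‖x j'‖ ^ 2) +
                (∑ j, ι₁ j * ‖(∑ j', mix j j' • x j') - P j‖ ^ 2) + C) : ℝ) : ℂ)‖ ^ (-p))
    with hg
  have hgm : Measurable g := by fun_prop
  set S : Set (Fin i → Ed d) := Set.univ.pi fun _ : Fin i => cube (0:Ed d) L with hS
  have hSm : MeasurableSet S := MeasurableSet.univ_pi fun _ => cube_meas L
  set F : (Fin i → Ed d) → ℝ≥0∞ := S.indicator g with hF
  have hFm : Measurable F := hgm.indicator hSm
  set RHS : ℝ := 2*π*(p/(p-1)) * (max 1 (6*R))^(4*d) * |A| ^ (1 - p)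
      * (n : ℝ) ^ (i * d - 2) * ε ^ γt with hRHSdef
  have hRHS0 : 0 ≤ RHS := by positivity
  -- the main lintegral estimate
  have hmain : ∫⁻ x in S, g x ≤ ENNReal.ofReal RHS := by
    rw [← lintegral_indicator hSm, ← hF]
    rw [volume_pi, lintegral_eq_lmarginal_univ (fun _ : Fin i => (0:Ed d))]
    have huniv : Finset.univ.erase i0 ∪ {i0} = (Finset.univ : Finset (Fin i)) := by
      rw [Finset.union_comm, ← Finset.insert_eq, Finset.insert_erase (Finset.mem_univ i0)]
    rw [← huniv, lmarginal_union _ F hFm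
      (Finset.disjoint_singleton_right.mpr (Finset.notMem_erase i0 _))]
    set Kc : ℝ≥0∞ := ENNReal.ofReal (2*π*(p/(p-1)) * |A|^(1-p) / |ε ^ (-γt) * lam|)
        * ENNReal.ofReal (2*L) ^ (d-2) with hKc
    have hK1 : (∫⋯∫⁻_{i0}, F ∂fun _ => (volume : Measure (Ed d)))
        ≤ fun x => Set.indicator
            {x : Fin i → Ed d | ∀ j ∈ Finset.univ.erase i0, x j ∈ cube (0:Ed d) L}
            (fun _ => Kc) x := by
      intro x
      dsimp only
      rw [lmarginal_singleton]
      by_cases hx : ∀ j ∈ Finset.univ.erase i0, x j ∈ cube (0:Ed d) L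
      · rw [Set.indicator_of_mem (by exact hx)]
        have hFeq : ∀ v : Ed d, F (Function.update x i0 v)
            = (cube (0:Ed d) L).indicator (fun v => g (Function.update x i0 v)) v := by
          intro v
          by_cases hv : v ∈ cube (0:Ed d) L
          · rw [Set.indicator_of_mem hv]
            apply Set.indicator_of_mem
            rw [hS]
            refine Set.mem_univ_pi.mpr fun j => ?_
            by_cases hj : j = i0
            · subst hj; rwa [Function.update_self]
            · rw [Function.update_of_ne hj]
              exact hx j (Finset.mem_erase.mpr ⟨hj, Finset.mem_univ j⟩)
          · rw [Set.indicator_of_notMem hv]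
            apply Set.indicator_of_notMem
            intro hmem
            apply hv
            have := Set.mem_univ_pi.mp hmem i0
            rwa [Function.update_self] at this
        simp_rw [hFeq]
        exact inner_bound hd i0 hp hA hlam0 hε ι₀ ι₁ mix hmix hlamdef B C P x L
      · rw [Set.indicator_of_notMem (by exact hx)]
        push_neg at hx
        obtain ⟨j, hj, hnj⟩ := hx
        have hzero : ∀ v : Ed d, F (Function.update x i0 v) = 0 := by
          intro v
          apply Set.indicator_of_notMem
          intro hmem
          apply hnj
          have := Set.mem_univ_pi.mp hmem j
          rwa [Function.update_of_ne (Finset.ne_of_mem_erase hj)] at this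
        simp_rw [hzero]
        simp
    calc (∫⋯∫⁻_Finset.univ.erase i0,
            (∫⋯∫⁻_{i0}, F ∂fun _ => volume) ∂fun _ => volume) (fun _ => 0)
        ≤ (∫⋯∫⁻_Finset.univ.erase i0, (fun x => Set.indicator
            {x : Fin i → Ed d | ∀ j ∈ Finset.univ.erase i0, x j ∈ cube (0:Ed d) L}
            (fun _ => Kc) x) ∂fun _ => volume) (fun _ => 0) := lmarginal_mono hK1 _
      _ = Kc * ∏ _j : ↥(Finset.univ.erase i0), volume (cube (0:Ed d) L) :=
          lmarginal_indicator_const _ _ _ (fun _ => cube_meas L) _ _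
      _ = Kc * (ENNReal.ofReal (2*L) ^ d) ^ (i-1) := by
          rw [Finset.prod_const, cube_vol, Finset.card_univ, Fintype.card_coe,
            Finset.card_erase_of_mem (Finset.mem_univ i0), Finset.card_univ, Fintype.card_fin]
      _ ≤ ENNReal.ofReal RHS := by
          rw [hKc, mul_assoc, ← pow_mul, ← pow_add]
          have hexp : d - 2 + d * (i-1) = i*d - 2 := by
            rcases hi with h | h | h <;> subst h <;> omega
          rw [hexp, ← ENNReal.ofReal_pow (by positivity : (0:ℝ) ≤ 2*L),
            ← ENNReal.ofReal_mul (by positivity)]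
          apply ENNReal.ofReal_le_ofReal
          -- real arithmetic
          have h1 : ε ^ (-γt) ≤ |ε ^ (-γt) * lam| := by
            rw [abs_mul, abs_of_pos hεp]
            nlinarith
          have hinv : 1/|ε ^ (-γt) * lam| ≤ ε ^ γt := by
            rw [one_div]
            have h2 : (ε ^ (-γt))⁻¹ = ε ^ γt := by
              rw [← Real.rpow_neg hε.le, neg_neg]
            calc |ε ^ (-γt) * lam|⁻¹ ≤ (ε ^ (-γt))⁻¹ := by
                  apply inv_anti₀ hεp h1
              _ = ε ^ γt := h2
          have he4d : i*d - 2 ≤ 4*d := by rcases hi with h | h | h <;> subst h <;> omega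
          have hpow : (2*L)^(i*d-2) ≤ (max 1 (6*R))^(4*d) * (n:ℝ)^(i*d-2) := by
            calc (2*L)^(i*d-2) ≤ ((6*R)*(n:ℝ))^(i*d-2) := by
                  apply pow_le_pow_left₀ (by positivity)
                  rw [hLdef]
                  nlinarith
              _ = (6*R)^(i*d-2) * (n:ℝ)^(i*d-2) := mul_pow _ _ _
              _ ≤ (max 1 (6*R))^(4*d) * (n:ℝ)^(i*d-2) := by
                  apply mul_le_mul_of_nonneg_right _ (by positivity)
                  calc (6*R)^(i*d-2) ≤ (max 1 (6*R))^(i*d-2) :=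
                        pow_le_pow_left₀ (by positivity) (le_max_right _ _) _
                    _ ≤ (max 1 (6*R))^(4*d) := pow_le_pow_right₀ hM1 he4d
          calc 2*π*(p/(p-1)) * |A|^(1-p) / |ε ^ (-γt) * lam| * (2*L)^(i*d-2)
              = (2*π*(p/(p-1)) * |A|^(1-p)) * ((1/|ε ^ (-γt) * lam|) * (2*L)^(i*d-2)) := by
                ring
            _ ≤ (2*π*(p/(p-1)) * |A|^(1-p))
                  * ((ε^γt) * ((max 1 (6*R))^(4*d) * (n:ℝ)^(i*d-2))) := by
                apply mul_le_mul_of_nonneg_left _ (by positivity)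
                exact mul_le_mul hinv hpow (by positivity) (by positivity)
            _ = RHS := by rw [hRHSdef]; ring
  -- reduce the Bochner integral to the lintegral estimate
  have hnn : ∀ x : Fin i → Ed d, 0 ≤ ‖(A : ℂ) + Complex.I *
          ((B + ε ^ (-γt) *
              ((∑ j', ι₀ j' * ‖x j'‖ ^ 2) +
                (∑ j, ι₁ j * ‖(∑ j', mix j j' • x j') - P j‖ ^ 2) + C) : ℝ) : ℂ)‖ ^ (-p) :=
    fun x => rpow_nonneg (norm_nonneg _) _
  show (∫ x in S, _) ≤ RHS
  by_cases hint : Integrable (fun x : Fin i → Ed d => ‖(A : ℂ) + Complex.I *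
          ((B + ε ^ (-γt) *
              ((∑ j', ι₀ j' * ‖x j'‖ ^ 2) +
                (∑ j, ι₁ j * ‖(∑ j', mix j j' • x j') - P j‖ ^ 2) + C) : ℝ) : ℂ)‖ ^ (-p))
      (volume.restrict S)
  · rw [MeasureTheory.integral_eq_lintegral_of_nonneg_ae
      (Filter.Eventually.of_forall fun x => hnn x) hint.aestronglyMeasurable]
    exact ENNReal.toReal_le_of_le_ofReal hRHS0 hmain
  · rw [integral_undef hint]
    exact hRHS0
end
end

section
/- Quadratic-phase resolvent integral bound: let d ≥ 2 and p > 1. There exists Λ > 0, depending only on d and p, such that for every A ∈ ℝ with A ≠ 0, every E ∈ ℝ, every λ > 0, every ρ > 0 and every x_0 ∈ ℝ^d: ∫_{Q_{x_0,ρ}} |A + i(E + λ|x − x_0|²)|^{−p} dx ≤ Λ |A|^{1−p} ρ^{d−2} λ^{−1}. -/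
open MeasureTheory

noncomputable section

open Real Set
open scoped ENNReal

lemma aux_rpow_eq (A c p : ℝ) :
    ‖(A : ℂ) + Complex.I * (c : ℂ)‖ ^ (-p) = (A ^ 2 + c ^ 2) ^ (-(p / 2)) := by
  have h1 : (A : ℂ) + Complex.I * (c : ℂ) = (A : ℂ) + (c : ℂ) * Complex.I := by ring
  have h2 : (0:ℝ) ≤ A ^ 2 + c ^ 2 := by positivity
  rw [h1, Complex.norm_add_mul_I, Real.sqrt_eq_rpow,
    ← Real.rpow_mul h2]
  ring_nf

lemma lintegral_image_eq_lintegral_abs_deriv_mul' {s : Set ℝ} {f f' : ℝ → ℝ}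
    (hs : MeasurableSet s) (hf' : ∀ x ∈ s, HasDerivWithinAt f (f' x) s x)
    (hf : Set.InjOn f s) (g : ℝ → ℝ≥0∞) :
    ∫⁻ x in f '' s, g x = ∫⁻ x in s, ENNReal.ofReal |f' x| * g (f x) := by
  rw [lintegral_image_eq_lintegral_abs_det_fderiv_mul volume hs
    (fun x hx => (hf' x hx).hasFDerivWithinAt) hf g]
  simp only [ContinuousLinearMap.det_toSpanSingleton]

lemma lintegral_comp_polarCoord_symm' (g : ℝ × ℝ → ℝ≥0∞) :
    ∫⁻ q, g q = ∫⁻ q in polarCoord.target, ENNReal.ofReal q.1 * g (polarCoord.symm q) := by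
  set B : ℝ × ℝ → ℝ × ℝ →L[ℝ] ℝ × ℝ := fun p =>
    LinearMap.toContinuousLinearMap (Matrix.toLin (Module.Basis.finTwoProd ℝ) (Module.Basis.finTwoProd ℝ)
      !![Real.cos p.2, -p.1 * Real.sin p.2; Real.sin p.2, p.1 * Real.cos p.2]) with hB
  have hder : ∀ p ∈ polarCoord.target, HasFDerivWithinAt polarCoord.symm (B p)
      polarCoord.target p := fun p _ => (hasFDerivAt_polarCoord_symm p).hasFDerivWithinAt
  have B_det : ∀ p, (B p).det = p.1 := by
    intro p
    conv_rhs => rw [← one_mul p.1, ← Real.cos_sq_add_sin_sq p.2]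
    simp only [hB, neg_mul, LinearMap.det_toContinuousLinearMap, LinearMap.det_toLin,
      Matrix.det_fin_two_of, sub_neg_eq_add]
    ring
  calc ∫⁻ q, g q = ∫⁻ q in polarCoord.source, g q := by
        rw [← setLIntegral_univ]
        exact setLIntegral_congr polarCoord_source_ae_eq_univ.symm
    _ = ∫⁻ q in polarCoord.symm '' polarCoord.target, g q := by
        rw [polarCoord.symm_image_target_eq_source]
    _ = ∫⁻ q in polarCoord.target, ENNReal.ofReal |(B q).det| * g (polarCoord.symm q) := by
        rw [lintegral_image_eq_lintegral_abs_det_fderiv_mul volume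
          polarCoord.open_target.measurableSet hder
          (polarCoord.symm.injOn.mono (by rw [polarCoord.symm_source])) g]
    _ = ∫⁻ q in polarCoord.target, ENNReal.ofReal q.1 * g (polarCoord.symm q) := by
        refine setLIntegral_congr_fun polarCoord.open_target.measurableSet
          (fun q hq => ?_)
        rw [B_det, abs_of_pos hq.1]

lemma g0_continuous {a lam c p : ℝ} (ha : 0 < a) :
    Continuous (fun u : ℝ => ENNReal.ofReal ((a ^ 2 + (c + lam * u) ^ 2) ^ (-(p / 2)))) := by
  refine ENNReal.continuous_ofReal.comp ?_
  refine Continuous.rpow_const ?_ fun u => Or.inl (by positivity)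
  fun_prop

lemma sq_image_Ioi : (fun r : ℝ => r ^ 2) '' Ioi 0 = Ioi 0 := by
  ext u
  constructor
  · rintro ⟨r, hr, rfl⟩; exact pow_pos (show (0:ℝ) < r from hr) 2
  · intro hu; exact ⟨Real.sqrt u, Real.sqrt_pos.mpr hu, Real.sq_sqrt hu.le⟩

lemma lintegral_radial_sq (g0 : ℝ → ℝ≥0∞) :
    ∫⁻ u in Ioi (0:ℝ), g0 u = 2 * ∫⁻ r in Ioi (0:ℝ), ENNReal.ofReal r * g0 (r ^ 2) := by
  have hder : ∀ x ∈ Ioi (0:ℝ), HasDerivWithinAt (fun r : ℝ => r ^ 2) (2 * x) (Ioi 0) x := by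
    intro x _
    simpa using (hasDerivAt_pow 2 x).hasDerivWithinAt
  have hinj : Set.InjOn (fun r : ℝ => r ^ 2) (Ioi 0) := by
    intro x hx y hy hxy
    have hxy' : x ^ 2 = y ^ 2 := hxy
    have : Real.sqrt (x ^ 2) = Real.sqrt (y ^ 2) := by rw [hxy']
    rwa [Real.sqrt_sq (le_of_lt hx), Real.sqrt_sq (le_of_lt hy)] at this
  calc ∫⁻ u in Ioi (0:ℝ), g0 u = ∫⁻ u in (fun r : ℝ => r ^ 2) '' Ioi 0, g0 u := by
        rw [sq_image_Ioi]
    _ = ∫⁻ r in Ioi (0:ℝ), ENNReal.ofReal |2 * r| * g0 (r ^ 2) :=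
        lintegral_image_eq_lintegral_abs_deriv_mul' measurableSet_Ioi hder hinj g0
    _ = ∫⁻ r in Ioi (0:ℝ), 2 * (ENNReal.ofReal r * g0 (r ^ 2)) := by
        refine setLIntegral_congr_fun measurableSet_Ioi (fun r hr => ?_)
        have hr' : (0:ℝ) < r := hr
        rw [abs_of_pos (by linarith : (0:ℝ) < 2 * r), ENNReal.ofReal_mul (by norm_num)]
        rw [mul_assoc]
        norm_num
    _ = 2 * ∫⁻ r in Ioi (0:ℝ), ENNReal.ofReal r * g0 (r ^ 2) :=
        lintegral_const_mul' 2 _ (by norm_num)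

lemma affine_image_Ioi {lam : ℝ} (hlam : 0 < lam) (c : ℝ) :
    (fun u : ℝ => c + lam * u) '' Ioi 0 = Ioi c := by
  ext v
  constructor
  · rintro ⟨u, hu, rfl⟩
    have : 0 < lam * u := mul_pos hlam hu
    simpa using this
  · intro hv
    exact ⟨(v - c) / lam, div_pos (by simpa [sub_pos] using hv) hlam, by field_simp; ring⟩

lemma lintegral_affine {lam : ℝ} (hlam : 0 < lam) (c : ℝ) (h1 : ℝ → ℝ≥0∞) :
    ∫⁻ v in Ioi c, h1 v = ENNReal.ofReal lam * ∫⁻ u in Ioi (0:ℝ), h1 (c + lam * u) := by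
  have hder : ∀ x ∈ Ioi (0:ℝ), HasDerivWithinAt (fun u : ℝ => c + lam * u) lam (Ioi 0) x := by
    intro x _
    simpa using ((hasDerivAt_id x).const_mul lam).const_add c |>.hasDerivWithinAt
  have hinj : Set.InjOn (fun u : ℝ => c + lam * u) (Ioi 0) := by
    intro x _ y _ hxy
    have hxy' : c + lam * x = c + lam * y := hxy
    have : lam * x = lam * y := by linarith
    exact mul_left_cancel₀ (ne_of_gt hlam) this
  calc ∫⁻ v in Ioi c, h1 v = ∫⁻ v in (fun u : ℝ => c + lam * u) '' Ioi 0, h1 v := by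
        rw [affine_image_Ioi hlam c]
    _ = ∫⁻ u in Ioi (0:ℝ), ENNReal.ofReal |lam| * h1 (c + lam * u) :=
        lintegral_image_eq_lintegral_abs_deriv_mul' measurableSet_Ioi hder hinj h1
    _ = ENNReal.ofReal lam * ∫⁻ u in Ioi (0:ℝ), h1 (c + lam * u) := by
        rw [abs_of_pos hlam, lintegral_const_mul' _ _ ENNReal.ofReal_ne_top]

lemma sq_rpow_half (a p : ℝ) (ha : 0 < a) : (a ^ 2) ^ (-(p/2)) = a ^ (-p) := by
  rw [← Real.rpow_natCast a 2, ← Real.rpow_mul ha.le]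
  congr 1
  push_cast
  ring

lemma lintegral_tail {p a : ℝ} (hp : 1 < p) (ha : 0 < a) :
    ∫⁻ v : ℝ, ENNReal.ofReal ((a ^ 2 + v ^ 2) ^ (-(p / 2))) ≤
      ENNReal.ofReal ((2 + 2 / (p - 1)) * a ^ (1 - p)) := by
  set f : ℝ → ℝ≥0∞ := fun v => ENNReal.ofReal ((a ^ 2 + v ^ 2) ^ (-(p / 2))) with hf
  have hrp : (0:ℝ) ≤ a ^ (1 - p) := Real.rpow_nonneg ha.le _
  have hmid : ∫⁻ v in Icc (-a) a, f v ≤ ENNReal.ofReal (2 * a ^ (1 - p)) := by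
    calc ∫⁻ v in Icc (-a) a, f v ≤ ∫⁻ _ in Icc (-a) a, ENNReal.ofReal (a ^ (-p)) := by
          refine setLIntegral_mono' measurableSet_Icc fun v _ => ?_
          refine ENNReal.ofReal_le_ofReal ?_
          rw [← sq_rpow_half a p ha]
          exact Real.rpow_le_rpow_of_nonpos (by positivity) (by nlinarith [sq_nonneg v]) (by linarith)
      _ = ENNReal.ofReal (a ^ (-p)) * volume (Icc (-a) a) := setLIntegral_const _ _
      _ = ENNReal.ofReal (2 * a ^ (1 - p)) := by
          rw [Real.volume_Icc, ← ENNReal.ofReal_mul (by positivity)]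
          congr 1
          rw [show a - -a = 2 * a by ring, show (1:ℝ) - p = -p + 1 by ring,
            Real.rpow_add ha, Real.rpow_one]
          ring
  have hIoi : ∫⁻ v in Ioi a, f v ≤ ENNReal.ofReal (a ^ (1 - p) / (p - 1)) := by
    calc ∫⁻ v in Ioi a, f v ≤ ∫⁻ v in Ioi a, ENNReal.ofReal (v ^ (-p)) := by
          refine setLIntegral_mono' measurableSet_Ioi fun v hv => ?_
          refine ENNReal.ofReal_le_ofReal ?_
          rw [← sq_rpow_half v p (ha.trans hv)]
          exact Real.rpow_le_rpow_of_nonpos (pow_pos (ha.trans hv) 2) (by nlinarith)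
            (by linarith)
      _ = ENNReal.ofReal (∫ v in Ioi a, v ^ (-p)) := by
          rw [ofReal_integral_eq_lintegral_ofReal
            (integrableOn_Ioi_rpow_of_lt (by linarith) ha)
            ((ae_restrict_mem measurableSet_Ioi).mono fun v hv =>
              Real.rpow_nonneg (ha.trans hv).le _)]
      _ ≤ ENNReal.ofReal (a ^ (1 - p) / (p - 1)) := by
          rw [integral_Ioi_rpow_of_lt (by linarith) ha]
          have heq : -a ^ (-p + 1) / (-p + 1) = a ^ (1 - p) / (p - 1) := by
            rw [show -p + 1 = 1 - p by ring,
              div_eq_div_iff (by linarith : (1:ℝ) - p ≠ 0) (by linarith : p - 1 ≠ 0)]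
            ring
          rw [heq]
  have hIio : ∫⁻ v in Iio (-a), f v = ∫⁻ v in Ioi a, f v := by
    have hemb : MeasurableEmbedding (Neg.neg : ℝ → ℝ) :=
      (Homeomorph.neg ℝ).measurableEmbedding
    have := (Measure.measurePreserving_neg (volume : Measure ℝ)).setLIntegral_comp_preimage_emb
      hemb f (Ioi a)
    rw [show (Neg.neg : ℝ → ℝ) ⁻¹' Ioi a = Iio (-a) by ext x; simp [lt_neg]] at this
    rw [← this]
    refine setLIntegral_congr_fun measurableSet_Iio (fun v _ => ?_)
    simp [hf, neg_sq]
  have hcover : Iio (-a) ∪ (Icc (-a) a ∪ Ioi a) = univ := by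
    ext x
    simp only [mem_union, mem_Iio, mem_Icc, mem_Ioi, mem_univ, iff_true]
    rcases lt_trichotomy x (-a) with h | h | h
    · exact Or.inl h
    · exact Or.inr (Or.inl ⟨le_of_eq h.symm, by linarith⟩)
    · rcases le_or_gt x a with h2 | h2
      · exact Or.inr (Or.inl ⟨h.le, h2⟩)
      · exact Or.inr (Or.inr h2)
  calc ∫⁻ v : ℝ, f v = ∫⁻ v in Iio (-a) ∪ (Icc (-a) a ∪ Ioi a), f v := by
        rw [hcover, Measure.restrict_univ]
    _ ≤ (∫⁻ v in Iio (-a), f v) + ((∫⁻ v in Icc (-a) a, f v) + ∫⁻ v in Ioi a, f v) :=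
        le_trans (lintegral_union_le _ _ _) (add_le_add_right (lintegral_union_le _ _ _) _)
    _ ≤ ENNReal.ofReal (a ^ (1 - p) / (p - 1)) +
        (ENNReal.ofReal (2 * a ^ (1 - p)) + ENNReal.ofReal (a ^ (1 - p) / (p - 1))) := by
        rw [hIio]; exact add_le_add hIoi (add_le_add hmid hIoi)
    _ = ENNReal.ofReal ((2 + 2 / (p - 1)) * a ^ (1 - p)) := by
        rw [← ENNReal.ofReal_add (mul_nonneg (by norm_num) hrp) (div_nonneg hrp (by linarith)),
          ← ENNReal.ofReal_add (div_nonneg hrp (by linarith))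
            (add_nonneg (mul_nonneg (by norm_num) hrp) (div_nonneg hrp (by linarith)))]
        congr 1
        have hne : p - (1:ℝ) ≠ 0 := by linarith
        field_simp
        ring

lemma lintegral_2d {p : ℝ} (hp : 1 < p) {a lam : ℝ} (ha : 0 < a) (hlam : 0 < lam) (c : ℝ) :
    ∫⁻ q : ℝ × ℝ, ENNReal.ofReal ((a ^ 2 + (c + lam * (q.1 ^ 2 + q.2 ^ 2)) ^ 2) ^ (-(p / 2))) ≤
      ENNReal.ofReal π * ENNReal.ofReal lam⁻¹ *
        ENNReal.ofReal ((2 + 2 / (p - 1)) * a ^ (1 - p)) := by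
  set g0 : ℝ → ℝ≥0∞ :=
    fun u => ENNReal.ofReal ((a ^ 2 + (c + lam * u) ^ 2) ^ (-(p / 2))) with hg0
  have hg0c : Continuous g0 := g0_continuous ha
  -- polar coordinates
  have hpolar : ∫⁻ q : ℝ × ℝ, g0 (q.1 ^ 2 + q.2 ^ 2) =
      ∫⁻ q in polarCoord.target, ENNReal.ofReal q.1 * g0 (q.1 ^ 2) := by
    rw [lintegral_comp_polarCoord_symm' (fun q => g0 (q.1 ^ 2 + q.2 ^ 2))]
    refine setLIntegral_congr_fun polarCoord.open_target.measurableSet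
      (fun q _ => ?_)
    congr 2
    have hsymm : polarCoord.symm q = (q.1 * Real.cos q.2, q.1 * Real.sin q.2) := rfl
    rw [hsymm]
    have := Real.sin_sq_add_cos_sq q.2
    simp only
    nlinarith [this]
  -- the target integral as a product
  have hprod : ∫⁻ q in polarCoord.target, ENNReal.ofReal q.1 * g0 (q.1 ^ 2) =
      (∫⁻ r in Ioi (0:ℝ), ENNReal.ofReal r * g0 (r ^ 2)) * ENNReal.ofReal (2 * π) := by
    have htarget : polarCoord.target = Ioi (0:ℝ) ×ˢ Ioo (-π) π := rfl
    rw [htarget, Measure.volume_eq_prod, ← Measure.prod_restrict,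
      lintegral_prod _ (by fun_prop)]
    calc ∫⁻ r in Ioi (0:ℝ), ∫⁻ _ in Ioo (-π) π, ENNReal.ofReal r * g0 (r ^ 2) =
        ∫⁻ r in Ioi (0:ℝ), (ENNReal.ofReal r * g0 (r ^ 2)) * ENNReal.ofReal (2 * π) := by
          refine setLIntegral_congr_fun measurableSet_Ioi (fun r _ => ?_)
          rw [setLIntegral_const, Real.volume_Ioo]
          congr 1
          ring_nf
      _ = _ := lintegral_mul_const' _ _ ENNReal.ofReal_ne_top
  have hIoi0 : ∫⁻ u in Ioi (0:ℝ), g0 u ≤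
      ENNReal.ofReal lam⁻¹ * ENNReal.ofReal ((2 + 2 / (p - 1)) * a ^ (1 - p)) := by
    have haff := lintegral_affine hlam c
      (fun v => ENNReal.ofReal ((a ^ 2 + v ^ 2) ^ (-(p / 2))))
    have hle : ∫⁻ v in Ioi c, ENNReal.ofReal ((a ^ 2 + v ^ 2) ^ (-(p / 2))) ≤
        ENNReal.ofReal ((2 + 2 / (p - 1)) * a ^ (1 - p)) :=
      le_trans (setLIntegral_le_lintegral _ _) (lintegral_tail hp ha)
    rw [haff] at hle
    have hlamne : ENNReal.ofReal lam ≠ 0 := by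
      simp [ENNReal.ofReal_eq_zero, not_le, hlam]
    calc ∫⁻ u in Ioi (0:ℝ), g0 u =
        ENNReal.ofReal lam⁻¹ * (ENNReal.ofReal lam * ∫⁻ u in Ioi (0:ℝ), g0 u) := by
          rw [← mul_assoc, ENNReal.ofReal_inv_of_pos hlam,
            ENNReal.inv_mul_cancel hlamne ENNReal.ofReal_ne_top, one_mul]
      _ ≤ ENNReal.ofReal lam⁻¹ * ENNReal.ofReal ((2 + 2 / (p - 1)) * a ^ (1 - p)) :=
          mul_le_mul_right hle _
  calc ∫⁻ q : ℝ × ℝ, ENNReal.ofReal ((a ^ 2 + (c + lam * (q.1 ^ 2 + q.2 ^ 2)) ^ 2) ^ (-(p/2)))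
      = (∫⁻ r in Ioi (0:ℝ), ENNReal.ofReal r * g0 (r ^ 2)) * ENNReal.ofReal (2 * π) := by
        rw [← hprod, ← hpolar]
    _ = ENNReal.ofReal π * (2 * ∫⁻ r in Ioi (0:ℝ), ENNReal.ofReal r * g0 (r ^ 2)) := by
        rw [ENNReal.ofReal_mul (by norm_num), show ((2:ℝ≥0∞)) = ENNReal.ofReal 2 by norm_num]
        ring
    _ = ENNReal.ofReal π * ∫⁻ u in Ioi (0:ℝ), g0 u := by rw [← lintegral_radial_sq]
    _ ≤ ENNReal.ofReal π * (ENNReal.ofReal lam⁻¹ *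
          ENNReal.ofReal ((2 + 2 / (p - 1)) * a ^ (1 - p))) := mul_le_mul_right hIoi0 _
    _ = _ := by rw [mul_assoc]

/-- **Quadratic-phase resolvent integral bound**: for `d ≥ 2` and `p > 1` there is
`Λ > 0` (depending only on `d`, `p`) such that for all `A ≠ 0`, `E ∈ ℝ`, `λ > 0`,
`ρ > 0`, `x₀ ∈ ℝ^d`:
`∫_{Q_{x₀,ρ}} |A + i(E + λ|x − x₀|²)|^{−p} dx ≤ Λ |A|^{1−p} ρ^{d−2} λ^{−1}`. -/
theorem quadratic_phase_resolvent_bound (d : ℕ) (hd : 2 ≤ d) (p : ℝ) (hp : 1 < p) :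
    ∃ Λ > (0 : ℝ), ∀ A : ℝ, A ≠ 0 → ∀ E : ℝ, ∀ lam : ℝ, 0 < lam → ∀ r : ℝ, 0 < r →
      ∀ x₀ : Ed d,
      (∫ x in cube x₀ r,
          ‖(A : ℂ) + Complex.I * ((E + lam * ‖x - x₀‖ ^ 2 : ℝ) : ℂ)‖ ^ (-p))
        ≤ Λ * |A| ^ (1 - p) * r ^ (d - 2) * lam⁻¹ := by
  obtain ⟨m, rfl⟩ : ∃ m, d = m + 2 := ⟨d - 2, by omega⟩
  have hp1 : (0:ℝ) < p - 1 := by linarith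
  refine ⟨π * ((2 + 2 / (p - 1)) * 2 ^ m), by positivity, ?_⟩
  intro A hA E lam hlam r hr x₀
  have ha : 0 < |A| := abs_pos.mpr hA
  set Cp : ℝ := 2 + 2 / (p - 1) with hCp
  have hCp0 : 0 < Cp := by positivity
  set κ : ℝ → ℝ≥0∞ := fun t => ENNReal.ofReal ((|A| ^ 2 + (E + lam * t) ^ 2) ^ (-(p / 2)))
    with hκ
  have hκc : Continuous κ := g0_continuous ha
  -- rewrite integrand
  have hpt : ∀ x : Ed (m + 2),
      ‖(A : ℂ) + Complex.I * ((E + lam * ‖x - x₀‖ ^ 2 : ℝ) : ℂ)‖ ^ (-p)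
        = (|A| ^ 2 + (E + lam * ‖x - x₀‖ ^ 2) ^ 2) ^ (-(p / 2)) := fun x => by
    rw [aux_rpow_eq, sq_abs]
  simp only [hpt]
  -- convert to lintegral
  have hbase : Continuous (fun x : Ed (m + 2) =>
      |A| ^ 2 + (E + lam * ‖x - x₀‖ ^ 2) ^ 2) := by fun_prop
  have hsm : AEStronglyMeasurable
      (fun x : Ed (m + 2) => (|A| ^ 2 + (E + lam * ‖x - x₀‖ ^ 2) ^ 2) ^ (-(p / 2)))
      (volume.restrict (cube x₀ r)) :=
    (hbase.rpow_const fun x => Or.inl (by positivity)).aestronglyMeasurable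
  rw [integral_eq_lintegral_of_nonneg_ae
    (ae_of_all _ fun x => Real.rpow_nonneg (by positivity) _) hsm]
  refine ENNReal.toReal_le_of_le_ofReal (by positivity) ?_
  -- now a pure lintegral estimate
  set b : Fin (m + 2) → ℝ := fun j => x₀ j with hb
  set S : Set (Fin (m + 2) → ℝ) := {y | ∀ j, y j ∈ Icc (b j - r) (b j + r)} with hS
  set T : Set (Fin (m + 2) → ℝ) := {z | ∀ j, z j ∈ Icc (-r) r} with hT
  set P : Set (Fin m → ℝ) := univ.pi (fun _ => Icc (-r) r) with hP
  set K : ℝ × ℝ × (Fin m → ℝ) → ℝ≥0∞ :=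
    fun q => κ (q.1 ^ 2 + (q.2.1 ^ 2 + ∑ j, q.2.2 j ^ 2)) with hK
  have hKm : Measurable K := by
    refine hκc.measurable.comp ?_
    fun_prop
  set φ := (MeasurableEquiv.toLp 2 (Fin (m + 2) → ℝ)).symm with hφdef
  have hφ := EuclideanSpace.volume_preserving_symm_measurableEquiv_toLp (Fin (m + 2))
  set e₂ := MeasurableEquiv.piFinSuccAbove (fun _ : Fin (m + 1) => ℝ) 0 with he₂
  set Φ := (MeasurableEquiv.piFinSuccAbove (fun _ : Fin (m + 2) => ℝ) 0).trans
    ((MeasurableEquiv.refl ℝ).prodCongr e₂) with hΦdef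
  have hΦ : MeasurePreserving (⇑Φ) volume volume := by
    have h2 := volume_preserving_piFinSuccAbove (fun _ : Fin (m + 1) => ℝ) 0
    have h1 := volume_preserving_piFinSuccAbove (fun _ : Fin (m + 2) => ℝ) 0
    exact ((MeasurePreserving.id volume).prod h2).comp h1
  have hΦapp : ∀ z : Fin (m + 2) → ℝ,
      Φ z = (z 0, (z ((0 : Fin (m + 1)).succ), fun j : Fin m => z (j.succ.succ))) := by
    intro z
    simp [hΦdef, he₂, MeasurableEquiv.piFinSuccAbove, Fin.zero_succAbove]
    rfl
  have hKΦ : ∀ z : Fin (m + 2) → ℝ, K (Φ z) = κ (∑ j, z j ^ 2) := by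
    intro z
    rw [hΦapp z]
    simp only [hK]
    congr 1
    rw [Fin.sum_univ_succ (f := fun j : Fin (m + 2) => z j ^ 2),
      Fin.sum_univ_succ (f := fun i : Fin (m + 1) => z i.succ ^ 2)]
  have hnorm : ∀ x : Ed (m + 2), ‖x - x₀‖ ^ 2 = ∑ j, (x j - b j) ^ 2 := by
    intro x
    rw [EuclideanSpace.norm_eq, Real.sq_sqrt (by positivity)]
    refine Finset.sum_congr rfl fun j _ => ?_
    simp [hb, Real.norm_eq_abs, sq_abs]
  have hpre : Φ ⁻¹' (Icc (-r) r ×ˢ (Icc (-r) r ×ˢ P)) = T := by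
    ext z
    simp only [mem_preimage, hΦapp z, mem_prod, hP, mem_pi, mem_univ, forall_true_left,
      hT, mem_setOf_eq, true_implies]
    constructor
    · rintro ⟨h0, h1, h2⟩ j
      refine Fin.cases h0 (fun i => ?_) j
      refine Fin.cases h1 (fun i2 => h2 i2) i
    · intro h
      exact ⟨h 0, h _, fun j => h _⟩
  have hcube : cube x₀ r = φ ⁻¹' S := rfl
  calc ∫⁻ x in cube x₀ r,
        ENNReal.ofReal ((|A| ^ 2 + (E + lam * ‖x - x₀‖ ^ 2) ^ 2) ^ (-(p / 2)))
      = ∫⁻ y in S, κ (∑ j, (y j - b j) ^ 2) := by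
        rw [← hφ.setLIntegral_comp_preimage_emb φ.measurableEmbedding
          (fun y => κ (∑ j, (y j - b j) ^ 2)) S, ← hcube]
        exact lintegral_congr fun x => by rw [hκ]; rw [hnorm x]; rfl
    _ = ∫⁻ z in T, κ (∑ j, z j ^ 2) := by
        have h := (measurePreserving_add_right (volume : Measure (Fin (m + 2) → ℝ))
            b).setLIntegral_comp_preimage_emb
          (MeasurableEquiv.addRight b).measurableEmbedding
          (fun y => κ (∑ j, (y j - b j) ^ 2)) S
        rw [← h]
        have hset : (· + b) ⁻¹' S = T := by
          ext z
          simp only [hS, hT, mem_preimage, mem_setOf_eq, Pi.add_apply, mem_Icc]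
          exact forall_congr' fun j => by
            constructor <;> intro h <;> constructor <;> linarith [h.1, h.2]
        rw [hset]
        exact lintegral_congr fun z => by simp
    _ = ∫⁻ q in Icc (-r) r ×ˢ (Icc (-r) r ×ˢ P), K q := by
        rw [← hΦ.setLIntegral_comp_preimage_emb Φ.measurableEmbedding K
          (Icc (-r) r ×ˢ (Icc (-r) r ×ˢ P)), hpre]
        exact lintegral_congr fun z => (hKΦ z).symm
    _ ≤ ∫⁻ q in univ ×ˢ (univ ×ˢ P), K q :=
        lintegral_mono_set (Set.prod_mono (subset_univ _)
          (Set.prod_mono (subset_univ _) subset_rfl))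
    _ = ∫⁻ w in P, ∫⁻ t : ℝ, ∫⁻ s : ℝ, K (s, t, w) := by
        rw [Measure.volume_eq_prod, ← Measure.prod_restrict, Measure.restrict_univ,
          Measure.volume_eq_prod, ← Measure.prod_restrict, Measure.restrict_univ]
        rw [lintegral_prod_symm _ hKm.aemeasurable]
        have hin : Measurable fun y : ℝ × (Fin m → ℝ) => ∫⁻ s : ℝ, K (s, y) :=
          Measurable.lintegral_prod_left hKm
        rw [lintegral_prod_symm _ hin.aemeasurable]
    _ ≤ ∫⁻ _ in P, ENNReal.ofReal π * ENNReal.ofReal lam⁻¹ *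
          ENNReal.ofReal (Cp * |A| ^ (1 - p)) := by
        refine setLIntegral_mono' (MeasurableSet.univ_pi fun _ => measurableSet_Icc)
          fun w _ => ?_
        have hf : AEMeasurable (fun q : ℝ × ℝ => K (q.1, q.2, w))
            ((volume : Measure ℝ).prod volume) := (hKm.comp (by fun_prop)).aemeasurable
        have hswap : ∫⁻ t : ℝ, ∫⁻ s : ℝ, K (s, t, w) =
            ∫⁻ q : ℝ × ℝ, K (q.1, q.2, w) := by
          rw [Measure.volume_eq_prod, lintegral_prod_symm _ hf]
        rw [hswap]
        have heq : ∀ q : ℝ × ℝ, K (q.1, q.2, w) =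
            ENNReal.ofReal ((|A| ^ 2 +
              ((E + lam * ∑ j, w j ^ 2) + lam * (q.1 ^ 2 + q.2 ^ 2)) ^ 2) ^ (-(p / 2))) := by
          intro q
          simp only [hK, hκ]
          congr 2
          ring
        rw [lintegral_congr heq]
        exact lintegral_2d hp ha hlam _
    _ ≤ ENNReal.ofReal (π * (Cp * 2 ^ m) * |A| ^ (1 - p) * r ^ (m + 2 - 2) * lam⁻¹) := by
        rw [setLIntegral_const, hP, volume_pi_pi, Real.volume_Icc]
        have h2r : ENNReal.ofReal (r - -r) = ENNReal.ofReal (2 * r) := by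
          congr 1
          ring
        rw [h2r, Finset.prod_const, Finset.card_univ, Fintype.card_fin,
          ← ENNReal.ofReal_pow (by positivity),
          ← ENNReal.ofReal_mul (Real.pi_nonneg),
          ← ENNReal.ofReal_mul (by positivity),
          ← ENNReal.ofReal_mul (by positivity)]
        refine ENNReal.ofReal_le_ofReal (le_of_eq ?_)
        rw [Nat.add_sub_cancel, mul_pow]
        ring
end
end

section
/- Linear-phase resolvent integral bound: let d ≥ 1 and p > 1. There exists Λ > 0, depending only on d and p, such that for every A ∈ ℝ with A ≠ 0, every E ∈ ℝ, every λ > 0, every ρ > 0, every x_0 ∈ ℝ^d and every P ∈ ℝ^d with P ≠ 0: ∫_{Q_{x_0,ρ}} |A + i(E + λ x·P)|^{−p} dx ≤ Λ |A|^{1−p} ρ^{d−1} λ^{−1} |P|^{−1}, where x·P is the Euclidean inner product. -/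
open MeasureTheory

noncomputable section

/-- Affine change of variables in a lintegral on `ℝ`. -/
lemma aux_affine_lintegral (G : ℝ → ENNReal) (hG : Measurable G) {α : ℝ} (hα : α ≠ 0) (β : ℝ) :
    ∫⁻ y : ℝ, G (α * y + β) = ENNReal.ofReal |α⁻¹| * ∫⁻ s, G s := by
  have hmap : Measure.map (fun y : ℝ => α * y + β) volume
      = ENNReal.ofReal |α⁻¹| • volume := by
    have h1 : (fun y : ℝ => α * y + β) = (fun z : ℝ => z + β) ∘ (fun y => α * y) := rfl
    rw [h1, ← Measure.map_map (measurable_add_const β) (measurable_const_mul α),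
      Real.map_volume_mul_left hα, Measure.map_smul, map_add_right_eq_self]
  rw [← lintegral_map hG (by fun_prop), hmap, lintegral_smul_measure, smul_eq_mul]

/-- Fubini-type bound for a lintegral over a box, integrating out the `k`-th coordinate. -/
lemma aux_box_lintegral (n : ℕ) (k : Fin (n+1)) (f : (Fin (n+1) → ℝ) → ENNReal)
    (hf : Measurable f)
    (s : Fin (n+1) → Set ℝ) (hs : ∀ j, MeasurableSet (s j)) (B : ENNReal)
    (hbound : ∀ w : Fin n → ℝ, ∫⁻ y : ℝ, f (k.insertNth y w) ≤ B) :
    ∫⁻ x in Set.univ.pi s, f x ≤ (∏ j : Fin n, volume (s (k.succAbove j))) * B := by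
  have hbox : MeasurableSet (Set.univ.pi s) := MeasurableSet.univ_pi hs
  set e := MeasurableEquiv.piFinSuccAbove (fun _ : Fin (n+1) => ℝ) k with he
  have hmp := volume_preserving_piFinSuccAbove (fun _ : Fin (n+1) => ℝ) k
  have hsymm : ∀ (z : ℝ × (Fin n → ℝ)), e.symm z = k.insertNth z.1 z.2 := by
    intro z
    simp [he, MeasurableEquiv.piFinSuccAbove_symm_apply, Fin.insertNthEquiv]
  rw [← lintegral_indicator hbox,
    (hmp.symm e).lintegral_map_equiv ((Set.univ.pi s).indicator f) e.symm,
    Measure.volume_eq_prod ℝ (Fin n → ℝ),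
    lintegral_prod_symm' (fun z => (Set.univ.pi s).indicator f (e.symm z))
      ((hf.indicator hbox).comp e.symm.measurable)]
  set T : Set (Fin n → ℝ) := Set.univ.pi (fun j => s (k.succAbove j)) with hT
  have key : ∀ w, (∫⁻ y, ((Set.univ.pi s).indicator f) (e.symm (y, w)))
      ≤ T.indicator (fun _ => B) w := by
    intro w
    by_cases hw : w ∈ T
    · rw [Set.indicator_of_mem hw]
      calc (∫⁻ y, ((Set.univ.pi s).indicator f) (e.symm (y, w)))
          ≤ ∫⁻ y, f (e.symm (y, w)) :=
            lintegral_mono fun y => Set.indicator_le_self _ _ _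
        _ ≤ B := by simpa only [hsymm] using hbound w
    · rw [Set.indicator_of_notMem hw]
      have hout : ∀ y : ℝ, e.symm (y, w) ∉ Set.univ.pi s := by
        intro y hy
        apply hw
        intro j _
        have := hy (k.succAbove j) trivial
        simpa [hsymm, Fin.insertNth_apply_succAbove] using this
      simp only [Set.indicator_of_notMem (hout _)]
      simp
  calc (∫⁻ w, ∫⁻ y, ((Set.univ.pi s).indicator f) (e.symm (y, w)))
      ≤ ∫⁻ w, T.indicator (fun _ => B) w := lintegral_mono key
    _ = B * volume T := by
        rw [lintegral_indicator (MeasurableSet.univ_pi fun j => hs _), setLIntegral_const]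
    _ = (∏ j : Fin n, volume (s (k.succAbove j))) * B := by
        rw [hT, volume_pi, Measure.pi_pi, mul_comm]

/-- **Linear-phase resolvent integral bound**: for `d ≥ 1` and `p > 1` there is `Λ > 0`
(depending only on `d`, `p`) such that for all `A ≠ 0`, `E ∈ ℝ`, `λ > 0`, `ρ > 0`,
`x₀ ∈ ℝ^d` and `P ∈ ℝ^d ∖ {0}`:
`∫_{Q_{x₀,ρ}} |A + i(E + λ x·P)|^{−p} dx ≤ Λ |A|^{1−p} ρ^{d−1} λ^{−1} |P|^{−1}`,
where `x·P = ∑ⱼ xⱼ Pⱼ` is the Euclidean inner product. -/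
theorem linear_phase_resolvent_bound (d : ℕ) (hd : 1 ≤ d) (p : ℝ) (hp : 1 < p) :
    ∃ Λ > (0 : ℝ), ∀ A : ℝ, A ≠ 0 → ∀ E : ℝ, ∀ lam : ℝ, 0 < lam → ∀ r : ℝ, 0 < r →
      ∀ x₀ : Ed d, ∀ P : Ed d, P ≠ 0 →
      (∫ x in cube x₀ r,
          ‖(A : ℂ) + Complex.I * ((E + lam * ∑ j, x j * P j : ℝ) : ℂ)‖ ^ (-p))
        ≤ Λ * |A| ^ (1 - p) * r ^ (d - 1) * lam⁻¹ * ‖P‖⁻¹ := by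
  obtain ⟨n, rfl⟩ : ∃ n, d = n + 1 := ⟨d - 1, (Nat.succ_pred_eq_of_pos hd).symm⟩
  -- the 1D profile function
  set Gr : ℝ → ℝ := fun s => (1 + |s|) ^ (-p) with hGr
  have hGrmeas : Measurable Gr := by fun_prop
  have hGrnonneg : ∀ s, 0 ≤ Gr s := fun s => Real.rpow_nonneg (by positivity) _
  have hGrint : Integrable Gr := by
    have h := integrable_one_add_norm (E := ℝ) (μ := volume) (r := p) (by simpa using hp)
    simpa [hGr, Real.norm_eq_abs] using h
  set C : ℝ := ∫ s, Gr s with hC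
  have hCpos : 0 < C := by
    rw [hC, integral_pos_iff_support_of_nonneg hGrnonneg hGrint]
    have : Function.support Gr = Set.univ := by
      ext s
      simp only [Function.mem_support, Set.mem_univ, iff_true]
      exact ne_of_gt (Real.rpow_pos_of_pos (by positivity) _)
    rw [this]
    simp
  set G : ℝ → ENNReal := fun s => ENNReal.ofReal (Gr s) with hG
  have hGmeas : Measurable G := hGrmeas.ennreal_ofReal
  have hGlint : ∫⁻ s, G s = ENNReal.ofReal C :=
    (ofReal_integral_eq_lintegral_ofReal hGrint (Filter.Eventually.of_forall hGrnonneg)).symm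
  refine ⟨(2:ℝ)^p * 2^n * C * Real.sqrt (n+1), by positivity, ?_⟩
  intro A hA E lam hlam r hr x₀ P hP
  set a : ℝ := |A| with ha
  have hapos : 0 < a := abs_pos.mpr hA
  -- choose the coordinate with maximal |P j|
  obtain ⟨k, -, hk⟩ := Finset.exists_max_image Finset.univ (fun j => |P j|) ⟨0, Finset.mem_univ 0⟩
  have hk' : ∀ j, |P j| ≤ |P k| := fun j => hk j (Finset.mem_univ j)
  have hPk : P k ≠ 0 := by
    intro h0
    apply hP
    ext j
    have := hk' j
    rw [h0, abs_zero] at this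
    simpa using le_antisymm this (abs_nonneg _)
  have hPkpos : 0 < |P k| := abs_pos.mpr hPk
  have hPnorm : 0 < ‖P‖ := norm_pos_iff.mpr hP
  -- ‖P‖ ≤ √d * |P k|
  have hPle : ‖P‖ ≤ Real.sqrt (n+1) * |P k| := by
    rw [EuclideanSpace.norm_eq]
    have h1 : ∑ j, ‖P j‖ ^ 2 ≤ ∑ _j : Fin (n+1), |P k| ^ 2 := by
      apply Finset.sum_le_sum
      intro j _
      rw [Real.norm_eq_abs]
      exact pow_le_pow_left₀ (abs_nonneg _) (hk' j) 2
    calc Real.sqrt (∑ j, ‖P j‖ ^ 2) ≤ Real.sqrt ((n+1) * |P k| ^ 2) := by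
          apply Real.sqrt_le_sqrt
          simpa using h1
      _ = Real.sqrt (n+1) * |P k| := by
          rw [Real.sqrt_mul (by positivity), Real.sqrt_sq (abs_nonneg _)]

  -- abbreviations
  set gpi : (Fin (n+1) → ℝ) → ℝ :=
    fun v => ‖(A : ℂ) + Complex.I * ((E + lam * ∑ j, v j * P j : ℝ) : ℂ)‖ ^ (-p) with hgpi
  set box : Set (Fin (n+1) → ℝ) :=
    Set.univ.pi (fun j => Set.Icc (x₀ j - r) (x₀ j + r)) with hboxdef
  have hppos : (0:ℝ) < p := lt_trans one_pos hp
  -- pointwise bound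
  have hpt : ∀ t : ℝ, ‖(A : ℂ) + Complex.I * (t : ℂ)‖ ^ (-p)
      ≤ 2 ^ p * a ^ (-p) * Gr (t / a) := by
    intro t
    have h1 : |A| ≤ ‖(A : ℂ) + Complex.I * (t : ℂ)‖ := by
      have h := Complex.abs_re_le_norm ((A : ℂ) + Complex.I * (t : ℂ))
      simpa using h
    have h2 : |t| ≤ ‖(A : ℂ) + Complex.I * (t : ℂ)‖ := by
      have h := Complex.abs_im_le_norm ((A : ℂ) + Complex.I * (t : ℂ))
      simpa using h
    have hzpos : (0:ℝ) < (a + |t|) / 2 := by positivity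
    have hle : (a + |t|) / 2 ≤ ‖(A : ℂ) + Complex.I * (t : ℂ)‖ := by
      rw [ha]; linarith
    have hmono := Real.rpow_le_rpow_of_nonpos hzpos hle (neg_nonpos.mpr hppos.le)
    refine hmono.trans (le_of_eq ?_)
    have habs : |t / a| = |t| / a := by rw [abs_div, abs_of_pos hapos]
    have hsplit : (a + |t|) / 2 = 2⁻¹ * (a * (1 + |t / a|)) := by
      rw [habs]; field_simp
    rw [hsplit, Real.mul_rpow (by norm_num) (by positivity),
      Real.mul_rpow hapos.le (by positivity),
      Real.inv_rpow (by norm_num), Real.rpow_neg (by norm_num : (0:ℝ) ≤ 2), inv_inv]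
    simp only [hGr]
    ring
  -- the dominating function on the pi space
  set f₁ : (Fin (n+1) → ℝ) → ENNReal :=
    fun v => ENNReal.ofReal (2 ^ p * a ^ (-p) * Gr ((E + lam * ∑ j, v j * P j) / a)) with hf₁def
  have hf₁meas : Measurable f₁ := by
    apply Measurable.ennreal_ofReal
    apply Measurable.const_mul
    apply hGrmeas.comp
    fun_prop
  set α : ℝ := lam * P k / a with hα
  have hαne : α ≠ 0 := by
    rw [hα]
    exact div_ne_zero (mul_ne_zero hlam.ne' hPk) hapos.ne'
  set B : ENNReal := ENNReal.ofReal (2 ^ p * a ^ (-p))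
      * (ENNReal.ofReal |α⁻¹| * ENNReal.ofReal C) with hB
  have hc2 : (0:ℝ) ≤ 2 ^ p * a ^ (-p) := by positivity
  -- the 1D bound
  have hb : ∀ w : Fin n → ℝ, ∫⁻ y : ℝ, f₁ (k.insertNth y w) ≤ B := by
    intro w
    have harg : ∀ y : ℝ,
        (E + lam * ∑ j, (k.insertNth y w : Fin (n+1) → ℝ) j * P j) / a
          = α * y + (E + lam * ∑ j, w j * P (k.succAbove j)) / a := by
      intro y
      rw [Fin.sum_univ_succAbove (fun j => (k.insertNth y w : Fin (n+1) → ℝ) j * P j) k]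
      simp only [Fin.insertNth_apply_same, Fin.insertNth_apply_succAbove]
      rw [hα]
      field_simp
      ring
    calc ∫⁻ y : ℝ, f₁ (k.insertNth y w)
        = ∫⁻ y : ℝ, ENNReal.ofReal (2 ^ p * a ^ (-p))
            * G (α * y + (E + lam * ∑ j, w j * P (k.succAbove j)) / a) := by
          congr 1
          ext y
          rw [hf₁def]
          simp only [harg y, hG]
          rw [ENNReal.ofReal_mul hc2]
      _ = ENNReal.ofReal (2 ^ p * a ^ (-p))
            * ∫⁻ y : ℝ, G (α * y + (E + lam * ∑ j, w j * P (k.succAbove j)) / a) :=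
          lintegral_const_mul' _ _ ENNReal.ofReal_ne_top
      _ = B := by
          rw [aux_affine_lintegral G hGmeas hαne _, hGlint, hB]
      _ ≤ B := le_rfl
  -- Fubini bound over the box
  have hboxbound : ∫⁻ v in box, f₁ v
      ≤ (∏ _j : Fin n, ENNReal.ofReal (2 * r)) * B := by
    have h := aux_box_lintegral n k f₁ hf₁meas
      (fun j => Set.Icc (x₀ j - r) (x₀ j + r))
      (fun j => measurableSet_Icc) B hb
    have hvol : ∀ j : Fin n, volume (Set.Icc (x₀ (k.succAbove j) - r) (x₀ (k.succAbove j) + r))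
        = ENNReal.ofReal (2 * r) := by
      intro j
      rw [Real.volume_Icc]
      congr 1
      ring
    calc ∫⁻ v in box, f₁ v
        ≤ (∏ j : Fin n, volume (Set.Icc (x₀ (k.succAbove j) - r) (x₀ (k.succAbove j) + r))) * B := h
      _ = (∏ _j : Fin n, ENNReal.ofReal (2 * r)) * B := by
          rw [Finset.prod_congr rfl fun j _ => hvol j]
  -- measurability of the integrand on Euclidean space
  have hgpimeas : Measurable gpi := by
    rw [hgpi]
    fun_prop
  have hgEmeas : Measurable fun x : Ed (n+1) =>
      ‖(A : ℂ) + Complex.I * ((E + lam * ∑ j, x j * P j : ℝ) : ℂ)‖ ^ (-p) :=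
    hgpimeas.comp (MeasurableEquiv.toLp 2 (Fin (n+1) → ℝ)).symm.measurable
  -- convert the Bochner integral to a lower integral
  rw [integral_eq_lintegral_of_nonneg_ae
    (Filter.Eventually.of_forall fun x => Real.rpow_nonneg (norm_nonneg _) _)
    hgEmeas.aestronglyMeasurable]
  -- transfer to the pi space
  have htrans : ∫⁻ x in cube x₀ r,
      ENNReal.ofReal (‖(A : ℂ) + Complex.I * ((E + lam * ∑ j, x j * P j : ℝ) : ℂ)‖ ^ (-p))
      = ∫⁻ v in box, ENNReal.ofReal (gpi v) := by
    have h := ((EuclideanSpace.volume_preserving_symm_measurableEquiv_toLp (Fin (n+1))).symm).setLIntegral_comp_preimage_emb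
      (MeasurableEquiv.measurableEmbedding _)
      (fun x : Ed (n+1) => ENNReal.ofReal
        (‖(A : ℂ) + Complex.I * ((E + lam * ∑ j, x j * P j : ℝ) : ℂ)‖ ^ (-p)))
      (cube x₀ r)
    rw [← h]
    have hpre : (MeasurableEquiv.toLp 2 (Fin (n+1) → ℝ)).symm.symm ⁻¹' (cube x₀ r) = box := by
      ext v
      simp only [Set.mem_preimage, cube, Set.mem_setOf_eq, hboxdef, Set.mem_pi, Set.mem_univ,
        forall_true_left, MeasurableEquiv.symm_symm, MeasurableEquiv.coe_toLp, PiLp.toLp_apply,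
        true_implies]
    rw [hpre]
    rfl
  rw [htrans]
  -- final real-number inequality
  have hfrac : |P k|⁻¹ ≤ Real.sqrt (n+1) * ‖P‖⁻¹ := by
    have h : (1:ℝ) / |P k| ≤ Real.sqrt (n+1) / ‖P‖ := by
      rw [div_le_div_iff₀ hPkpos hPnorm]
      nlinarith [hPle]
    rw [inv_eq_one_div]
    calc (1:ℝ) / |P k| ≤ Real.sqrt (n+1) / ‖P‖ := h
      _ = Real.sqrt (n+1) * ‖P‖⁻¹ := by rw [div_eq_mul_inv]
  have habsα : |α⁻¹| = a / (lam * |P k|) := by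
    rw [hα, abs_inv, abs_div, abs_of_pos hapos, abs_mul, abs_of_pos hlam,
      inv_div]
  have hpow : a ^ (-p) * a = a ^ (1 - p) := by
    nth_rewrite 2 [← Real.rpow_one a]
    rw [← Real.rpow_add hapos]
    congr 1
    ring
  have hreal : (2 * r) ^ n * (2 ^ p * a ^ (-p) * (a / (lam * |P k|) * C))
      ≤ 2 ^ p * 2 ^ n * C * Real.sqrt (n+1) * a ^ (1 - p) * r ^ n * lam⁻¹ * ‖P‖⁻¹ := by
    have step1 : (2 * r) ^ n * (2 ^ p * a ^ (-p) * (a / (lam * |P k|) * C))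
        = (2 ^ p * 2 ^ n * C * a ^ (1 - p) * r ^ n * lam⁻¹) * |P k|⁻¹ := by
      rw [← hpow]
      field_simp
      ring
    rw [step1]
    calc (2 ^ p * 2 ^ n * C * a ^ (1 - p) * r ^ n * lam⁻¹) * |P k|⁻¹
        ≤ (2 ^ p * 2 ^ n * C * a ^ (1 - p) * r ^ n * lam⁻¹)
            * (Real.sqrt (n+1) * ‖P‖⁻¹) := by
          have hpos : (0:ℝ) ≤ 2 ^ p * 2 ^ n * C * a ^ (1 - p) * r ^ n * lam⁻¹ := by positivity
          exact mul_le_mul_of_nonneg_left hfrac hpos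
      _ = 2 ^ p * 2 ^ n * C * Real.sqrt (n+1) * a ^ (1 - p) * r ^ n * lam⁻¹ * ‖P‖⁻¹ := by
          ring
  -- the chain of estimates
  have hchain : ∫⁻ v in box, ENNReal.ofReal (gpi v)
      ≤ ENNReal.ofReal (2 ^ p * 2 ^ n * C * Real.sqrt (n+1) * a ^ (1 - p)
          * r ^ n * lam⁻¹ * ‖P‖⁻¹) := by
    calc ∫⁻ v in box, ENNReal.ofReal (gpi v)
        ≤ ∫⁻ v in box, f₁ v := by
          apply lintegral_mono
          intro v
          apply ENNReal.ofReal_le_ofReal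
          exact hpt _
      _ ≤ (∏ _j : Fin n, ENNReal.ofReal (2 * r)) * B := hboxbound
      _ = ENNReal.ofReal ((2 * r) ^ n * (2 ^ p * a ^ (-p) * (a / (lam * |P k|) * C))) := by
          rw [hB, habsα, Finset.prod_const, Finset.card_univ, Fintype.card_fin]
          rw [ENNReal.ofReal_mul (by positivity : (0:ℝ) ≤ (2*r)^n),
            ENNReal.ofReal_mul hc2,
            ENNReal.ofReal_mul (by positivity : (0:ℝ) ≤ a / (lam * |P k|)),
            ENNReal.ofReal_pow (by positivity)]
      _ ≤ _ := ENNReal.ofReal_le_ofReal hreal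
  have hd1 : (n + 1 - 1 : ℕ) = n := rfl
  calc (∫⁻ v in box, ENNReal.ofReal (gpi v)).toReal
      ≤ (ENNReal.ofReal (2 ^ p * 2 ^ n * C * Real.sqrt (n+1) * a ^ (1 - p)
          * r ^ n * lam⁻¹ * ‖P‖⁻¹)).toReal :=
        ENNReal.toReal_mono ENNReal.ofReal_ne_top hchain
    _ = 2 ^ p * 2 ^ n * C * Real.sqrt (n+1) * a ^ (1 - p) * r ^ n * lam⁻¹ * ‖P‖⁻¹ :=
        ENNReal.toReal_ofReal (by positivity)
    _ ≤ 2 ^ p * 2 ^ n * C * Real.sqrt (n+1) * a ^ (1 - p) * r ^ (n + 1 - 1) * lam⁻¹ * ‖P‖⁻¹ := by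
        rw [hd1]
    _ = 2 ^ p * 2 ^ n * C * Real.sqrt (↑n + 1) * a ^ (1 - p) * r ^ (n + 1 - 1) * lam⁻¹ * ‖P‖⁻¹ := by
        norm_num
end
end
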